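/- arXiv:math/0408102 — 8 statements merged into one kernel-verified Lean document; each statement's English description precedes it below -/
import Mathlib

section
/- Suppose A is an n×k matrix and B is an m×k matrix such that for each row A_ℓ of A (ℓ ∈ {1,…,n}) there exists a row B_{ℓ'} of B and a positive real λ_ℓ with A_ℓ = λ_ℓ B_{ℓ'}. If τ ∈ ℝᵏ is an irregular value of the moment map μ_A associated to A, then τ is also an irregular value of the moment map μ_B associated to B. -/
noncomputable def mder (n k : ℕ) (C : Matrix (Fin n) (Fin k) ℝ) (z : EuclideanSpace ℂ (Fin n)) :
    EuclideanSpace ℂ (Fin n) →L[ℝ] EuclideanSpace ℝ (Fin k) :=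
  (PiLp.continuousLinearEquiv 2 ℝ (fun _ : Fin k => ℝ)).symm.toContinuousLinearMap.comp
    (ContinuousLinearMap.pi (fun j => (1/2 : ℝ) • ∑ l, C l j •
      (2 • (innerSL ℝ (z l)).comp
        ((EuclideanSpace.proj l : EuclideanSpace ℂ (Fin n) →L[ℂ] ℂ).restrictScalars ℝ))))

theorem momentHasFDeriv (n k : ℕ) (C : Matrix (Fin n) (Fin k) ℝ)
    (μ : EuclideanSpace ℂ (Fin n) → EuclideanSpace ℝ (Fin k))
    (hμ : ∀ z j, μ z j = (1/2) * ∑ l, C l j * Complex.normSq (z l))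
    (z : EuclideanSpace ℂ (Fin n)) :
    HasFDerivAt μ (mder n k C z) z := by
  have hμeq : μ = fun z => (PiLp.continuousLinearEquiv 2 ℝ fun _ : Fin k => ℝ).symm
      (fun j => (1/2 : ℝ) * ∑ l, C l j * ‖z l‖ ^ 2) := by
    funext z
    ext j
    rw [hμ]
    show _ = (1/2 : ℝ) * ∑ l, C l j * ‖z l‖ ^ 2
    congr 1
    refine Finset.sum_congr rfl fun l _ => ?_
    rw [Complex.normSq_eq_norm_sq]
  rw [hμeq]
  have hcomp : ∀ j, HasFDerivAt
      (fun z : EuclideanSpace ℂ (Fin n) => (1/2 : ℝ) * ∑ l, C l j * ‖z l‖ ^ 2)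
      ((1/2 : ℝ) • ∑ l, C l j • (2 • (innerSL ℝ (z l)).comp
        ((EuclideanSpace.proj l : EuclideanSpace ℂ (Fin n) →L[ℂ] ℂ).restrictScalars ℝ))) z := by
    intro j
    have h1 : ∀ l, HasFDerivAt (fun z : EuclideanSpace ℂ (Fin n) => ‖z l‖ ^ 2)
        (2 • (innerSL ℝ (z l)).comp
          ((EuclideanSpace.proj l : EuclideanSpace ℂ (Fin n) →L[ℂ] ℂ).restrictScalars ℝ)) z := by
      intro l
      exact (((EuclideanSpace.proj l : EuclideanSpace ℂ (Fin n) →L[ℂ] ℂ).restrictScalars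
        ℝ).hasFDerivAt).norm_sq
    have h2 : ∀ l, HasFDerivAt (fun z : EuclideanSpace ℂ (Fin n) => C l j * ‖z l‖ ^ 2)
        (C l j • (2 • (innerSL ℝ (z l)).comp
          ((EuclideanSpace.proj l : EuclideanSpace ℂ (Fin n) →L[ℂ] ℂ).restrictScalars ℝ))) z :=
      fun l => (h1 l).const_mul _
    exact (HasFDerivAt.fun_sum (fun l _ => h2 l)).const_mul _
  have hpi := hasFDerivAt_pi.2 hcomp
  exact ((PiLp.continuousLinearEquiv 2 ℝ fun _ : Fin k =>
    ℝ).symm.toContinuousLinearMap.hasFDerivAt).comp z hpi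

theorem momentDerivApply (n k : ℕ) (C : Matrix (Fin n) (Fin k) ℝ)
    (μ : EuclideanSpace ℂ (Fin n) → EuclideanSpace ℝ (Fin k))
    (hμ : ∀ z j, μ z j = (1/2) * ∑ l, C l j * Complex.normSq (z l))
    (z v : EuclideanSpace ℂ (Fin n)) (j : Fin k) :
    fderiv ℝ μ z v j = ∑ l, C l j * ((starRingEnd ℂ) (z l) * v l).re := by
  rw [(momentHasFDeriv n k C μ hμ z).fderiv]
  simp only [mder, ContinuousLinearMap.comp_apply, ContinuousLinearMap.pi_apply,
    ContinuousLinearMap.smul_apply, ContinuousLinearMap.sum_apply,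
    ContinuousLinearMap.coe_restrictScalars', innerSL_apply_apply, smul_eq_mul,
    ContinuousLinearEquiv.coe_coe, PiLp.continuousLinearEquiv_symm_apply]
  simp only [PiLp.toLp_apply, ContinuousLinearMap.pi_apply,
    ContinuousLinearMap.smul_apply, ContinuousLinearMap.sum_apply,
    ContinuousLinearMap.coe_restrictScalars', ContinuousLinearMap.comp_apply, innerSL_apply_apply,
    smul_eq_mul, Complex.inner, nsmul_eq_mul, Nat.cast_ofNat]
  rw [Finset.mul_sum]
  refine Finset.sum_congr rfl fun l _ => ?_
  have : (EuclideanSpace.proj l) v = v l := rfl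
  rw [this]
  ring

/-- if each row of `A` is a positive multiple of some row of `B`, then every
irregular value of the moment map `μ_A` is also an irregular value of `μ_B`. -/
theorem stmt2 (n m k : ℕ) (A : Matrix (Fin n) (Fin k) ℝ) (B : Matrix (Fin m) (Fin k) ℝ)
    (μA : EuclideanSpace ℂ (Fin n) → EuclideanSpace ℝ (Fin k))
    (μB : EuclideanSpace ℂ (Fin m) → EuclideanSpace ℝ (Fin k))
    (hA : ∀ z j, μA z j = (1/2) * ∑ l, A l j * Complex.normSq (z l))
    (hB : ∀ z j, μB z j = (1/2) * ∑ l, B l j * Complex.normSq (z l))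
    (hrows : ∀ l : Fin n, ∃ (l' : Fin m) (lam : ℝ), 0 < lam ∧ ∀ j, A l j = lam * B l' j)
    (τ : EuclideanSpace ℝ (Fin k))
    (hirr : ¬ ∀ z, μA z = τ → Function.Surjective (fderiv ℝ μA z)) :
    ¬ ∀ z, μB z = τ → Function.Surjective (fderiv ℝ μB z) := by
  classical
  intro H
  push_neg at hirr
  obtain ⟨z, hz, hns⟩ := hirr
  apply hns
  choose f lam hlam hAB using hrows
  set S : Fin m → ℝ := fun l' =>
    ∑ l ∈ Finset.univ.filter (fun l => f l = l'), lam l * Complex.normSq (z l) with hSdef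
  have hS0 : ∀ l', 0 ≤ S l' := fun l' =>
    Finset.sum_nonneg fun l _ => mul_nonneg (hlam l).le (Complex.normSq_nonneg _)
  set w : EuclideanSpace ℂ (Fin m) := WithLp.toLp 2 (fun l' => ((Real.sqrt (S l') : ℝ) : ℂ)) with hwdef
  have hwsq : ∀ l', Complex.normSq (w l') = S l' := by
    intro l'
    show Complex.normSq ((Real.sqrt (S l') : ℝ) : ℂ) = S l'
    rw [Complex.normSq_ofReal, Real.mul_self_sqrt (hS0 l')]
  -- μB w = τ
  have hμBw : μB w = τ := by
    ext j
    rw [hB]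
    have key : ∑ l', B l' j * Complex.normSq (w l') = ∑ l, A l j * Complex.normSq (z l) := by
      calc ∑ l', B l' j * Complex.normSq (w l')
          = ∑ l', ∑ l ∈ Finset.univ.filter (fun l => f l = l'),
              B (f l) j * (lam l * Complex.normSq (z l)) := by
            refine Finset.sum_congr rfl fun l' _ => ?_
            rw [hwsq, hSdef, Finset.mul_sum]
            refine Finset.sum_congr rfl fun l hl => ?_
            rw [(Finset.mem_filter.1 hl).2]
        _ = ∑ l, B (f l) j * (lam l * Complex.normSq (z l)) :=
            Finset.sum_fiberwise _ _ _
        _ = ∑ l, A l j * Complex.normSq (z l) := by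
            refine Finset.sum_congr rfl fun l _ => ?_
            rw [hAB l j]; ring
    rw [key, ← hA]
    rw [hz]
  have hsurjB := H w hμBw
  -- the span of rows of A with nonzero coordinate
  set Arow : Fin n → EuclideanSpace ℝ (Fin k) := fun l => WithLp.toLp 2 (fun j => A l j) with hArow
  set Brow : Fin m → EuclideanSpace ℝ (Fin k) := fun l' => WithLp.toLp 2 (fun j => B l' j) with hBrow
  set R : Set (EuclideanSpace ℝ (Fin k)) := {x | ∃ l, z l ≠ 0 ∧ x = Arow l} with hR
  have happlyA := momentDerivApply n k A μA hA z
  have happlyB := momentDerivApply m k B μB hB w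
  -- rows of A with z l ≠ 0 are in the range of the derivative of μA
  have hAmem : ∀ l, z l ≠ 0 → ∃ v, fderiv ℝ μA z v = Arow l := by
    intro l hl
    have hc : Complex.normSq (z l) ≠ 0 := fun h => hl (Complex.normSq_eq_zero.1 h)
    refine ⟨EuclideanSpace.single l ((Complex.normSq (z l))⁻¹ • z l), ?_⟩
    ext j
    rw [happlyA]
    rw [Finset.sum_eq_single l]
    · have h1 : (EuclideanSpace.single l ((Complex.normSq (z l))⁻¹ • z l) : EuclideanSpace ℂ (Fin n)) l
          = (Complex.normSq (z l))⁻¹ • z l := by simp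
      rw [h1]
      have hre : ((starRingEnd ℂ) (z l) * z l).re = Complex.normSq (z l) := by
        simp [Complex.mul_re, Complex.normSq_apply, Complex.conj_re, Complex.conj_im]
      have h2 : ((starRingEnd ℂ) (z l) * ((Complex.normSq (z l))⁻¹ • z l)).re = 1 := by
        rw [mul_smul_comm, Complex.smul_re, hre, smul_eq_mul, inv_mul_cancel₀ hc]
      rw [h2, mul_one, hArow]
    · intro b _ hb
      have : (EuclideanSpace.single l ((Complex.normSq (z l))⁻¹ • z l) : EuclideanSpace ℂ (Fin n)) b = 0 := by
        simp [EuclideanSpace.single_apply, hb]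
      rw [this]; simp
    · simp
  -- every value of the derivative of μB lies in the span of R
  have hBspan : ∀ v, fderiv ℝ μB w v ∈ Submodule.span ℝ R := by
    intro v
    have hexp : fderiv ℝ μB w v
        = ∑ l', (((starRingEnd ℂ) (w l') * v l').re) • Brow l' := by
      ext j
      rw [happlyB]
      rw [WithLp.ofLp_sum, Finset.sum_apply]
      refine Finset.sum_congr rfl fun l' _ => ?_
      rw [PiLp.smul_apply, hBrow, PiLp.toLp_apply, smul_eq_mul]
      ring
    rw [hexp]
    refine Submodule.sum_mem _ fun l' _ => ?_
    by_cases hc : ((starRingEnd ℂ) (w l') * v l').re = 0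
    · rw [hc, zero_smul]; exact Submodule.zero_mem _
    · have hw0 : w l' ≠ 0 := by
        intro h
        apply hc
        rw [h, map_zero, zero_mul, Complex.zero_re]
      have hSne : S l' ≠ 0 := by
        intro h
        apply hw0
        show ((Real.sqrt (S l') : ℝ) : ℂ) = 0
        rw [h, Real.sqrt_zero, Complex.ofReal_zero]
      obtain ⟨l, hfl, hzl⟩ : ∃ l, f l = l' ∧ z l ≠ 0 := by
        by_contra hall
        push_neg at hall
        apply hSne
        rw [hSdef]
        refine Finset.sum_eq_zero fun l hl => ?_
        have hz0 : z l = 0 := hall l (Finset.mem_filter.1 hl).2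
        rw [hz0, Complex.normSq_zero, mul_zero]
      have hBA : Brow l' = (lam l)⁻¹ • Arow l := by
        ext j
        rw [hBrow, hArow]
        show B l' j = ((lam l)⁻¹ • (WithLp.toLp 2 (fun j => A l j) : EuclideanSpace ℝ (Fin k))) j
        rw [PiLp.smul_apply, PiLp.toLp_apply, smul_eq_mul, hAB l j, hfl, inv_mul_cancel_left₀ (hlam l).ne']
      rw [hBA]
      exact Submodule.smul_mem _ _ (Submodule.smul_mem _ _
        (Submodule.subset_span ⟨l, hzl, rfl⟩))
  -- span R = ⊤
  have htop : Submodule.span ℝ R = ⊤ := by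
    rw [Submodule.eq_top_iff']
    intro x
    obtain ⟨v, rfl⟩ := hsurjB x
    exact hBspan v
  -- conclude surjectivity of fderiv μA z
  intro x
  have hx : x ∈ Submodule.span ℝ R := htop ▸ Submodule.mem_top
  -- span R ≤ range of fderiv μA z
  have hle : Submodule.span ℝ R ≤ LinearMap.range (fderiv ℝ μA z : EuclideanSpace ℂ (Fin n) →ₗ[ℝ] EuclideanSpace ℝ (Fin k)) := by
    rw [Submodule.span_le]
    rintro y ⟨l, hl, rfl⟩
    obtain ⟨v, hv⟩ := hAmem l hl
    exact ⟨v, hv⟩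
  obtain ⟨v, hv⟩ := hle hx
  exact ⟨v, hv⟩
end

section
/- Let z: S¹ → ℂⁿ be a smooth loop and let ξ ∈ C^∞(S¹, ℝᵏ) with ∫₀¹ ξ dt = 0 satisfy the Coulomb equation d/dt(L_z*ẑ − L_z*L_z ξ + ∂_t²ξ) = 0 for a given ẑ ∈ C^∞(S¹, ℂⁿ). Then ‖L_z ξ‖_{L²} ≤ (c₀²‖z‖²_{L²} / (c₀²‖z‖²_{L²} + 1)) ‖ẑ‖_{L²}, where c₀ > 0 is a constant such that |L_z(p) ξ(p)| ≤ c₀ |z(p)||ξ(p)| pointwise. -/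
open MeasureTheory intervalIntegral Finset

lemma cs_int (f g : ℝ → ℝ) (hf : Continuous f) (hg : Continuous g) :
    (∫ t in (0:ℝ)..1, f t * g t) ≤
      Real.sqrt (∫ t in (0:ℝ)..1, (f t)^2) * Real.sqrt (∫ t in (0:ℝ)..1, (g t)^2) := by
  set F := ∫ t in (0:ℝ)..1, (f t)^2 with hFdef
  set G := ∫ t in (0:ℝ)..1, (g t)^2 with hGdef
  set P := ∫ t in (0:ℝ)..1, f t * g t with hPdef
  have hF : 0 ≤ F := intervalIntegral.integral_nonneg zero_le_one (fun t _ => sq_nonneg _)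
  have hG : 0 ≤ G := intervalIntegral.integral_nonneg zero_le_one (fun t _ => sq_nonneg _)
  have hif : IntervalIntegrable (fun t => (f t)^2) volume 0 1 := (hf.pow 2).intervalIntegrable 0 1
  have hig : IntervalIntegrable (fun t => (g t)^2) volume 0 1 := (hg.pow 2).intervalIntegrable 0 1
  have hifg : IntervalIntegrable (fun t => f t * g t) volume 0 1 := (hf.mul hg).intervalIntegrable 0 1
  have key : ∀ l : ℝ, 0 ≤ G * (l * l) + (-2 * P) * l + F := by
    intro l
    have h0 : 0 ≤ ∫ t in (0:ℝ)..1, (l * g t - f t)^2 :=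
      intervalIntegral.integral_nonneg zero_le_one (fun t _ => sq_nonneg _)
    have hexp : (fun t => (l * g t - f t)^2)
        = fun t => (l * l) * (g t)^2 + ((-2 * l) * (f t * g t) + (f t)^2) := by
      funext t; ring
    rw [hexp, intervalIntegral.integral_add ((hig.const_mul _))
        (((hifg.const_mul _)).add hif),
      intervalIntegral.integral_add (hifg.const_mul _) hif,
      intervalIntegral.integral_const_mul, intervalIntegral.integral_const_mul] at h0
    calc (0:ℝ) ≤ l * l * G + (-2 * l * P + F) := h0
    _ = G * (l * l) + (-2 * P) * l + F := by ring
  have hd := discrim_le_zero key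
  have hP2 : P ^ 2 ≤ F * G := by
    simp only [discrim] at hd
    nlinarith
  calc P ≤ |P| := le_abs_self P
  _ = Real.sqrt (P ^ 2) := (Real.sqrt_sq_eq_abs P).symm
  _ ≤ Real.sqrt (F * G) := Real.sqrt_le_sqrt hP2
  _ = Real.sqrt F * Real.sqrt G := Real.sqrt_mul hF _

/-- Coulomb gauge estimate. If `ξ` is the mean-zero solution of the Coulomb
equation `d/dt (L_z* ẑ − L_z* L_z ξ + ∂_t² ξ) = 0` for loops `z, ẑ`, then
`‖L_z ξ‖_{L²} ≤ (c₀²‖z‖²_{L²} / (c₀²‖z‖²_{L²} + 1)) ‖ẑ‖_{L²}`. -/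
theorem stmt4 (n k : ℕ) (A : Matrix (Fin n) (Fin k) ℝ)
    (Lz : EuclideanSpace ℂ (Fin n) → EuclideanSpace ℝ (Fin k) → EuclideanSpace ℂ (Fin n))
    (hLz : ∀ p ζ j, Lz p ζ j = Complex.I * (∑ r, (A j r : ℂ) * (ζ r : ℂ)) * p j)
    (Lstar : EuclideanSpace ℂ (Fin n) → EuclideanSpace ℂ (Fin n) → EuclideanSpace ℝ (Fin k))
    (hLstar : ∀ p v r, Lstar p v r =
      ∑ j, A j r * ((-Complex.I) * (starRingEnd ℂ) (p j) * v j).re)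
    (c₀ : ℝ) (hc₀ : 0 < c₀)
    (hbound : ∀ p ζ, ‖Lz p ζ‖ ≤ c₀ * ‖p‖ * ‖ζ‖)
    (z zh : ℝ → EuclideanSpace ℂ (Fin n)) (ξ : ℝ → EuclideanSpace ℝ (Fin k))
    (hz : ContDiff ℝ (⊤ : ℕ∞) z) (hzh : ContDiff ℝ (⊤ : ℕ∞) zh) (hξ : ContDiff ℝ (⊤ : ℕ∞) ξ)
    (hzper : Function.Periodic z 1) (hzhper : Function.Periodic zh 1)
    (hξper : Function.Periodic ξ 1)
    (hmean : (∫ t in (0:ℝ)..1, ξ t) = 0)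
    (hcoulomb : ∀ t, deriv (fun t' =>
      Lstar (z t') (zh t') - Lstar (z t') (Lz (z t') (ξ t')) + deriv (deriv ξ) t') t = 0) :
    Real.sqrt (∫ t in (0:ℝ)..1, ‖Lz (z t) (ξ t)‖^2) ≤
      (c₀^2 * (∫ t in (0:ℝ)..1, ‖z t‖^2) / (c₀^2 * (∫ t in (0:ℝ)..1, ‖z t‖^2) + 1)) *
        Real.sqrt (∫ t in (0:ℝ)..1, ‖zh t‖^2) := by
  -- downgrade analytic smoothness to C^∞
  replace hz : ContDiff ℝ (⊤ : ℕ∞) z := hz.of_le (by simp)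
  replace hzh : ContDiff ℝ (⊤ : ℕ∞) zh := hzh.of_le (by simp)
  replace hξ : ContDiff ℝ (⊤ : ℕ∞) ξ := hξ.of_le (by simp)
  have hξ1 : ContDiff ℝ (⊤ : ℕ∞) (deriv ξ) := (contDiff_infty_iff_deriv.mp hξ).2
  have hξ2 : ContDiff ℝ (⊤ : ℕ∞) (deriv (deriv ξ)) := (contDiff_infty_iff_deriv.mp hξ1).2
  -- component smoothness
  have hzj : ∀ j, ContDiff ℝ (⊤ : ℕ∞) fun t => z t j := fun j => (contDiff_piLp 2).mp hz j
  have hξr : ∀ r, ContDiff ℝ (⊤ : ℕ∞) fun t => ξ t r := fun r => (contDiff_piLp 2).mp hξ r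
  have hw : ContDiff ℝ (⊤ : ℕ∞) fun t => Lz (z t) (ξ t) := by
    refine (contDiff_piLp 2).mpr fun j => ?_
    have : (fun t => Lz (z t) (ξ t) j)
        = fun t => Complex.I * (∑ r, (A j r : ℂ) * (ξ t r : ℂ)) * z t j :=
      funext fun t => hLz _ _ j
    rw [this]
    refine (contDiff_const.mul (ContDiff.sum fun r _ => contDiff_const.mul ?_)).mul (hzj j)
    have := Complex.ofRealCLM.contDiff.comp (hξr r)
    exact this
  have hLs : ∀ (v : ℝ → EuclideanSpace ℂ (Fin n)), ContDiff ℝ (⊤ : ℕ∞) v →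
      ContDiff ℝ (⊤ : ℕ∞) fun t => Lstar (z t) (v t) := by
    intro v hv
    have hvj : ∀ j, ContDiff ℝ (⊤ : ℕ∞) fun t => v t j := fun j => (contDiff_piLp 2).mp hv j
    refine (contDiff_piLp 2).mpr fun r => ?_
    have : (fun t => Lstar (z t) (v t) r)
        = fun t => ∑ j, A j r * ((-Complex.I) * (starRingEnd ℂ) (z t j) * v t j).re :=
      funext fun t => hLstar _ _ r
    rw [this]
    refine ContDiff.sum fun j _ => contDiff_const.mul ?_
    have h1 : ContDiff ℝ (⊤ : ℕ∞) fun t => (-Complex.I) * (starRingEnd ℂ) (z t j) * v t j := by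
      refine ContDiff.mul (contDiff_const.mul ?_) (hvj j)
      have := Complex.conjCLE.contDiff.comp (hzj j)
      exact this
    exact Complex.reCLM.contDiff.comp h1
  -- continuity
  have hzc : Continuous z := hz.continuous
  have hzhc : Continuous zh := hzh.continuous
  have hξc : Continuous ξ := hξ.continuous
  have hξ1c : Continuous (deriv ξ) := hξ1.continuous
  have hξ2c : Continuous (deriv (deriv ξ)) := hξ2.continuous
  have hwc : Continuous fun t => Lz (z t) (ξ t) := hw.continuous
  -- the adjoint identity
  have adj : ∀ (p v : EuclideanSpace ℂ (Fin n)) (ζ : EuclideanSpace ℝ (Fin k)),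
      (inner ℝ (Lstar p v) ζ : ℝ) = (inner ℂ (Lz p ζ) v : ℂ).re := by
    intro p v ζ
    simp only [PiLp.inner_apply, RCLike.inner_apply, conj_trivial, hLstar, hLz,
      Complex.re_sum, map_mul, map_sum, Complex.conj_I, Complex.conj_ofReal]
    simp only [Finset.mul_sum]
    rw [Finset.sum_comm]
    refine Finset.sum_congr rfl fun j _ => ?_
    have h1 : (v j * ((∑ r, -Complex.I * (((A j r : ℝ) : ℂ) * ((ζ r : ℝ) : ℂ))) * (starRingEnd ℂ) (p j)))
        = ((∑ r, A j r * ζ r : ℝ) : ℂ) * (-Complex.I * (starRingEnd ℂ) (p j) * v j) := by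
      rw [← Finset.mul_sum]
      push_cast
      ring
    rw [h1, Complex.re_ofReal_mul, Finset.sum_mul]
    exact Finset.sum_congr rfl fun r _ => by ring
  -- abbreviations for integrals
  set X2 := ∫ t in (0:ℝ)..1, ‖Lz (z t) (ξ t)‖^2 with hX2def
  set Z2 := ∫ t in (0:ℝ)..1, ‖z t‖^2 with hZ2def
  set Y2 := ∫ t in (0:ℝ)..1, ‖zh t‖^2 with hY2def
  set D2 := ∫ t in (0:ℝ)..1, ‖deriv ξ t‖^2 with hD2def
  have hX2 : 0 ≤ X2 := intervalIntegral.integral_nonneg zero_le_one (fun t _ => sq_nonneg _)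
  have hZ2 : 0 ≤ Z2 := intervalIntegral.integral_nonneg zero_le_one (fun t _ => sq_nonneg _)
  have hY2 : 0 ≤ Y2 := intervalIntegral.integral_nonneg zero_le_one (fun t _ => sq_nonneg _)
  have hD2 : 0 ≤ D2 := intervalIntegral.integral_nonneg zero_le_one (fun t _ => sq_nonneg _)
  -- the Coulomb quantity is constant
  set F : ℝ → EuclideanSpace ℝ (Fin k) := fun t' =>
    Lstar (z t') (zh t') - Lstar (z t') (Lz (z t') (ξ t')) + deriv (deriv ξ) t' with hFdef
  have hFdiff : Differentiable ℝ F :=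
    (((hLs zh hzh).sub (hLs _ hw)).add hξ2).differentiable (by simp)
  have hFconst : ∀ t, F t = F 0 := fun t => is_const_of_deriv_eq_zero hFdiff hcoulomb t 0
  -- pointwise expansion of ⟪F t, ξ t⟫
  have hptwise : ∀ t, ((inner ℂ (Lz (z t) (ξ t)) (zh t) : ℂ)).re - ‖Lz (z t) (ξ t)‖^2
      + (inner ℝ (deriv (deriv ξ) t) (ξ t) : ℝ) = (inner ℝ (F 0) (ξ t) : ℝ) := by
    intro t
    rw [← hFconst t, hFdef]
    simp only [inner_sub_left, inner_add_left]
    rw [adj, adj]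
    congr 1
    rw [← @inner_self_eq_norm_sq ℂ]
    simp [RCLike.re_to_complex]
  -- integral of RHS vanishes by mean-zero
  have hintF0 : (∫ t in (0:ℝ)..1, (inner ℝ (F 0) (ξ t) : ℝ)) = 0 := by
    have hint : IntervalIntegrable ξ MeasureTheory.volume 0 1 := hξc.intervalIntegrable 0 1
    have h := (innerSL ℝ (F 0)).intervalIntegral_comp_comm hint
    simpa [hmean, innerSL_apply_apply] using h
  -- integration by parts for ∫⟪ξ'', ξ⟫
  have hparts : (∫ t in (0:ℝ)..1, (inner ℝ (deriv (deriv ξ) t) (ξ t) : ℝ)) = -D2 := by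
    have hd : ∀ t ∈ Set.uIcc (0:ℝ) 1, HasDerivAt (fun u => (inner ℝ (deriv ξ u) (ξ u) : ℝ))
        ((inner ℝ (deriv ξ t) (deriv ξ t) : ℝ) + (inner ℝ (deriv (deriv ξ) t) (ξ t) : ℝ)) t :=
      fun t _ => HasDerivAt.inner ℝ ((hξ1.differentiable (by simp) t).hasDerivAt)
        ((hξ.differentiable (by simp) t).hasDerivAt)
    have hcont : Continuous fun t => (inner ℝ (deriv ξ t) (deriv ξ t) : ℝ)
        + (inner ℝ (deriv (deriv ξ) t) (ξ t) : ℝ) :=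
      (hξ1c.inner hξ1c).add (hξ2c.inner hξc)
    have h := intervalIntegral.integral_eq_sub_of_hasDerivAt hd (hcont.intervalIntegrable 0 1)
    have hper1 : ξ 1 = ξ 0 := by have := hξper 0; simpa using this
    have hper2 : deriv ξ 1 = deriv ξ 0 := by
      have hfun : (fun s => ξ (s + 1)) = ξ := funext hξper
      calc deriv ξ 1 = deriv ξ (0 + 1) := by norm_num
      _ = deriv (fun s => ξ (s + 1)) 0 := (deriv_comp_add_const _ _ _).symm
      _ = deriv ξ 0 := by rw [hfun]
    rw [hper1, hper2, sub_self] at h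
    have hsplit : (∫ t in (0:ℝ)..1, ((inner ℝ (deriv ξ t) (deriv ξ t) : ℝ)
        + (inner ℝ (deriv (deriv ξ) t) (ξ t) : ℝ)))
        = (∫ t in (0:ℝ)..1, (inner ℝ (deriv ξ t) (deriv ξ t) : ℝ))
          + ∫ t in (0:ℝ)..1, (inner ℝ (deriv (deriv ξ) t) (ξ t) : ℝ) :=
      intervalIntegral.integral_add ((hξ1c.inner hξ1c).intervalIntegrable 0 1)
        (((hξ2c.inner hξc)).intervalIntegrable 0 1)
    have hnorm : (∫ t in (0:ℝ)..1, (inner ℝ (deriv ξ t) (deriv ξ t) : ℝ)) = D2 := by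
      rw [hD2def]
      refine intervalIntegral.integral_congr fun t _ => ?_
      exact real_inner_self_eq_norm_sq _
    rw [hsplit, hnorm] at h
    linarith
  -- the key identity : ∫ re⟪Lz ξ, zh⟫ = X2 + D2
  have E1 : (∫ t in (0:ℝ)..1, ((inner ℂ (Lz (z t) (ξ t)) (zh t) : ℂ)).re) = X2 + D2 := by
    have hg1c : Continuous fun t => ((inner ℂ (Lz (z t) (ξ t)) (zh t) : ℂ)).re :=
      Complex.continuous_re.comp (hwc.inner hzhc)
    have hac : Continuous fun t => ‖Lz (z t) (ξ t)‖^2 := (hwc.norm.pow 2)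
    have hqc : Continuous fun t => (inner ℝ (deriv (deriv ξ) t) (ξ t) : ℝ) := hξ2c.inner hξc
    have hintid : (∫ t in (0:ℝ)..1, (((inner ℂ (Lz (z t) (ξ t)) (zh t) : ℂ)).re
          - ‖Lz (z t) (ξ t)‖^2 + (inner ℝ (deriv (deriv ξ) t) (ξ t) : ℝ)))
        = (∫ t in (0:ℝ)..1, ((inner ℂ (Lz (z t) (ξ t)) (zh t) : ℂ)).re) - X2
          + ∫ t in (0:ℝ)..1, (inner ℝ (deriv (deriv ξ) t) (ξ t) : ℝ) := by
      rw [intervalIntegral.integral_add ((hg1c.intervalIntegrable 0 1).sub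
        (hac.intervalIntegrable 0 1)) (hqc.intervalIntegrable 0 1),
        intervalIntegral.integral_sub (hg1c.intervalIntegrable 0 1) (hac.intervalIntegrable 0 1)]
    have h0 : (∫ t in (0:ℝ)..1, (((inner ℂ (Lz (z t) (ξ t)) (zh t) : ℂ)).re
          - ‖Lz (z t) (ξ t)‖^2 + (inner ℝ (deriv (deriv ξ) t) (ξ t) : ℝ))) = 0 := by
      rw [intervalIntegral.integral_congr (fun t _ => hptwise t)]
      exact hintF0
    rw [hintid, hparts] at h0
    linarith
  -- Cauchy–Schwarz : ∫ re⟪Lz ξ, zh⟫ ≤ √X2 √Y2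
  have E2 : (∫ t in (0:ℝ)..1, ((inner ℂ (Lz (z t) (ξ t)) (zh t) : ℂ)).re)
      ≤ Real.sqrt X2 * Real.sqrt Y2 := by
    have hpt : ∀ t ∈ Set.Icc (0:ℝ) 1, ((inner ℂ (Lz (z t) (ξ t)) (zh t) : ℂ)).re
        ≤ ‖Lz (z t) (ξ t)‖ * ‖zh t‖ := by
      intro t _
      have := re_inner_le_norm (𝕜 := ℂ) (Lz (z t) (ξ t)) (zh t)
      simpa [RCLike.re_to_complex] using this
    have h1 : (∫ t in (0:ℝ)..1, ((inner ℂ (Lz (z t) (ξ t)) (zh t) : ℂ)).re)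
        ≤ ∫ t in (0:ℝ)..1, ‖Lz (z t) (ξ t)‖ * ‖zh t‖ :=
      intervalIntegral.integral_mono_on zero_le_one
        ((Complex.continuous_re.comp (hwc.inner hzhc)).intervalIntegrable 0 1)
        ((hwc.norm.mul hzhc.norm).intervalIntegrable 0 1) hpt
    have h2 := cs_int (fun t => ‖Lz (z t) (ξ t)‖) (fun t => ‖zh t‖) hwc.norm hzhc.norm
    exact h1.trans h2
  -- sup bound on ξ via mean-zero and the derivative
  have hsup : ∀ t ∈ Set.Icc (0:ℝ) 1, ‖ξ t‖^2 ≤ D2 := by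
    intro t ht
    set N := ∫ u in (0:ℝ)..1, ‖deriv ξ u‖ with hNdef
    have hN : N ≤ Real.sqrt D2 := by
      have h := cs_int (fun u => ‖deriv ξ u‖) (fun _ => 1) hξ1c.norm continuous_const
      simpa [hD2def] using h
    have hNn : 0 ≤ N := intervalIntegral.integral_nonneg zero_le_one (fun u _ => norm_nonneg _)
    have hstep : ∀ s ∈ Set.Icc (0:ℝ) 1, ‖ξ t - ξ s‖ ≤ N := by
      intro s hs
      have hfund : (∫ u in s..t, deriv ξ u) = ξ t - ξ s :=
        intervalIntegral.integral_deriv_eq_sub (fun x _ => hξ.differentiable (by simp) x)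
          (hξ1c.intervalIntegrable s t)
      rw [← hfund]
      refine (intervalIntegral.norm_integral_le_abs_integral_norm).trans ?_
      have hsub : (∫ u in s..t, ‖deriv ξ u‖)
          = (∫ u in (0:ℝ)..t, ‖deriv ξ u‖) - ∫ u in (0:ℝ)..s, ‖deriv ξ u‖ :=
        (intervalIntegral.integral_interval_sub_left (hξ1c.norm.intervalIntegrable 0 t)
          (hξ1c.norm.intervalIntegrable 0 s)).symm
      have h0t : 0 ≤ ∫ u in (0:ℝ)..t, ‖deriv ξ u‖ :=
        intervalIntegral.integral_nonneg ht.1 (fun u _ => norm_nonneg _)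
      have h0s : 0 ≤ ∫ u in (0:ℝ)..s, ‖deriv ξ u‖ :=
        intervalIntegral.integral_nonneg hs.1 (fun u _ => norm_nonneg _)
      have h1t : (∫ u in (0:ℝ)..t, ‖deriv ξ u‖) ≤ N :=
        intervalIntegral.integral_mono_interval le_rfl ht.1 ht.2
          (Filter.Eventually.of_forall fun u => norm_nonneg _)
          (hξ1c.norm.intervalIntegrable 0 1)
      have h1s : (∫ u in (0:ℝ)..s, ‖deriv ξ u‖) ≤ N :=
        intervalIntegral.integral_mono_interval le_rfl hs.1 hs.2
          (Filter.Eventually.of_forall fun u => norm_nonneg _)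
          (hξ1c.norm.intervalIntegrable 0 1)
      rw [hsub]
      exact abs_le.mpr ⟨by linarith, by linarith⟩
    have hrepr : ξ t = ∫ s in (0:ℝ)..1, (ξ t - ξ s) := by
      rw [intervalIntegral.integral_sub
        (intervalIntegrable_const : IntervalIntegrable (fun _ => ξ t) MeasureTheory.volume 0 1)
        (hξc.intervalIntegrable 0 1),
        hmean, sub_zero, intervalIntegral.integral_const]
      simp
    have hnt : ‖ξ t‖ ≤ N := by
      rw [hrepr]
      refine (intervalIntegral.norm_integral_le_integral_norm zero_le_one).trans ?_
      have := intervalIntegral.integral_mono_on zero_le_one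
        (((continuous_const.sub hξc).norm).intervalIntegrable 0 1)
        (intervalIntegrable_const : IntervalIntegrable (fun _ => N) MeasureTheory.volume 0 1)
        hstep
      simpa using this
    calc ‖ξ t‖^2 ≤ N^2 := by nlinarith [norm_nonneg (ξ t)]
    _ ≤ (Real.sqrt D2)^2 := by nlinarith
    _ = D2 := Real.sq_sqrt hD2
  -- the L² bound on Lz ξ : X2 ≤ c₀² Z2 D2
  have E4 : X2 ≤ c₀^2 * Z2 * D2 := by
    have hpt : ∀ t ∈ Set.Icc (0:ℝ) 1, ‖Lz (z t) (ξ t)‖^2 ≤ (c₀^2 * D2) * ‖z t‖^2 := by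
      intro t ht
      have h1 : ‖Lz (z t) (ξ t)‖ ≤ c₀ * ‖z t‖ * ‖ξ t‖ := hbound _ _
      have h2 := hsup t ht
      calc ‖Lz (z t) (ξ t)‖^2 ≤ (c₀ * ‖z t‖ * ‖ξ t‖)^2 :=
            pow_le_pow_left₀ (norm_nonneg _) h1 2
      _ = (c₀^2 * ‖z t‖^2) * ‖ξ t‖^2 := by ring
      _ ≤ (c₀^2 * ‖z t‖^2) * D2 := by
            refine mul_le_mul_of_nonneg_left h2 ?_
            positivity
      _ = (c₀^2 * D2) * ‖z t‖^2 := by ring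
    have h1 : X2 ≤ ∫ t in (0:ℝ)..1, (c₀^2 * D2) * ‖z t‖^2 :=
      intervalIntegral.integral_mono_on zero_le_one
        ((hwc.norm.pow 2).intervalIntegrable 0 1)
        (((hzc.norm.pow 2).intervalIntegrable 0 1).const_mul _) hpt
    rw [intervalIntegral.integral_const_mul] at h1
    calc X2 ≤ c₀^2 * D2 * Z2 := h1
    _ = c₀^2 * Z2 * D2 := by ring
  -- final algebra
  have hkey : X2 + D2 ≤ Real.sqrt X2 * Real.sqrt Y2 := by rw [← E1]; exact E2
  clear_value X2 Z2 Y2 D2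
  clear hcoulomb hFconst hFdiff hptwise hintF0 hparts hFdef F hX2def hZ2def hY2def hD2def
  clear hLz hLstar hbound hz hzh hξ hξ1 hξ2 hzj hξr hw hLs hzc hzhc hξc hξ1c hξ2c hwc adj
  clear hzper hzhper hξper hmean hsup E1 E2
  set C := c₀^2 * Z2 with hCdef
  have hC : 0 ≤ C := by positivity
  rcases eq_or_lt_of_le hX2 with h0 | hpos
  · rw [← h0, Real.sqrt_zero]
    have h1 : 0 ≤ C / (C + 1) := div_nonneg hC (by linarith)
    exact mul_nonneg h1 (Real.sqrt_nonneg Y2)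
  · have hCpos : 0 < C := by
      by_contra hneg
      push_neg at hneg
      have : C * D2 ≤ 0 := mul_nonpos_of_nonpos_of_nonneg hneg hD2
      linarith [E4, hpos]
    have hsX : 0 < Real.sqrt X2 := Real.sqrt_pos.mpr hpos
    have hsq : Real.sqrt X2 * Real.sqrt X2 = X2 := Real.mul_self_sqrt hX2
    rw [div_mul_eq_mul_div, le_div_iff₀ (by linarith)]
    -- goal : √X2 * (C + 1) ≤ C * √Y2
    nlinarith [hkey, E4, hsq, hsX, hCpos, Real.sqrt_nonneg Y2]
end

section
/- With the hypotheses of the previous Coulomb-gauge setup, there exists a constant c > 0 (depending only on the torus representation) such that the two metrics g₀, g₁ on the Coulomb slice satisfy ‖·‖₀ ≤ c(1 + ‖z‖_{L²})·‖·‖₁ at every point (z,η). Concretely: for every tangent vector (ẑ, η̂), ‖(ẑ,η̂)‖₁² ≥ (1/(c₀²‖z‖²_{L²}+1)) ‖(ẑ,η̂)‖₀², where ‖(ẑ,η̂)‖₀² = ‖ẑ‖²_{L²} + |η̂|², and ‖(ẑ,η̂)‖₁² ≥ ‖ẑ − L_zξ‖²_{L²} + |η̂|² with ξ the Coulomb-gauge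 Lie algebra element determined by ẑ. -/
open scoped ContDiff
open MeasureTheory intervalIntegral

theorem stmt5_alg (a N M P S η : ℝ) (ha : 0 ≤ a) (hN : 0 ≤ N) (hM : 0 ≤ M) (hP : 0 ≤ P)
    (hη : 0 ≤ η) (hS : S = M + P) (hMa : M ≤ a * P)
    (hq : ∀ lam : ℝ, 0 ≤ N - 2*lam*S + lam^2*M) :
    1 * (N + η) ≤ (N - 2*S + M + P + η) * (a + 1) := by
  have hMa1 : M * (a+1) ≤ a * S := by nlinarith
  have hkey : S * (a+1) ≤ N * a := by
    rcases eq_or_lt_of_le ha with h0 | hpos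
    · have hMz : M = 0 := by nlinarith
      have hSnn : 0 ≤ S := by nlinarith
      have hSle : S ≤ 0 := by
        by_contra hcon
        push_neg at hcon
        have h := hq ((N+1)/S)
        rw [hMz] at h
        have h2 : 2*((N+1)/S)*S = 2*(N+1) := by field_simp
        nlinarith
      nlinarith
    · have hq2 := hq ((a+1)/a)
      have hclear : (N - 2*((a+1)/a)*S + ((a+1)/a)^2*M) * a^2
          = N*a^2 - 2*(a+1)*S*a + (a+1)^2*M := by
        field_simp
      have hq' : 0 ≤ N*a^2 - 2*(a+1)*S*a + (a+1)^2*M := by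
        rw [← hclear]; exact mul_nonneg hq2 (sq_nonneg a)
      have hMa2 : M*(a+1)*(a+1) ≤ a*S*(a+1) := mul_le_mul_of_nonneg_right hMa1 (by linarith)
      have h3 : (S*(a+1))*a ≤ (N*a)*a := by nlinarith
      exact le_of_mul_le_mul_right h3 hpos
  nlinarith

/-- comparison of the two metrics on the Coulomb slice:
`‖(ẑ,η̂)‖₁² ≥ (1/(c₀²‖z‖²_{L²}+1)) ‖(ẑ,η̂)‖₀²`, where
`‖(ẑ,η̂)‖₁² = ‖ẑ − L_zξ‖²_{L²} + ‖∂_tξ‖²_{L²} + |η̂|²` with `ξ` the Coulomb-gauge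
Lie algebra element, and `‖(ẑ,η̂)‖₀² = ‖ẑ‖²_{L²} + |η̂|²`. -/
theorem stmt5 (n k : ℕ) (A : Matrix (Fin n) (Fin k) ℝ)
    (Lz : EuclideanSpace ℂ (Fin n) → EuclideanSpace ℝ (Fin k) → EuclideanSpace ℂ (Fin n))
    (hLz : ∀ p ζ j, Lz p ζ j = Complex.I * (∑ r, (A j r : ℂ) * (ζ r : ℂ)) * p j)
    (Lstar : EuclideanSpace ℂ (Fin n) → EuclideanSpace ℂ (Fin n) → EuclideanSpace ℝ (Fin k))
    (hLstar : ∀ p v r, Lstar p v r =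
      ∑ j, A j r * ((-Complex.I) * (starRingEnd ℂ) (p j) * v j).re)
    (c₀ : ℝ) (hc₀ : 0 < c₀)
    (hbound : ∀ p ζ, ‖Lz p ζ‖ ≤ c₀ * ‖p‖ * ‖ζ‖)
    (z zh : ℝ → EuclideanSpace ℂ (Fin n)) (ξ : ℝ → EuclideanSpace ℝ (Fin k))
    (ηh : EuclideanSpace ℝ (Fin k))
    (hz : ContDiff ℝ (⊤ : ℕ∞) z) (hzh : ContDiff ℝ (⊤ : ℕ∞) zh) (hξ : ContDiff ℝ (⊤ : ℕ∞) ξ)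
    (hzper : Function.Periodic z 1) (hzhper : Function.Periodic zh 1)
    (hξper : Function.Periodic ξ 1)
    (hmean : (∫ t in (0:ℝ)..1, ξ t) = 0)
    (hcoulomb : ∀ t, deriv (fun t' =>
      Lstar (z t') (zh t') - Lstar (z t') (Lz (z t') (ξ t')) + deriv (deriv ξ) t') t = 0) :
    (1 / (c₀^2 * (∫ t in (0:ℝ)..1, ‖z t‖^2) + 1)) *
        ((∫ t in (0:ℝ)..1, ‖zh t‖^2) + ‖ηh‖^2) ≤
      (∫ t in (0:ℝ)..1, ‖zh t - Lz (z t) (ξ t)‖^2) +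
        (∫ t in (0:ℝ)..1, ‖deriv ξ t‖^2) + ‖ηh‖^2 := by
  have hone : (1 : WithTop ℕ∞) ≤ ∞ := by exact_mod_cast (le_top : (1:ℕ∞) ≤ ⊤)
  -- ∞-smoothness
  have hz' : ContDiff ℝ ∞ z := hz.of_le (by simp)
  have hzh' : ContDiff ℝ ∞ zh := hzh.of_le (by simp)
  have hξ' : ContDiff ℝ ∞ ξ := hξ.of_le (by simp)
  have hξd : Differentiable ℝ ξ := (contDiff_infty_iff_deriv.mp hξ').1
  have hdξ : ContDiff ℝ ∞ (deriv ξ) := (contDiff_infty_iff_deriv.mp hξ').2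
  have hdξd : Differentiable ℝ (deriv ξ) := (contDiff_infty_iff_deriv.mp hdξ).1
  have hddξ : ContDiff ℝ ∞ (deriv (deriv ξ)) := (contDiff_infty_iff_deriv.mp hdξ).2
  -- coordinates
  have hzj : ∀ j, ContDiff ℝ ∞ (fun t => z t j) := (contDiff_piLp 2).mp hz'
  have hξr : ∀ r, ContDiff ℝ ∞ (fun t => ξ t r) := (contDiff_piLp 2).mp hξ'
  -- smoothness of L := fun t => Lz (z t) (ξ t)
  have hLsm : ContDiff ℝ ∞ (fun t => Lz (z t) (ξ t)) := by
    refine (contDiff_piLp 2 (𝕜 := ℝ)).mpr fun j => ?_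
    have : (fun t => Lz (z t) (ξ t) j) =
        fun t => Complex.I * (∑ r, (A j r : ℂ) * (ξ t r : ℂ)) * z t j := by
      funext t; rw [hLz]
    rw [this]
    refine ContDiff.mul (contDiff_const.mul ?_) (hzj j)
    exact ContDiff.sum fun r _ =>
      contDiff_const.mul (Complex.ofRealCLM.contDiff.comp (hξr r))
  -- smoothness of t ↦ Lstar (z t) (w t)
  have hGsm : ∀ w : ℝ → EuclideanSpace ℂ (Fin n), ContDiff ℝ ∞ w →
      ContDiff ℝ ∞ (fun t => Lstar (z t) (w t)) := by
    intro w hw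
    have hwj : ∀ j, ContDiff ℝ ∞ (fun t => w t j) := (contDiff_piLp 2).mp hw
    refine (contDiff_piLp 2 (𝕜 := ℝ)).mpr fun r => ?_
    have : (fun t => Lstar (z t) (w t) r) =
        fun t => ∑ j, A j r * ((-Complex.I) * (starRingEnd ℂ) (z t j) * w t j).re := by
      funext t; rw [hLstar]
    rw [this]
    refine ContDiff.sum fun j _ => contDiff_const.mul ?_
    have h1 : ContDiff ℝ ∞ (fun t => (-Complex.I) * (starRingEnd ℂ) (z t j) * w t j) :=
      ContDiff.mul (contDiff_const.mul
        (Complex.conjCLE.toContinuousLinearMap.contDiff.comp (hzj j))) (hwj j)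
    exact Complex.reCLM.contDiff.comp h1
  have hGzh : ContDiff ℝ ∞ (fun t => Lstar (z t) (zh t)) := hGsm zh hzh'
  have hGL : ContDiff ℝ ∞ (fun t => Lstar (z t) (Lz (z t) (ξ t))) := hGsm _ hLsm
  -- continuity
  have cz : Continuous z := hz'.continuous
  have czh : Continuous zh := hzh'.continuous
  have cξ : Continuous ξ := hξ'.continuous
  have cdξ : Continuous (deriv ξ) := hdξ.continuous
  have cddξ : Continuous (deriv (deriv ξ)) := hddξ.continuous
  have cL : Continuous (fun t => Lz (z t) (ξ t)) := hLsm.continuous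
  have cS : Continuous (fun t => (inner ℂ (Lz (z t) (ξ t)) (zh t) : ℂ).re) :=
    Complex.continuous_re.comp (cL.inner czh)
  -- abbreviations
  set Q : ℝ := ∫ t in (0:ℝ)..1, ‖z t‖^2 with hQdef
  set N : ℝ := ∫ t in (0:ℝ)..1, ‖zh t‖^2 with hNdef
  set P : ℝ := ∫ t in (0:ℝ)..1, ‖deriv ξ t‖^2 with hPdef
  set M : ℝ := ∫ t in (0:ℝ)..1, ‖Lz (z t) (ξ t)‖^2 with hMdef
  set S : ℝ := ∫ t in (0:ℝ)..1, (inner ℂ (Lz (z t) (ξ t)) (zh t) : ℂ).re with hSdef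
  -- basic integrability
  have iz2 : IntervalIntegrable (fun t => ‖z t‖^2) volume 0 1 :=
    (cz.norm.pow 2).intervalIntegrable 0 1
  have izh2 : IntervalIntegrable (fun t => ‖zh t‖^2) volume 0 1 :=
    (czh.norm.pow 2).intervalIntegrable 0 1
  have iL2 : IntervalIntegrable (fun t => ‖Lz (z t) (ξ t)‖^2) volume 0 1 :=
    (cL.norm.pow 2).intervalIntegrable 0 1
  have iSi : IntervalIntegrable (fun t => (inner ℂ (Lz (z t) (ξ t)) (zh t) : ℂ).re) volume 0 1 :=
    cS.intervalIntegrable 0 1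
  have idd : IntervalIntegrable (fun t => (inner ℝ (deriv (deriv ξ) t) (ξ t) : ℝ)) volume 0 1 :=
    (cddξ.inner cξ).intervalIntegrable 0 1
  -- nonnegativity
  have hQ0 : 0 ≤ Q := intervalIntegral.integral_nonneg zero_le_one (fun u _ => by positivity)
  have hN0 : 0 ≤ N := intervalIntegral.integral_nonneg zero_le_one (fun u _ => by positivity)
  have hP0 : 0 ≤ P := intervalIntegral.integral_nonneg zero_le_one (fun u _ => by positivity)
  have hM0 : 0 ≤ M := intervalIntegral.integral_nonneg zero_le_one (fun u _ => by positivity)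
  have hη0 : (0:ℝ) ≤ ‖ηh‖^2 := by positivity
  -- pointwise norm expansion
  have hexp : ∀ (lam : ℝ) (x y : EuclideanSpace ℂ (Fin n)),
      ‖x - lam • y‖^2 = ‖x‖^2 - 2*lam*(inner ℂ y x : ℂ).re + lam^2 * ‖y‖^2 := by
    intro lam x y
    have h2 : (lam : ℝ) • y = ((lam : ℂ)) • y := RCLike.real_smul_eq_coe_smul (K := ℂ) lam y
    rw [h2, norm_sub_sq (𝕜 := ℂ), inner_smul_right, norm_smul]
    rw [show (inner ℂ y x : ℂ) = (starRingEnd ℂ) (inner ℂ x y : ℂ) from (inner_conj_symm y x).symm]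
    simp only [RCLike.re_to_complex, Complex.mul_re, Complex.ofReal_re, Complex.ofReal_im,
      zero_mul, sub_zero, Complex.norm_real, Real.norm_eq_abs, mul_pow, sq_abs, Complex.conj_re]
    ring
  -- adjoint identity
  have hadj : ∀ (p v : EuclideanSpace ℂ (Fin n)) (ζ : EuclideanSpace ℝ (Fin k)),
      (inner ℝ (Lstar p v) ζ : ℝ) = (inner ℂ (Lz p ζ) v : ℂ).re := by
    intro p v ζ
    simp only [PiLp.inner_apply, RCLike.inner_apply, hLstar, hLz, conj_trivial,
      map_mul, map_sum, Complex.conj_I, Complex.conj_ofReal, Complex.re_sum,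
      Complex.mul_re, Complex.mul_im, Complex.neg_re, Complex.neg_im,
      Complex.I_re, Complex.I_im, Complex.ofReal_re, Complex.ofReal_im,
      Complex.im_sum, Finset.sum_mul, Finset.mul_sum]
    rw [Finset.sum_comm]
    exact Finset.sum_congr rfl fun x _ => Finset.sum_congr rfl fun r _ => by ring
  -- integration by parts : ∫ ⟪ξ'', ξ⟫ = -P
  have hIBP : (∫ t in (0:ℝ)..1, (inner ℝ (deriv (deriv ξ) t) (ξ t) : ℝ)) = -P := by
    have hφ : ∀ t : ℝ, HasDerivAt (fun u => (inner ℝ (deriv ξ u) (ξ u) : ℝ))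
        ((inner ℝ (deriv ξ t) (deriv ξ t) : ℝ) + (inner ℝ (deriv (deriv ξ) t) (ξ t) : ℝ)) t :=
      fun t => HasDerivAt.inner ℝ ((hdξd t).hasDerivAt) ((hξd t).hasDerivAt)
    have hint : IntervalIntegrable
        (fun t => (inner ℝ (deriv ξ t) (deriv ξ t) : ℝ) + (inner ℝ (deriv (deriv ξ) t) (ξ t) : ℝ))
        volume 0 1 :=
      ((cdξ.inner cdξ).add (cddξ.inner cξ)).intervalIntegrable 0 1
    have hFTC := intervalIntegral.integral_eq_sub_of_hasDerivAt
        (f := fun u => (inner ℝ (deriv ξ u) (ξ u) : ℝ)) (fun t _ => hφ t) hint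
    have hdper : deriv ξ 1 = deriv ξ 0 := by
      have h1 : (fun s => ξ (s + 1)) = ξ := funext fun s => hξper s
      have h2 : deriv (fun s => ξ (s + 1)) 0 = deriv ξ (0 + 1) := deriv_comp_add_const ξ 1 0
      rw [h1] at h2
      simpa using h2.symm
    have hper1 : ξ 1 = ξ 0 := by simpa using hξper 0
    have hb : (inner ℝ (deriv ξ 1) (ξ 1) : ℝ) - (inner ℝ (deriv ξ 0) (ξ 0) : ℝ) = 0 := by
      rw [hdper, hper1, sub_self]
    replace hFTC : (∫ t in (0:ℝ)..1, ((inner ℝ (deriv ξ t) (deriv ξ t) : ℝ)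
        + (inner ℝ (deriv (deriv ξ) t) (ξ t) : ℝ))) = 0 := hFTC.trans hb
    have hsplit : (∫ t in (0:ℝ)..1, ((inner ℝ (deriv ξ t) (deriv ξ t) : ℝ)
        + (inner ℝ (deriv (deriv ξ) t) (ξ t) : ℝ)))
        = (∫ t in (0:ℝ)..1, (inner ℝ (deriv ξ t) (deriv ξ t) : ℝ))
          + ∫ t in (0:ℝ)..1, (inner ℝ (deriv (deriv ξ) t) (ξ t) : ℝ) :=
      intervalIntegral.integral_add
        ((cdξ.inner cdξ).intervalIntegrable 0 1) ((cddξ.inner cξ).intervalIntegrable 0 1)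
    rw [hsplit] at hFTC
    have hni : (∫ t in (0:ℝ)..1, (inner ℝ (deriv ξ t) (deriv ξ t) : ℝ)) = P := by
      rw [hPdef]
      exact intervalIntegral.integral_congr fun t _ => real_inner_self_eq_norm_sq _
    rw [hni] at hFTC
    linarith
  -- the Coulomb-gauge identity : S = M + P
  have hSid : S = M + P := by
    have hFdiff : Differentiable ℝ (fun t' =>
        Lstar (z t') (zh t') - Lstar (z t') (Lz (z t') (ξ t')) + deriv (deriv ξ) t') :=
      ((hGzh.sub hGL).add hddξ).differentiable (by simp)
    have hFconst : ∀ t, (fun t' =>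
        Lstar (z t') (zh t') - Lstar (z t') (Lz (z t') (ξ t')) + deriv (deriv ξ) t') t
        = (fun t' =>
        Lstar (z t') (zh t') - Lstar (z t') (Lz (z t') (ξ t')) + deriv (deriv ξ) t') 0 :=
      fun t => is_const_of_deriv_eq_zero hFdiff hcoulomb t 0
    set F0 : EuclideanSpace ℝ (Fin k) :=
      Lstar (z 0) (zh 0) - Lstar (z 0) (Lz (z 0) (ξ 0)) + deriv (deriv ξ) 0 with hF0
    -- ∫ ⟪F t, ξ t⟫ = 0
    have hzero : (∫ t in (0:ℝ)..1,
        (inner ℝ (Lstar (z t) (zh t) - Lstar (z t) (Lz (z t) (ξ t)) + deriv (deriv ξ) t)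
          (ξ t) : ℝ)) = 0 := by
      have h1 : (∫ t in (0:ℝ)..1,
          (inner ℝ (Lstar (z t) (zh t) - Lstar (z t) (Lz (z t) (ξ t)) + deriv (deriv ξ) t)
            (ξ t) : ℝ)) = ∫ t in (0:ℝ)..1, (inner ℝ F0 (ξ t) : ℝ) := by
        refine intervalIntegral.integral_congr fun t _ => ?_
        rw [show (Lstar (z t) (zh t) - Lstar (z t) (Lz (z t) (ξ t)) + deriv (deriv ξ) t)
            = F0 from hFconst t]
      rw [h1]
      have h2 : (∫ t in (0:ℝ)..1, (inner ℝ F0 (ξ t) : ℝ)) = (inner ℝ F0 (∫ t in (0:ℝ)..1, ξ t) : ℝ) := by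
        simpa using (ContinuousLinearMap.intervalIntegral_comp_comm (innerSL ℝ F0)
          (cξ.intervalIntegrable 0 1))
      rw [h2, hmean, inner_zero_right]
    -- pointwise decomposition
    have hpt : ∀ t, (inner ℝ (Lstar (z t) (zh t) - Lstar (z t) (Lz (z t) (ξ t)) + deriv (deriv ξ) t)
        (ξ t) : ℝ)
        = ((inner ℂ (Lz (z t) (ξ t)) (zh t) : ℂ).re - ‖Lz (z t) (ξ t)‖^2)
          + (inner ℝ (deriv (deriv ξ) t) (ξ t) : ℝ) := by
      intro t
      rw [inner_add_left, inner_sub_left, hadj, hadj]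
      congr 2
      rw [← RCLike.re_to_complex]
      exact inner_self_eq_norm_sq _
    have hsplit : (∫ t in (0:ℝ)..1,
        (inner ℝ (Lstar (z t) (zh t) - Lstar (z t) (Lz (z t) (ξ t)) + deriv (deriv ξ) t)
          (ξ t) : ℝ))
        = ((∫ t in (0:ℝ)..1, (inner ℂ (Lz (z t) (ξ t)) (zh t) : ℂ).re)
            - ∫ t in (0:ℝ)..1, ‖Lz (z t) (ξ t)‖^2)
          + ∫ t in (0:ℝ)..1, (inner ℝ (deriv (deriv ξ) t) (ξ t) : ℝ) := by
      rw [intervalIntegral.integral_congr (g := fun t =>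
        ((inner ℂ (Lz (z t) (ξ t)) (zh t) : ℂ).re - ‖Lz (z t) (ξ t)‖^2)
          + (inner ℝ (deriv (deriv ξ) t) (ξ t) : ℝ)) (fun t _ => hpt t)]
      rw [intervalIntegral.integral_add (iSi.sub iL2) idd,
        intervalIntegral.integral_sub iSi iL2]
    rw [hsplit, hIBP] at hzero
    rw [hSdef, hMdef]
    linarith
  -- quadratic inequality : ∀ lam, 0 ≤ N - 2 lam S + lam² M
  have hquad : ∀ lam : ℝ, 0 ≤ N - 2*lam*S + lam^2*M := by
    intro lam
    have h0 : (0:ℝ) ≤ ∫ t in (0:ℝ)..1, ‖zh t - lam • Lz (z t) (ξ t)‖^2 :=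
      intervalIntegral.integral_nonneg zero_le_one (fun u _ => by positivity)
    have h1 : (∫ t in (0:ℝ)..1, ‖zh t - lam • Lz (z t) (ξ t)‖^2)
        = (∫ t in (0:ℝ)..1, (‖zh t‖^2 - 2*lam*(inner ℂ (Lz (z t) (ξ t)) (zh t) : ℂ).re)
            + lam^2 * ‖Lz (z t) (ξ t)‖^2) := by
      refine intervalIntegral.integral_congr fun t _ => ?_
      rw [hexp lam (zh t) (Lz (z t) (ξ t))]; try ring
    have h2 : (∫ t in (0:ℝ)..1, (‖zh t‖^2 - 2*lam*(inner ℂ (Lz (z t) (ξ t)) (zh t) : ℂ).re)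
            + lam^2 * ‖Lz (z t) (ξ t)‖^2)
        = ((∫ t in (0:ℝ)..1, ‖zh t‖^2)
            - 2*lam*∫ t in (0:ℝ)..1, (inner ℂ (Lz (z t) (ξ t)) (zh t) : ℂ).re)
          + lam^2 * ∫ t in (0:ℝ)..1, ‖Lz (z t) (ξ t)‖^2 := by
      rw [intervalIntegral.integral_add (izh2.sub (iSi.const_mul (2*lam))) (iL2.const_mul (lam^2)),
        intervalIntegral.integral_sub izh2 (iSi.const_mul (2*lam)),
        intervalIntegral.integral_const_mul, intervalIntegral.integral_const_mul]
    rw [h1, h2] at h0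
    rw [hNdef, hSdef, hMdef]
    linarith
  -- expansion of the g₁-norm integrand at lam = 1
  have hsplit1 : (∫ t in (0:ℝ)..1, ‖zh t - Lz (z t) (ξ t)‖^2) = N - 2*S + M := by
    have h1 : (∫ t in (0:ℝ)..1, ‖zh t - Lz (z t) (ξ t)‖^2)
        = (∫ t in (0:ℝ)..1, (‖zh t‖^2 - 2*(inner ℂ (Lz (z t) (ξ t)) (zh t) : ℂ).re)
            + ‖Lz (z t) (ξ t)‖^2) := by
      refine intervalIntegral.integral_congr fun t _ => ?_
      have := hexp 1 (zh t) (Lz (z t) (ξ t))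
      rw [one_smul] at this
      rw [this]; ring
    rw [h1, intervalIntegral.integral_add (izh2.sub (iSi.const_mul 2)) iL2,
      intervalIntegral.integral_sub izh2 (iSi.const_mul 2),
      intervalIntegral.integral_const_mul, hNdef, hSdef, hMdef]
    try ring
  -- sup bound for ξ and M ≤ c₀² Q P
  have hsup : ∀ t ∈ Set.Icc (0:ℝ) 1, ‖ξ t‖^2 ≤ P := by
    have hi_nd : IntervalIntegrable (fun s => ‖deriv ξ s‖) volume 0 1 :=
      cdξ.norm.intervalIntegrable 0 1
    have hi_nd2 : IntervalIntegrable (fun s => ‖deriv ξ s‖^2) volume 0 1 :=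
      (cdξ.norm.pow 2).intervalIntegrable 0 1
    set I1 : ℝ := ∫ s in (0:ℝ)..1, ‖deriv ξ s‖ with hI1
    have hI1nn : 0 ≤ I1 :=
      intervalIntegral.integral_nonneg zero_le_one (fun u _ => norm_nonneg _)
    have step1 : ∀ t ∈ Set.Icc (0:ℝ) 1, ‖ξ t‖ ≤ I1 := by
      intro t ht
      have hrep : ξ t = ∫ s in (0:ℝ)..1, (ξ t - ξ s) := by
        rw [intervalIntegral.integral_sub (intervalIntegrable_const) (cξ.intervalIntegrable 0 1),
          intervalIntegral.integral_const, hmean]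
        simp
      have hptwise : ∀ s ∈ Set.Icc (0:ℝ) 1, ‖ξ t - ξ s‖ ≤ I1 := by
        intro s hs
        have hftc : ∫ u in s..t, deriv ξ u = ξ t - ξ s :=
          intervalIntegral.integral_deriv_eq_sub (fun u _ => hξd u)
            (cdξ.intervalIntegrable s t)
        rw [← hftc]
        refine le_trans (intervalIntegral.norm_integral_le_abs_integral_norm) ?_
        have hsub : Set.uIoc s t ⊆ Set.uIoc (0:ℝ) 1 := by
          rw [Set.uIoc_of_le (zero_le_one' ℝ), Set.uIoc]
          exact Set.Ioc_subset_Ioc (le_inf hs.1 ht.1) (sup_le hs.2 ht.2)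
        have habs := intervalIntegral.abs_integral_mono_interval hsub
          (Filter.Eventually.of_forall (fun x => norm_nonneg _)) hi_nd
        calc |∫ u in s..t, ‖deriv ξ u‖| ≤ |I1| := habs
          _ = I1 := abs_of_nonneg hI1nn
      calc ‖ξ t‖ = ‖∫ s in (0:ℝ)..1, (ξ t - ξ s)‖ := by rw [← hrep]
        _ ≤ ∫ s in (0:ℝ)..1, ‖ξ t - ξ s‖ :=
            intervalIntegral.norm_integral_le_integral_norm zero_le_one
        _ ≤ ∫ s in (0:ℝ)..1, I1 :=
            intervalIntegral.integral_mono_on zero_le_one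
              ((continuous_const.sub cξ).norm.intervalIntegrable 0 1)
              intervalIntegrable_const hptwise
        _ = I1 := by simp
    have step2 : I1^2 ≤ P := by
      have hnn : (0:ℝ) ≤ ∫ s in (0:ℝ)..1, (‖deriv ξ s‖ - I1)^2 :=
        intervalIntegral.integral_nonneg zero_le_one (fun u _ => sq_nonneg _)
      rw [intervalIntegral.integral_congr (g := fun s => ‖deriv ξ s‖^2 - 2*I1*‖deriv ξ s‖ + I1^2)
          (fun s _ => by ring)] at hnn
      rw [intervalIntegral.integral_add (hi_nd2.sub ((hi_nd.const_mul (2*I1))))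
          intervalIntegrable_const,
        intervalIntegral.integral_sub hi_nd2 (hi_nd.const_mul (2*I1)),
        intervalIntegral.integral_const_mul, intervalIntegral.integral_const] at hnn
      simp only [smul_eq_mul] at hnn
      rw [hPdef]
      nlinarith [hnn]
    intro t ht
    calc ‖ξ t‖^2 ≤ I1^2 := by nlinarith [step1 t ht, norm_nonneg (ξ t), hI1nn]
      _ ≤ P := step2
  have hMQP : M ≤ c₀^2 * Q * P := by
    have hpt : ∀ t ∈ Set.Icc (0:ℝ) 1, ‖Lz (z t) (ξ t)‖^2 ≤ (c₀^2 * P) * ‖z t‖^2 := by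
      intro t ht
      have h1 := hbound (z t) (ξ t)
      have h2 := hsup t ht
      have h3 : ‖Lz (z t) (ξ t)‖^2 ≤ (c₀*‖z t‖*‖ξ t‖)^2 :=
        pow_le_pow_left₀ (norm_nonneg _) h1 2
      have h4 : (c₀*‖z t‖*‖ξ t‖)^2 = (c₀^2*‖z t‖^2)*(‖ξ t‖^2) := by ring
      have h5 : (c₀^2*‖z t‖^2)*(‖ξ t‖^2) ≤ (c₀^2*‖z t‖^2)*P :=
        mul_le_mul_of_nonneg_left h2 (by positivity)
      calc ‖Lz (z t) (ξ t)‖^2 ≤ (c₀*‖z t‖*‖ξ t‖)^2 := h3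
        _ = (c₀^2*‖z t‖^2)*(‖ξ t‖^2) := h4
        _ ≤ (c₀^2*‖z t‖^2)*P := h5
        _ = (c₀^2 * P) * ‖z t‖^2 := by ring
    have hmono := intervalIntegral.integral_mono_on zero_le_one iL2
      (iz2.const_mul (c₀^2 * P)) hpt
    rw [intervalIntegral.integral_const_mul] at hmono
    rw [hMdef]
    calc (∫ t in (0:ℝ)..1, ‖Lz (z t) (ξ t)‖^2) ≤ (c₀^2 * P) * Q := hmono
      _ = c₀^2 * Q * P := by ring
  -- final algebra
  have hQc : 0 ≤ c₀^2 * Q := mul_nonneg (sq_nonneg c₀) hQ0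
  have hd : (0:ℝ) < c₀^2 * Q + 1 := by linarith
  rw [hsplit1, div_mul_eq_mul_div, div_le_iff₀ hd]
  exact stmt5_alg (c₀^2*Q) N M P S (‖ηh‖^2) hQc hN0 hM0 hP0 hη0 hSid hMQP hquad
end

section
/- Let M be a manifold with geodesically complete metric g, X a tame vector field on M with compact set K, constant ε > 0 and Lyapunov function F. Then every flow line y: ℝ → M of ∂_s y = X(y) with nonempty ω-limit sets at both ends satisfies d(y(s), K) ≤ 2m/ε for all s, where m = sup_{x∈K}|F(x)|. Consequently the set S_X of traces of such flow lines is contained in the compact set K' = {x : d(x,K) ≤ 2m/ε}, and S_X is compact. -/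
/-!
Along a flow line `y` the Lyapunov function `F` decreases, and outside `K` it drops at least at
`ε` times the speed. Hence `ε · d(y s, K)` is bounded by the drop of `F` from time `s` to the
first later visit of `K`; if there is none, `y` converges, necessarily to a zero of `X`, which
lies in `K`. Forward ω-limit points lie in `K`, so `ε · d(y s, K) ≤ F (y s) + m`, and the same
argument for the reversed flow line of `-X` with Lyapunov function `-F` gives
`ε · d(y s, K) ≤ m - F (y s)`; thus `d(y s, K) ≤ m / ε`.

For compactness, the flow lines inside a compact set `L` are cut out of `L ^ ℝ` by first-order
Taylor estimates at pairs of times, which are closed conditions in the product topology, so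
by Tychonoff they form a compact set; `S_X` is its image under evaluation at `0`.
-/

open Filter Metric Set Topology

section Antitone

variable {α β : Type*} [Preorder α] [LinearOrder β] [TopologicalSpace β] [OrderTopology β]
  {g : α → β} {L : β}

theorem Antitone.le_of_mapClusterPt_atTop (hg : Antitone g) (hL : MapClusterPt L atTop g)
    (t : α) : L ≤ g t :=
  isClosed_Iic.mem_of_mapClusterPt hL ((eventually_ge_atTop t).mono fun _ hu => hg hu)

theorem Antitone.tendsto_atTop_of_mapClusterPt (hg : Antitone g)
    (hL : MapClusterPt L atTop g) : Tendsto g atTop (𝓝 L) := by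
  refine tendsto_order.2 ⟨fun a ha => Eventually.of_forall fun t =>
    ha.trans_le (hg.le_of_mapClusterPt_atTop hL t), fun b hb => ?_⟩
  obtain ⟨u, hu⟩ := (hL.frequently (Iio_mem_nhds hb)).exists
  filter_upwards [eventually_ge_atTop u] with t ht using (hg ht).trans_lt hu

end Antitone

variable {E : Type*} [NormedAddCommGroup E] [NormedSpace ℝ E]

def IsFlowLine (X : E → E) (y : ℝ → E) : Prop :=
  ∀ s, HasDerivAt y (X (y s)) s

namespace IsFlowLine

variable {X : E → E} {y : ℝ → E}

theorem continuous (hy : IsFlowLine X y) : Continuous y :=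
  continuous_iff_continuousAt.2 fun s => (hy s).continuousAt

theorem comp_add_const (hy : IsFlowLine X y) (σ : ℝ) : IsFlowLine X fun t => y (t + σ) :=
  fun s => (hy (s + σ)).comp_add_const s σ

theorem comp_neg (hy : IsFlowLine X y) : IsFlowLine (-X) fun t => y (-t) := by
  intro s
  simpa [Function.comp_def] using (hy (-s)).scomp s (hasDerivAt_neg s)

theorem hasDerivAt_comp {F : E → ℝ} (hy : IsFlowLine X y) (hF : Differentiable ℝ F) (s : ℝ) :
    HasDerivAt (fun t => F (y t)) (fderiv ℝ F (y s) (X (y s))) s :=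
  (hF (y s)).hasFDerivAt.comp_hasDerivAt s (hy s)

theorem eq_zero_of_tendsto_atTop (hX : Continuous X) (hy : IsFlowLine X y) {p : E}
    (hp : Tendsto y atTop (𝓝 p)) : X p = 0 := by
  have h_zero : Tendsto (fun t => y (t + 1) - y t) atTop (𝓝 0) := by
    simpa using (hp.comp (tendsto_atTop_add_const_right _ 1 tendsto_id)).sub hp
  -- by the mean value theorem for `u ↦ y u - u • X p`, since `X ∘ y` tends to `X p`
  have h_Xp : Tendsto (fun t => y (t + 1) - y t) atTop (𝓝 (X p)) := by
    refine Metric.tendsto_nhds.2 fun δ hδ => ?_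
    obtain ⟨T, hT⟩ := eventually_atTop.1 <|
      Metric.tendsto_nhds.1 ((hX.tendsto p).comp hp) (δ / 2) (half_pos hδ)
    filter_upwards [eventually_ge_atTop T] with t ht
    have hmvt := norm_image_sub_le_of_norm_deriv_le_segment' (a := t) (b := t + 1) (C := δ / 2)
      (f := fun u => y u - u • X p) (f' := fun u => X (y u) - X p)
      (fun u _ => by
        simpa using ((hy u).fun_sub ((hasDerivAt_id u).smul_const (X p))).hasDerivWithinAt)
      (fun u hu => by rw [← dist_eq_norm]; exact (hT u (ht.trans hu.1)).le)
      (t + 1) ⟨by linarith, le_rfl⟩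
    rw [dist_eq_norm]
    calc ‖y (t + 1) - y t - X p‖ = ‖y (t + 1) - (t + 1) • X p - (y t - t • X p)‖ := by
          congr 1; rw [add_smul, one_smul]; abel
      _ ≤ δ / 2 * (t + 1 - t) := hmvt
      _ < δ := by linarith
  exact tendsto_nhds_unique h_Xp h_zero

end IsFlowLine

/-- Conditions (i)–(iii) of tameness, with Lyapunov function `F`. -/
structure IsTame (X : E → E) (F : E → ℝ) (K : Set E) (ε : ℝ) : Prop where
  mem_of_eq_zero : ∀ x, X x = 0 → x ∈ K
  fderiv_nonpos : ∀ x, fderiv ℝ F x (X x) ≤ 0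
  fderiv_le : ∀ x ∉ K, fderiv ℝ F x (X x) ≤ -ε * ‖X x‖

namespace IsTame

variable {X : E → E} {F : E → ℝ} {K : Set E} {ε : ℝ} {y : ℝ → E}

theorem neg (hT : IsTame X F K ε) : IsTame (-X) (-F) K ε where
  mem_of_eq_zero x hx := hT.mem_of_eq_zero x (neg_eq_zero.1 hx)
  fderiv_nonpos x := by simpa [fderiv_neg] using hT.fderiv_nonpos x
  fderiv_le x hx := by simpa [fderiv_neg] using hT.fderiv_le x hx

theorem antitone_comp (hT : IsTame X F K ε) (hF : Differentiable ℝ F) (hy : IsFlowLine X y) :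
    Antitone fun t => F (y t) :=
  antitone_of_deriv_nonpos (fun s => (hy.hasDerivAt_comp hF s).differentiableAt) fun s => by
    rw [(hy.hasDerivAt_comp hF s).deriv]
    exact hT.fderiv_nonpos _

theorem mul_norm_sub_le (hT : IsTame X F K ε) (hF : Differentiable ℝ F) (hε : 0 < ε)
    (hy : IsFlowLine X y) {a b : ℝ} (hab : a ≤ b) (hout : ∀ t ∈ Ico a b, y t ∉ K) :
    ε * ‖y b - y a‖ ≤ F (y a) - F (y b) := by
  have h := image_norm_le_of_norm_deriv_right_le_deriv_boundary
    (f := fun t => y t - y a) (f' := fun t => X (y t))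
    (B := fun t => (F (y a) - F (y t)) / ε) (B' := fun t => -fderiv ℝ F (y t) (X (y t)) / ε)
    (hy.continuous.sub continuous_const).continuousOn
    (fun t _ => ((hy t).sub_const (y a)).hasDerivWithinAt) (by simp)
    (fun t => by simpa using ((hy.hasDerivAt_comp hF t).const_sub (F (y a))).div_const ε)
    (fun t ht => by rw [le_div_iff₀ hε]; linarith [hT.fderiv_le _ (hout t ht)])
    ⟨hab, le_rfl⟩
  rwa [le_div_iff₀' hε] at h

theorem tendsto_atTop_of_eventually_notMem (hT : IsTame X F K ε) (hF : Differentiable ℝ F)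
    (hε : 0 < ε) (hy : IsFlowLine X y) {p : E} (hp : MapClusterPt p atTop y)
    (hout : ∀ᶠ t in atTop, y t ∉ K) : Tendsto y atTop (𝓝 p) := by
  obtain ⟨t₀, hout⟩ := eventually_atTop.1 hout
  have hanti := hT.antitone_comp hF hy
  have hFp := hp.continuousAt_comp hF.continuous.continuousAt
  refine Metric.tendsto_nhds.2 fun η hη => ?_
  have hF_late : ∀ᶠ t in atTop, F (y t) < F p + ε * (η / 2) :=
    (hanti.tendsto_atTop_of_mapClusterPt hFp).eventually
      (gt_mem_nhds (lt_add_of_pos_right _ (by positivity)))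
  obtain ⟨a, ha_near, ha_F, ha⟩ := ((hp.frequently (ball_mem_nhds p (half_pos hη))).and_eventually
    (hF_late.and (eventually_ge_atTop t₀))).exists
  filter_upwards [eventually_ge_atTop a] with b hb
  have h_drop := hT.mul_norm_sub_le hF hε hy hb fun t ht => hout t (ha.trans ht.1)
  have h_step : ‖y b - y a‖ < η / 2 := by
    refine (mul_lt_mul_iff_right₀ hε).1 ?_
    linarith [hanti.le_of_mapClusterPt_atTop hFp b]
  calc dist (y b) p ≤ dist (y b) (y a) + dist (y a) p := dist_triangle _ _ _
    _ < η := by rw [dist_eq_norm]; linarith [mem_ball.1 ha_near]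

theorem mul_infDist_le_sub (hT : IsTame X F K ε) (hX : Continuous X) (hF : Differentiable ℝ F)
    (hε : 0 < ε) (hK : IsClosed K) (hy : IsFlowLine X y) {p : E} (hp : MapClusterPt p atTop y)
    (s : ℝ) : ε * infDist (y s) K ≤ F (y s) - F p := by
  have hFp_le := (hT.antitone_comp hF hy).le_of_mapClusterPt_atTop
    (hp.continuousAt_comp hF.continuous.continuousAt)
  by_cases hhit : ∃ u, s ≤ u ∧ y u ∈ K
  · set S := {u | s ≤ u ∧ y u ∈ K}
    have hS : BddBelow S := ⟨s, fun u hu => hu.1⟩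
    have hu₀ : sInf S ∈ S := (isClosed_Ici.inter (hK.preimage hy.continuous)).csInf_mem hhit hS
    have hout : ∀ t ∈ Ico s (sInf S), y t ∉ K := fun t ht htK =>
      (csInf_le hS ⟨ht.1, htK⟩).not_gt ht.2
    calc ε * infDist (y s) K ≤ ε * ‖y (sInf S) - y s‖ := by
          gcongr; exact (infDist_le_dist_of_mem hu₀.2).trans_eq (dist_eq_norm' _ _)
      _ ≤ F (y s) - F (y (sInf S)) := hT.mul_norm_sub_le hF hε hy hu₀.1 hout
      _ ≤ F (y s) - F p := by linarith [hFp_le (sInf S)]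
  · simp only [not_exists, not_and] at hhit
    have hlim := hT.tendsto_atTop_of_eventually_notMem hF hε hy hp (eventually_atTop.2 ⟨s, hhit⟩)
    have hpK : p ∈ K := hT.mem_of_eq_zero p (hy.eq_zero_of_tendsto_atTop hX hlim)
    have hbound : ∀ᶠ b in atTop, ε * ‖y b - y s‖ ≤ F (y s) - F p := by
      filter_upwards [eventually_ge_atTop s] with b hb
      linarith [hT.mul_norm_sub_le hF hε hy hb fun t ht => hhit t ht.1, hFp_le b]
    calc ε * infDist (y s) K ≤ ε * ‖p - y s‖ := by
          gcongr; exact (infDist_le_dist_of_mem hpK).trans_eq (dist_eq_norm' _ _)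
      _ ≤ F (y s) - F p := le_of_tendsto ((hlim.sub_const (y s)).norm.const_mul ε) hbound

theorem mem_of_mapClusterPt_atTop (hT : IsTame X F K ε) (hX : Continuous X)
    (hF : Differentiable ℝ F) (hε : 0 < ε) (hK : IsClosed K) (hy : IsFlowLine X y) {p : E}
    (hp : MapClusterPt p atTop y) : p ∈ K := by
  rcases K.eq_empty_or_nonempty with rfl | hne
  · exact hT.mem_of_eq_zero p <| hy.eq_zero_of_tendsto_atTop hX <|
      hT.tendsto_atTop_of_eventually_notMem hF hε hy hp (.of_forall fun t => notMem_empty _)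
  have hp_le : ε * infDist p K ≤ F p - F p :=
    (isClosed_le (f := fun x => ε * infDist x K) (g := fun x => F x - F p)
      (by fun_prop) (hF.continuous.sub continuous_const)).mem_of_mapClusterPt hp
      (Eventually.of_forall (hT.mul_infDist_le_sub hX hF hε hK hy hp))
  refine (hK.mem_iff_infDist_zero hne).2 (le_antisymm ?_ infDist_nonneg)
  nlinarith

theorem mul_infDist_le_add (hT : IsTame X F K ε) (hX : Continuous X) (hF : Differentiable ℝ F)
    (hε : 0 < ε) (hK : IsClosed K) {m : ℝ} (hm : ∀ x ∈ K, |F x| ≤ m) (hy : IsFlowLine X y)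
    {p : E} (hp : MapClusterPt p atTop y) (s : ℝ) : ε * infDist (y s) K ≤ F (y s) + m := by
  linarith [hT.mul_infDist_le_sub hX hF hε hK hy hp s,
    (abs_le.1 (hm p (hT.mem_of_mapClusterPt_atTop hX hF hε hK hy hp))).1]

theorem infDist_le_div (hT : IsTame X F K ε) (hX : Continuous X) (hF : Differentiable ℝ F)
    (hε : 0 < ε) (hK : IsClosed K) {m : ℝ} (hm : ∀ x ∈ K, |F x| ≤ m) (hy : IsFlowLine X y)
    {p q : E} (hp : MapClusterPt p atTop y) (hq : MapClusterPt q atBot y) (s : ℝ) :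
    infDist (y s) K ≤ m / ε := by
  have hq' : MapClusterPt q atTop fun t => y (-t) := by
    rwa [MapClusterPt, ← Function.comp_def, ← map_map, map_neg_atTop]
  have h_bwd := hT.neg.mul_infDist_le_add hX.neg hF.neg hε hK (by simpa using hm) hy.comp_neg
    hq' (-s)
  simp only [neg_neg, Pi.neg_apply] at h_bwd
  rw [le_div_iff₀' hε]
  linarith [hT.mul_infDist_le_add hX hF hε hK hm hy hp s]

end IsTame

section Compactness

variable {X : E → E} {y : ℝ → E} {L : Set E} {C : ℝ}

theorem IsFlowLine.norm_sub_sub_smul_le (hy : IsFlowLine X y) (hyL : ∀ t, y t ∈ L)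
    (hC : ∀ x ∈ L, ‖X x‖ ≤ C) {a b δ : ℝ}
    (hδ : ∀ u ∈ L, ∀ v ∈ L, dist u v ≤ C * |b - a| → ‖X u - X v‖ ≤ δ) :
    ‖y b - y a - (b - a) • X (y a)‖ ≤ δ * |b - a| := by
  have hC₀ : 0 ≤ C := (norm_nonneg _).trans (hC _ (hyL a))
  have hlip : ∀ t, dist (y t) (y a) ≤ C * |t - a| := fun t => by
    simpa [dist_eq_norm, Real.norm_eq_abs] using
      convex_univ.norm_image_sub_le_of_norm_hasDerivWithin_le
        (fun u _ => (hy u).hasDerivWithinAt) (fun u _ => hC _ (hyL u)) (mem_univ a) (mem_univ t)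
  have hmvt := (convex_uIcc a b).norm_image_sub_le_of_norm_hasDerivWithin_le
    (f := fun t => y t - t • X (y a)) (f' := fun t => X (y t) - X (y a))
    (fun t _ => by
      simpa using ((hy t).fun_sub ((hasDerivAt_id t).smul_const (X (y a)))).hasDerivWithinAt)
    (fun t ht => hδ _ (hyL t) _ (hyL a)
      ((hlip t).trans (mul_le_mul_of_nonneg_left (abs_sub_left_of_mem_uIcc ht) hC₀)))
    left_mem_uIcc right_mem_uIcc
  calc ‖y b - y a - (b - a) • X (y a)‖ = ‖y b - b • X (y a) - (y a - a • X (y a))‖ := by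
        congr 1; rw [sub_smul]; abel
    _ ≤ δ * |b - a| := by simpa [Real.norm_eq_abs] using hmvt

theorem isFlowLine_of_norm_sub_sub_smul_le (hX : UniformContinuousOn X L)
    (h : ∀ a b δ : ℝ, (∀ u ∈ L, ∀ v ∈ L, dist u v ≤ C * |b - a| → ‖X u - X v‖ ≤ δ) →
      ‖y b - y a - (b - a) • X (y a)‖ ≤ δ * |b - a|) :
    IsFlowLine X y := by
  intro s
  rw [hasDerivAt_iff_isLittleO, Asymptotics.isLittleO_iff]
  intro c hc
  obtain ⟨η, hη, hXη⟩ := Metric.uniformContinuousOn_iff.1 hX c hc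
  have hnear : ∀ᶠ b in 𝓝 s, C * |b - s| < η :=
    ((continuous_const.mul (continuous_id.sub continuous_const).abs).tendsto' s 0
      (by simp)).eventually (gt_mem_nhds hη)
  filter_upwards [hnear] with b hb
  rw [Real.norm_eq_abs]
  exact h s b c fun u hu v hv huv => by
    rw [← dist_eq_norm]; exact (hXη u hu v hv (huv.trans_lt hb)).le

theorem isCompact_setOf_isFlowLine_forall_mem (hX : Continuous X) (hL : IsCompact L) :
    IsCompact {y : ℝ → E | IsFlowLine X y ∧ ∀ t, y t ∈ L} := by
  obtain ⟨C, hC⟩ := hL.exists_bound_of_continuousOn hX.continuousOn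
  -- each condition involves finitely many coordinates, so the set is closed in the product topology
  have heq : {y : ℝ → E | IsFlowLine X y ∧ ∀ t, y t ∈ L} = {y | (∀ t, y t ∈ L) ∧
      ∀ a b δ : ℝ, (∀ u ∈ L, ∀ v ∈ L, dist u v ≤ C * |b - a| → ‖X u - X v‖ ≤ δ) →
        ‖y b - y a - (b - a) • X (y a)‖ ≤ δ * |b - a|} := by
    ext y
    exact ⟨fun ⟨hy, hyL⟩ => ⟨hyL, fun _ _ _ hδ => hy.norm_sub_sub_smul_le hyL hC hδ⟩,
      fun ⟨hyL, h⟩ => ⟨isFlowLine_of_norm_sub_sub_smul_le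
        (hL.uniformContinuousOn_of_continuous hX.continuousOn) h, hyL⟩⟩
  rw [heq]
  refine (isCompact_univ_pi fun _ => hL).of_isClosed_subset ?_ fun y hy => mem_univ_pi.2 hy.1
  simp only [ofPred_and, ofPred_forall]
  exact (isClosed_iInter fun t => hL.isClosed.preimage (continuous_apply t)).inter
    (isClosed_iInter fun a => isClosed_iInter fun b => isClosed_iInter fun δ =>
      isClosed_iInter fun _ => isClosed_le (by fun_prop) continuous_const)

end Compactness

/-- The set `S_X` of the paper. -/
def flowLineTraces (X : E → E) : Set E :=
  {p | ∃ y : ℝ → E, IsFlowLine X y ∧ (∃ p', MapClusterPt p' atTop y) ∧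
    (∃ q, MapClusterPt q atBot y) ∧ ∃ σ : ℝ, y σ = p}

namespace IsTame

variable {X : E → E} {F : E → ℝ} {K : Set E} {ε m : ℝ}

theorem flowLineTraces_subset_image (hT : IsTame X F K ε) (hX : Continuous X)
    (hF : Differentiable ℝ F) (hε : 0 < ε) (hK : IsClosed K) (hm : ∀ x ∈ K, |F x| ≤ m) :
    flowLineTraces X ⊆
      (fun y => y 0) '' {y | IsFlowLine X y ∧ ∀ t, y t ∈ cthickening (m / ε) K} := by
  rintro _ ⟨y, hy, ⟨p, hp⟩, ⟨q, hq⟩, σ, rfl⟩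
  have hK_ne : K.Nonempty := ⟨p, hT.mem_of_mapClusterPt_atTop hX hF hε hK hy hp⟩
  refine ⟨fun t => y (t + σ), ⟨hy.comp_add_const σ, fun t => ?_⟩, by simp⟩
  rw [mem_cthickening_iff, ← ENNReal.ofReal_toReal (infEDist_ne_top hK_ne)]
  exact ENNReal.ofReal_le_ofReal (hT.infDist_le_div hX hF hε hK hm hy hp hq (t + σ))

theorem isCompact_flowLineTraces [ProperSpace E] (hT : IsTame X F K ε) (hX : Continuous X)
    (hF : Differentiable ℝ F) (hε : 0 < ε) (hK : IsCompact K) (hm : ∀ x ∈ K, |F x| ≤ m) :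
    IsCompact (flowLineTraces X) := by
  have hL : IsCompact (cthickening (m / ε) K) := hK.cthickening
  convert (isCompact_setOf_isFlowLine_forall_mem hX hL).image (continuous_apply 0) using 1
  refine (hT.flowLineTraces_subset_image hX hF hε hK.isClosed hm).antisymm ?_
  rintro _ ⟨y, ⟨hy, hyL⟩, rfl⟩
  have hy_mem (l : Filter ℝ) : Tendsto y l (𝓟 (cthickening (m / ε) K)) :=
    tendsto_principal.2 (.of_forall hyL)
  obtain ⟨p, -, hp⟩ := hL.exists_mapClusterPt (hy_mem atTop)
  obtain ⟨q, -, hq⟩ := hL.exists_mapClusterPt (hy_mem atBot)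
  exact ⟨y, hy, ⟨p, hp⟩, ⟨q, hq⟩, 0, rfl⟩

end IsTame

/-- for a tame vector field `X` (with compact set `K`, constant `ε > 0` and
Lyapunov function `F`), every flow line with nonempty ω-limit sets at both ends stays
within distance `2m/ε` of `K`, where `m` bounds `|F|` on `K`; consequently the set `S_X`
of traces of such flow lines is compact. -/
theorem stmt8 (d : ℕ) (X : EuclideanSpace ℝ (Fin d) → EuclideanSpace ℝ (Fin d))
    (hX : Continuous X)
    (F : EuclideanSpace ℝ (Fin d) → ℝ) (hF : Differentiable ℝ F)
    (K : Set (EuclideanSpace ℝ (Fin d))) (hK : IsCompact K)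
    (ε m : ℝ) (hε : 0 < ε)
    (hzero : ∀ x, X x = 0 → x ∈ K)
    (hlyap : ∀ x, fderiv ℝ F x (X x) ≤ 0)
    (hps : ∀ x ∉ K, fderiv ℝ F x (X x) ≤ -ε * ‖X x‖)
    (hm : ∀ x ∈ K, |F x| ≤ m) :
    (∀ y : ℝ → EuclideanSpace ℝ (Fin d), (∀ s, HasDerivAt y (X (y s)) s) →
      (∃ p, MapClusterPt p Filter.atTop y) → (∃ q, MapClusterPt q Filter.atBot y) →
      ∀ s, Metric.infDist (y s) K ≤ 2 * m / ε) ∧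
    ({p | ∃ y : ℝ → EuclideanSpace ℝ (Fin d), (∀ s, HasDerivAt y (X (y s)) s) ∧
        (∃ p', MapClusterPt p' Filter.atTop y) ∧ (∃ q, MapClusterPt q Filter.atBot y) ∧
        ∃ σ : ℝ, y σ = p}
      ⊆ {x | Metric.infDist x K ≤ 2 * m / ε}) ∧
    IsCompact {p | ∃ y : ℝ → EuclideanSpace ℝ (Fin d), (∀ s, HasDerivAt y (X (y s)) s) ∧
        (∃ p', MapClusterPt p' Filter.atTop y) ∧ (∃ q, MapClusterPt q Filter.atBot y) ∧
        ∃ σ : ℝ, y σ = p} := by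
  have hT : IsTame X F K ε := ⟨hzero, hlyap, hps⟩
  have hbound : ∀ y, IsFlowLine X y → (∃ p, MapClusterPt p atTop y) →
      (∃ q, MapClusterPt q atBot y) → ∀ s, infDist (y s) K ≤ 2 * m / ε := by
    rintro y hy ⟨p, hp⟩ ⟨q, hq⟩ s
    have h := hT.infDist_le_div hX hF hε hK.isClosed hm hy hp hq s
    have hm₀ : 0 ≤ m / ε := infDist_nonneg.trans h
    linarith [mul_div_assoc 2 m ε]
  refine ⟨hbound, ?_, hT.isCompact_flowLineTraces hX hF hε hK hm⟩
  rintro _ ⟨y, hy, hp, hq, σ, rfl⟩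
  exact hbound y hy hp hq σ
end

section
/- Let (M,g) be a geodesically complete Riemannian manifold, f ∈ C^∞(M,ℝ) and h ∈ C^∞(M,ℝᵏ) with h proper and 0 a regular value of h. For r ∈ [0,1] set F_r(x,λ) = r f(x) + ⟨λ, h(x)⟩ on M × ℝᵏ with the product metric. Then there exist a compact set K ⊂ M × ℝᵏ and ε > 0 such that ‖∇F_r(x,λ)‖ > ε for all r ∈ [0,1] and all (x,λ) ∉ K. Explicitly one may take K = {(x,λ): x ∈ h⁻¹(B_ε), ‖λ‖ ≤ (c+ε)/δ} where δ = min over h⁻¹(B_ε) of min_{‖λ‖=1}‖Σλ_i∇h_i(x)‖ > 0 and c = max over h⁻¹(B_ε) of ‖∇f(x)‖. -/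
open Filter InnerProductSpace

section aux

variable {E : Type*} [NormedAddCommGroup E] [InnerProductSpace ℝ E] [CompleteSpace E]

lemma grad_cont (f : E → ℝ) (hf : ContDiff ℝ (⊤ : ℕ∞) f) : Continuous (gradient f) :=
  (toDual ℝ E).symm.continuous.comp (hf.continuous_fderiv (by simp))

lemma inner_grad (f : E → ℝ) (x v : E) : ⟪gradient f x, v⟫_ℝ = fderiv ℝ f x v :=
  toDual_symm_apply

end aux

/-- for `F_r(x,λ) = r f(x) + ⟨λ, h(x)⟩` with `h` proper and `0` a regular
value of `h`, there are a compact set `K` and `ε > 0` such that `‖∇F_r(x,λ)‖ > ε` for all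
`r ∈ [0,1]` and `(x,λ) ∉ K` (tameness of the family). -/
theorem stmt9 (d k : ℕ) (f : EuclideanSpace ℝ (Fin d) → ℝ)
    (h : EuclideanSpace ℝ (Fin d) → EuclideanSpace ℝ (Fin k))
    (hf : ContDiff ℝ (⊤ : ℕ∞) f) (hh : ContDiff ℝ (⊤ : ℕ∞) h)
    (hproper : Tendsto h (cocompact _) (cocompact _))
    (hreg : ∀ x, h x = 0 → Function.Surjective (fderiv ℝ h x)) :
    ∃ (K : Set (EuclideanSpace ℝ (Fin d) × EuclideanSpace ℝ (Fin k))) (ε : ℝ),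
      IsCompact K ∧ 0 < ε ∧
      ∀ r ∈ Set.Icc (0:ℝ) 1, ∀ x lam, (x, lam) ∉ K →
        ε^2 < ‖r • gradient f x + ∑ i, lam i • gradient (fun y => h y i) x‖^2 +
          ‖h x‖^2 := by
  classical
  have hcomp : ∀ (i : Fin k) x, fderiv ℝ (fun y => h y i) x
      = (EuclideanSpace.proj (𝕜 := ℝ) i).comp (fderiv ℝ h x) := by
    intro i x
    have h1 : HasFDerivAt (fun y => h y i)
        ((EuclideanSpace.proj (𝕜 := ℝ) i).comp (fderiv ℝ h x)) x :=
      ((EuclideanSpace.proj (𝕜 := ℝ) i).hasFDerivAt).comp x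
        (hh.differentiable (by simp) x).hasFDerivAt
    exact h1.fderiv
  have hgi_cont : ∀ i : Fin k, Continuous fun x => gradient (fun y => h y i) x := fun i =>
    grad_cont _ ((EuclideanSpace.proj (𝕜 := ℝ) i).contDiff.comp hh)
  -- Φ x u = ∑ u i • ∇hᵢ(x)
  set Φ : EuclideanSpace ℝ (Fin d) → EuclideanSpace ℝ (Fin k) → EuclideanSpace ℝ (Fin d) :=
    fun x u => ∑ i, u i • gradient (fun y => h y i) x with hΦ
  have hΦcont : Continuous fun p : EuclideanSpace ℝ (Fin d) × EuclideanSpace ℝ (Fin k) =>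
      Φ p.1 p.2 := by
    apply continuous_finset_sum
    intro i _
    exact ((continuous_apply i).comp ((PiLp.continuous_ofLp 2 _).comp continuous_snd)).smul ((hgi_cont i).comp continuous_fst)
  have hΦsmul : ∀ x (c : ℝ) u, Φ x (c • u) = c • Φ x u := by
    intro x c u
    simp only [hΦ, Finset.smul_sum, smul_smul]
    exact Finset.sum_congr rfl fun i _ => by rw [PiLp.smul_apply, smul_eq_mul]
  have hinner : ∀ x u v, ⟪Φ x u, v⟫_ℝ = ⟪u, fderiv ℝ h x v⟫_ℝ := by
    intro x u v
    simp only [hΦ, sum_inner, inner_smul_left, RCLike.conj_to_real]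
    rw [PiLp.inner_apply]
    refine Finset.sum_congr rfl fun i _ => ?_
    rw [inner_grad, hcomp]
    simp [RCLike.inner_apply]
    ring
  -- Φ x u ≠ 0 at regular points with u unit
  have hΦne : ∀ x u, h x = 0 → ‖u‖ = 1 → Φ x u ≠ 0 := by
    intro x u hx0 hu hcon
    obtain ⟨v, hv⟩ := hreg x hx0 u
    have h2 := hinner x u v
    rw [hcon, inner_zero_left, hv, real_inner_self_eq_norm_sq, hu] at h2
    norm_num at h2
  -- the compact set S = h⁻¹(closed ball 1)
  set S : Set (EuclideanSpace ℝ (Fin d)) := h ⁻¹' Metric.closedBall 0 1 with hSdef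
  have hS : IsCompact S := by
    have : IsProperMap h := isProperMap_iff_tendsto_cocompact.2 ⟨hh.continuous, hproper⟩
    exact this.isCompact_preimage (isCompact_closedBall 0 1)
  -- positive lower bound δ for ψ on S × sphere
  set ψ : EuclideanSpace ℝ (Fin d) × EuclideanSpace ℝ (Fin k) → ℝ :=
    fun p => ‖Φ p.1 p.2‖^2 + ‖h p.1‖^2 with hψ
  have hψcont : Continuous ψ :=
    (hΦcont.norm.pow 2).add (((hh.continuous.comp continuous_fst).norm).pow 2)
  have hC : IsCompact (S ×ˢ Metric.sphere (0 : EuclideanSpace ℝ (Fin k)) 1) :=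
    hS.prod (isCompact_sphere 0 1)
  have hψpos : ∀ p ∈ S ×ˢ Metric.sphere (0 : EuclideanSpace ℝ (Fin k)) 1, 0 < ψ p := by
    rintro ⟨x, u⟩ ⟨hx, hu⟩
    rcases eq_or_ne (h x) 0 with hx0 | hx0
    · have hne : Φ x u ≠ 0 := hΦne x u hx0 (by simpa using hu)
      have h1 : 0 < ‖Φ x u‖^2 := pow_pos (norm_pos_iff.2 hne) 2
      have h2 : (0:ℝ) ≤ ‖h x‖^2 := by positivity
      simpa [hψ] using add_pos_of_pos_of_nonneg h1 h2
    · have h1 : (0:ℝ) ≤ ‖Φ x u‖^2 := by positivity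
      have h2 : 0 < ‖h x‖^2 := pow_pos (norm_pos_iff.2 hx0) 2
      simpa [hψ] using add_pos_of_nonneg_of_pos h1 h2
  obtain ⟨δ, hδpos, hδ⟩ : ∃ δ > 0,
      ∀ p ∈ S ×ˢ Metric.sphere (0 : EuclideanSpace ℝ (Fin k)) 1, δ ≤ ψ p := by
    rcases (S ×ˢ Metric.sphere (0 : EuclideanSpace ℝ (Fin k)) 1).eq_empty_or_nonempty with he | hne
    · exact ⟨1, one_pos, by simp [he]⟩
    · obtain ⟨p, hp, hpmin⟩ := hC.exists_isMinOn hne hψcont.continuousOn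
      exact ⟨ψ p, hψpos p hp, fun q hq => hpmin hq⟩
  -- bound c for ‖∇f‖ on S
  obtain ⟨c, hc0, hc⟩ : ∃ c ≥ 0, ∀ x ∈ S, ‖gradient f x‖ ≤ c := by
    rcases S.eq_empty_or_nonempty with he | hne
    · exact ⟨0, le_refl 0, by simp [he]⟩
    · obtain ⟨x, hx, hxmax⟩ := hS.exists_isMaxOn hne (grad_cont f hf).norm.continuousOn
      exact ⟨‖gradient f x‖, norm_nonneg _, fun y hy => hxmax hy⟩
  -- define constants
  set s : ℝ := Real.sqrt (δ/2) with hs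
  have hspos : 0 < s := Real.sqrt_pos.2 (by linarith)
  have hs2 : s^2 = δ/2 := Real.sq_sqrt (by linarith)
  set R : ℝ := (c+1)/s with hR
  have hRpos : 0 < R := by positivity
  set ε : ℝ := Real.sqrt (min 1 (δ/2)) / 2 with hε
  have hεpos : 0 < ε := by
    have : (0:ℝ) < min 1 (δ/2) := lt_min one_pos (by linarith)
    positivity
  have hε2 : ε^2 < min 1 (δ/2) := by
    have hm : (0:ℝ) < min 1 (δ/2) := lt_min one_pos (by linarith)
    rw [hε, div_pow, Real.sq_sqrt hm.le]
    linarith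
  refine ⟨S ×ˢ Metric.closedBall (0 : EuclideanSpace ℝ (Fin k)) R, ε,
    hS.prod (isCompact_closedBall 0 R), hεpos, ?_⟩
  rintro r ⟨hr0, hr1⟩ x lam hK
  show ε^2 < ‖r • gradient f x + Φ x lam‖^2 + ‖h x‖^2
  clear_value Φ ψ S s R ε
  have hεlt1 : ε^2 < 1 := lt_of_lt_of_le hε2 (min_le_left _ _)
  have hεltδ : ε^2 < δ/2 := lt_of_lt_of_le hε2 (min_le_right _ _)
  by_cases hxS : x ∈ S
  · -- then ‖lam‖ > R
    have hlam : R < ‖lam‖ := by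
      by_contra hcon
      push_neg at hcon
      exact hK ⟨hxS, by simpa [Metric.mem_closedBall, dist_zero_right] using hcon⟩
    have hlampos : 0 < ‖lam‖ := lt_trans hRpos hlam
    set u : EuclideanSpace ℝ (Fin k) := ‖lam‖⁻¹ • lam with hu
    have hunorm : ‖u‖ = 1 := by
      rw [hu, norm_smul, norm_inv, norm_norm, inv_mul_cancel₀ hlampos.ne']
    have huS : (x, u) ∈ S ×ˢ Metric.sphere (0 : EuclideanSpace ℝ (Fin k)) 1 :=
      ⟨hxS, by simpa using hunorm⟩
    have hδle := hδ _ huS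
    simp only [hψ] at hδle
    have hlamu : Φ x lam = ‖lam‖ • Φ x u := by
      rw [hu, hΦsmul, smul_smul, mul_inv_cancel₀ hlampos.ne', one_smul]
    by_cases hhx : δ/2 ≤ ‖h x‖^2
    · have h1 : (0:ℝ) ≤ ‖r • gradient f x + Φ x lam‖^2 := by positivity
      linarith
    · push_neg at hhx
      have hΦu : s < ‖Φ x u‖ := by
        have h2 : s^2 < ‖Φ x u‖^2 := by rw [hs2]; linarith
        exact lt_of_pow_lt_pow_left₀ 2 (norm_nonneg _) h2
      have hΦlam : c + 1 < ‖Φ x lam‖ := by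
        rw [hlamu, norm_smul, norm_norm]
        calc c + 1 = R * s := by rw [hR]; field_simp
          _ < ‖lam‖ * ‖Φ x u‖ := mul_lt_mul' hlam.le hΦu hspos.le hlampos
      have hrf : ‖r • gradient f x‖ ≤ c := by
        rw [norm_smul, Real.norm_eq_abs, abs_of_nonneg hr0]
        calc r * ‖gradient f x‖ ≤ 1 * c :=
            mul_le_mul hr1 (hc x hxS) (norm_nonneg _) one_pos.le
          _ = c := one_mul c
      have htri : 1 < ‖r • gradient f x + Φ x lam‖ := by
        have h3 := norm_add_le (-(r • gradient f x)) (r • gradient f x + Φ x lam)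
        simp only [neg_add_cancel_left, norm_neg] at h3
        linarith
      have h1 : 1 < ‖r • gradient f x + Φ x lam‖^2 := by nlinarith
      have h2 : (0:ℝ) ≤ ‖h x‖^2 := by positivity
      linarith
  · -- x ∉ S: ‖h x‖ > 1
    have hhx : 1 < ‖h x‖ := by
      by_contra hcon
      push_neg at hcon
      exact hxS (by simpa [hSdef, Metric.mem_closedBall, dist_zero_right] using hcon)
    have h1 : (1:ℝ) < ‖h x‖^2 := by nlinarith
    have h2 : (0:ℝ) ≤ ‖r • gradient f x + Φ x lam‖^2 := by positivity
    linarith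
end

section
/- Let h ∈ C^∞(M,ℝᵏ) have 0 as a regular value and set F₀(x,λ) = ⟨λ,h(x)⟩ on M × ℝᵏ with product metric. Then the critical set of F₀ is C = {(x,0) : h(x)=0}, and at each (x,0) ∈ C the Hessian of F₀ has rank 2k, equal to the codimension of C in M × ℝᵏ; hence C is a Morse–Bott critical submanifold. -/
set_option maxHeartbeats 1000000

open scoped RealInnerProductSpace

section Aux

open ContinuousLinearMap Module

variable {d k : ℕ}
local notation "E'" => EuclideanSpace ℝ (Fin d)
local notation "F'" => EuclideanSpace ℝ (Fin k)

theorem stmt10_aux1 (h : E' → F') (hh : Differentiable ℝ h) (p : E' × F') :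
    HasFDerivAt (fun q : E' × F' => ⟪q.2, h q.1⟫)
      ((innerSL ℝ (h p.1)).comp (ContinuousLinearMap.snd ℝ E' F')
        + ((innerSL ℝ p.2).comp (fderiv ℝ h p.1)).comp (ContinuousLinearMap.fst ℝ E' F')) p := by
  have hf : HasFDerivAt (fun q : E' × F' => q.2) (ContinuousLinearMap.snd ℝ E' F') p :=
    hasFDerivAt_snd
  have hg : HasFDerivAt (fun q : E' × F' => h q.1)
      ((fderiv ℝ h p.1).comp (ContinuousLinearMap.fst ℝ E' F')) p :=
    ((hh p.1).hasFDerivAt).comp p hasFDerivAt_fst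
  have := hf.inner ℝ hg
  refine this.congr_fderiv ?_
  refine ContinuousLinearMap.ext fun w => ?_
  simp [fderivInnerCLM_apply, real_inner_comm, mul_comm, add_comm]

theorem stmt10_hess (h : E' → F')
    (hh : ContDiff ℝ (⊤ : ℕ∞) h) (hreg : ∀ x, h x = 0 → Function.Surjective (fderiv ℝ h x))
    (Dfun : E' × F' → (E' × F' →L[ℝ] ℝ))
    (hDfun : Dfun = fun p => (innerSL ℝ (h p.1)).comp (ContinuousLinearMap.snd ℝ E' F')
        + ((innerSL ℝ p.2).comp (fderiv ℝ h p.1)).comp (ContinuousLinearMap.fst ℝ E' F'))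
    (x : E') (hx : h x = 0) :
    LinearMap.rank (ContinuousLinearMap.toLinearMap
        (fderiv ℝ Dfun (x, 0))) = ((2 * k : ℕ) : Cardinal) := by
  have hdiff : Differentiable ℝ h := hh.differentiable (by simp)
  have hdiff2 : Differentiable ℝ (fderiv ℝ h) :=
    ((contDiff_infty_iff_fderiv.mp (hh.of_le (by simp))).2).differentiable (by simp)
  set dh := fderiv ℝ h x with hdh
  set c1 : (F' →L[ℝ] ℝ) →L[ℝ] (E' × F' →L[ℝ] ℝ) :=
    (ContinuousLinearMap.compL ℝ (E' × F') F' ℝ).flip (ContinuousLinearMap.snd ℝ E' F') with hc1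
  set c2 : (E' →L[ℝ] ℝ) →L[ℝ] (E' × F' →L[ℝ] ℝ) :=
    (ContinuousLinearMap.compL ℝ (E' × F') E' ℝ).flip (ContinuousLinearMap.fst ℝ E' F') with hc2
  have hA1 : HasFDerivAt (fun p : E' × F' => c1 (innerSL ℝ (h p.1)))
      ((c1.comp (innerSL ℝ)).comp (dh.comp (ContinuousLinearMap.fst ℝ E' F'))) (x, 0) := by
    have : HasFDerivAt (fun p : E' × F' => h p.1)
        (dh.comp (ContinuousLinearMap.fst ℝ E' F')) (x, 0) :=
      ((hdiff x).hasFDerivAt).comp _ hasFDerivAt_fst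
    exact (c1.comp (innerSL ℝ)).hasFDerivAt.comp _ this
  have hc : HasFDerivAt (fun p : E' × F' => innerSL ℝ p.2)
      ((innerSL ℝ (E := F')).comp (ContinuousLinearMap.snd ℝ E' F')) (x, (0:F')) :=
    (innerSL ℝ (E := F')).hasFDerivAt.comp _ hasFDerivAt_snd
  have hd : HasFDerivAt (fun p : E' × F' => fderiv ℝ h p.1)
      ((fderiv ℝ (fderiv ℝ h) x).comp (ContinuousLinearMap.fst ℝ E' F')) (x, (0:F')) :=
    ((hdiff2 x).hasFDerivAt).comp _ hasFDerivAt_fst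
  have hB := hc.clm_comp hd
  have hA2 : HasFDerivAt (fun y : E' × F' => c2 ((innerSL ℝ y.2).comp (fderiv ℝ h y.1)))
      _ (x, (0:F')) :=
    c2.hasFDerivAt.comp _ hB
  have hD := hA1.add hA2
  have hfun : Dfun = fun p : E' × F' => c1 (innerSL ℝ (h p.1))
      + c2 ((innerSL ℝ p.2).comp (fderiv ℝ h p.1)) := by
    rw [hDfun]
    funext p
    simp [hc1, hc2]
  rw [hfun]
  have hHapp : ∀ (v : E') (ν : F') (u : E') (μ : F'),
      (fderiv ℝ (fun p : E' × F' => c1 (innerSL ℝ (h p.1))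
        + c2 ((innerSL ℝ p.2).comp (fderiv ℝ h p.1))) (x, 0)) (v, ν) (u, μ)
        = ⟪dh v, μ⟫ + ⟪ν, dh u⟫ := by
    intro v ν u μ
    rw [(show HasFDerivAt (fun p : E' × F' => c1 (innerSL ℝ (h p.1))
        + c2 ((innerSL ℝ p.2).comp (fderiv ℝ h p.1))) _ (x, 0) from hD).fderiv]
    simp only [ContinuousLinearMap.add_apply, ContinuousLinearMap.coe_comp',
      Function.comp_apply, ContinuousLinearMap.flip_apply, ContinuousLinearMap.compL_apply,
      ContinuousLinearMap.coe_fst', ContinuousLinearMap.coe_snd', innerSL_apply_apply, hc1, hc2, hdh]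
    simp
  set Hm := fderiv ℝ (fun p : E' × F' => c1 (innerSL ℝ (h p.1))
        + c2 ((innerSL ℝ p.2).comp (fderiv ℝ h p.1))) (x, 0) with hHm
  have hker : ∀ w : E' × F', Hm.toLinearMap w = 0 ↔ dh.toLinearMap w.1 = 0 ∧ w.2 = 0 := by
    intro w
    constructor
    · intro hw
      have hw' : Hm w = 0 := hw
      constructor
      · have e1 := hHapp w.1 w.2 0 (dh w.1)
        rw [Prod.mk.eta, hw'] at e1
        simp only [ContinuousLinearMap.zero_apply, map_zero, inner_zero_right, add_zero] at e1
        exact inner_self_eq_zero.mp e1.symm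
      · obtain ⟨u, hu⟩ := hreg x hx w.2
        have e2 := hHapp w.1 w.2 u 0
        rw [Prod.mk.eta, hw'] at e2
        rw [show fderiv ℝ h x u = w.2 from hu] at e2
        simp only [ContinuousLinearMap.zero_apply, inner_zero_right, zero_add] at e2
        exact inner_self_eq_zero.mp e2.symm
    · rintro ⟨h1, h2⟩
      have h1' : dh w.1 = 0 := h1
      refine ContinuousLinearMap.ext fun z => ?_
      have := hHapp w.1 w.2 z.1 z.2
      rw [Prod.mk.eta, Prod.mk.eta] at this
      rw [show (Hm.toLinearMap w : E' × F' →L[ℝ] ℝ) = Hm w from rfl]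
      rw [this, h1', h2]
      simp
  let J : LinearMap.ker dh.toLinearMap →ₗ[ℝ] LinearMap.ker Hm.toLinearMap :=
    LinearMap.codRestrict _ ((LinearMap.inl ℝ E' F').comp (Submodule.subtype _))
      (fun c => (hker _).mpr ⟨c.2, rfl⟩)
  have hJinj : Function.Injective J := by
    intro a b hab
    have := congrArg (fun z : LinearMap.ker Hm.toLinearMap => (z : E' × F').1) hab
    exact Subtype.ext this
  have hJsurj : Function.Surjective J := by
    rintro ⟨w, hw⟩
    obtain ⟨h1, h2⟩ := (hker w).mp hw
    refine ⟨⟨w.1, h1⟩, Subtype.ext ?_⟩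
    show ((w.1 : E'), (0 : F')) = w
    rw [← h2]
  have e := LinearEquiv.ofBijective J ⟨hJinj, hJsurj⟩
  have hk1 : finrank ℝ (LinearMap.ker Hm.toLinearMap) = finrank ℝ (LinearMap.ker dh.toLinearMap) :=
    e.finrank_eq.symm
  have hk2 := LinearMap.finrank_range_add_finrank_ker dh.toLinearMap
  have hk3 := LinearMap.finrank_range_add_finrank_ker Hm.toLinearMap
  have hr : LinearMap.range dh.toLinearMap = ⊤ := LinearMap.range_eq_top.mpr (hreg x hx)
  rw [hr, finrank_top, finrank_euclideanSpace_fin, finrank_euclideanSpace_fin] at hk2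
  rw [Module.finrank_prod, finrank_euclideanSpace_fin, finrank_euclideanSpace_fin] at hk3
  rw [LinearMap.rank, ← Module.finrank_eq_rank]
  norm_cast
  omega

end Aux

/-- for `F₀(x,λ) = ⟨λ, h(x)⟩` with `0` a regular value of `h`, the critical
set of `F₀` is `C = {(x,0) : h(x) = 0}`, and at each point of `C` the Hessian of `F₀`
has rank `2k` (the codimension of `C`), so `C` is Morse–Bott. -/
theorem stmt10 (d k : ℕ) (h : EuclideanSpace ℝ (Fin d) → EuclideanSpace ℝ (Fin k))
    (hh : ContDiff ℝ (⊤ : ℕ∞) h) (hreg : ∀ x, h x = 0 → Function.Surjective (fderiv ℝ h x))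
    (F₀ : EuclideanSpace ℝ (Fin d) × EuclideanSpace ℝ (Fin k) → ℝ)
    (hF₀ : ∀ p, F₀ p = ⟪p.2, h p.1⟫) :
    {p | fderiv ℝ F₀ p = 0} = {p | h p.1 = 0 ∧ p.2 = 0} ∧
    ∀ x, h x = 0 →
      LinearMap.rank (ContinuousLinearMap.toLinearMap
        (fderiv ℝ (fun p => fderiv ℝ F₀ p) (x, 0))) = ((2 * k : ℕ) : Cardinal) := by
  have hdiff : Differentiable ℝ h := hh.differentiable (by simp)
  have hF₀' : F₀ = fun q : _ × _ => ⟪q.2, h q.1⟫ := funext hF₀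
  have hDF : ∀ p : EuclideanSpace ℝ (Fin d) × EuclideanSpace ℝ (Fin k), fderiv ℝ F₀ p =
      (innerSL ℝ (h p.1)).comp (ContinuousLinearMap.snd ℝ _ _)
        + ((innerSL ℝ p.2).comp (fderiv ℝ h p.1)).comp (ContinuousLinearMap.fst ℝ _ _) := by
    intro p
    rw [hF₀']
    exact (stmt10_aux1 h hdiff p).fderiv
  constructor
  · ext p
    simp only [Set.mem_setOf_eq]
    constructor
    · intro hp
      rw [hDF] at hp
      have h1 : h p.1 = 0 := by
        have h0 := congrArg
          (fun L : EuclideanSpace ℝ (Fin d) × EuclideanSpace ℝ (Fin k) →L[ℝ] ℝ =>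
            L (0, h p.1)) hp
        have h0' : ⟪h p.1, h p.1⟫ = (0:ℝ) := by simpa using h0
        exact inner_self_eq_zero.mp h0'
      refine ⟨h1, ?_⟩
      obtain ⟨u, hu⟩ := hreg p.1 h1 p.2
      have h0 := congrArg
        (fun L : EuclideanSpace ℝ (Fin d) × EuclideanSpace ℝ (Fin k) →L[ℝ] ℝ =>
          L (u, 0)) hp
      have h0' : ⟪p.2, (fderiv ℝ h p.1) u⟫ = (0:ℝ) := by simpa [h1] using h0
      rw [hu] at h0'
      exact inner_self_eq_zero.mp h0'
    · rintro ⟨h1, h2⟩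
      rw [hDF]
      refine ContinuousLinearMap.ext fun w => ?_
      simp [h1, h2]
  · intro x hx
    exact stmt10_hess h hh hreg (fun p => fderiv ℝ F₀ p) (funext hDF) x hx
end

section
/- Let u: ℝ × S¹ → ℂⁿ be smooth with ∫_{ℝ×S¹} ‖∂_t u + L_u η‖² dt ds < ∞ (finite energy), and suppose there exist R > 0 and δ > 0 and disjoint intervals [σ_i, σ^i] with Σ(σ^i − σ_i) = ∞ such that for each s in these intervals there exist t_s, t'_s ∈ S¹ with ‖u(s,t'_s)‖ ≤ R and ‖u(s,t_s)‖ ≥ R + δ. Then this leads to a contradiction: δ²Σ(σ^i−σ_i) ≤ ∫∫‖∂_t u + L_uη‖² dtds < ∞. Hence such a configuration is impossible, i.e. finite energy forbids the loop u(s,·) from persistently connecting the ball of radius R to the sphere of radius R+δ on a set of s of infinite measure. -/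
open Filter MeasureTheory Set
open scoped RealInnerProductSpace

lemma norm_hasDerivAt {F : Type*} [NormedAddCommGroup F] [InnerProductSpace ℝ F]
    {v : ℝ → F} {v' : F} {t : ℝ} (hv : HasDerivAt v v' t) (h0 : v t ≠ 0) :
    HasDerivAt (fun t => ‖v t‖) (⟪v t, v'⟫ / ‖v t‖) t := by
  have hn : ‖v t‖ ≠ 0 := norm_ne_zero_iff.2 h0
  have hq : HasDerivAt (fun t => ‖v t‖ ^ 2) (2 * ⟪v t, v'⟫) t := hv.norm_sq
  have hsq := (Real.hasDerivAt_sqrt (x := ‖v t‖ ^ 2) (by positivity)).comp t hq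
  have heq : (fun t => Real.sqrt (‖v t‖ ^ 2)) = fun t => ‖v t‖ := by
    funext x; exact Real.sqrt_sq (norm_nonneg _)
  rw [show ((fun x => Real.sqrt x) ∘ fun t => ‖v t‖ ^ 2) = fun t => ‖v t‖ from heq] at hsq
  refine hsq.congr_deriv ?_
  rw [Real.sqrt_sq (norm_nonneg _)]
  field_simp

lemma exists_cross_aux {g : ℝ → ℝ} (hg : Continuous g) {x y R δ : ℝ}
    (hxy : x ≤ y) (hgx : g x ≤ R) (hgy : R + δ ≤ g y) (hδ : 0 < δ) :
    ∃ a b, x ≤ a ∧ a < b ∧ b ≤ y ∧ g a = R ∧ g b = R + δ ∧ ∀ t ∈ Icc a b, R ≤ g t := by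
  set T : Set ℝ := Icc x y ∩ g ⁻¹' Ici (R + δ) with hT
  have hTc : IsClosed T := isClosed_Icc.inter (isClosed_Ici.preimage hg)
  have hTne : T.Nonempty := ⟨y, ⟨hxy, le_refl _⟩, hgy⟩
  have hTbdd : BddBelow T := ⟨x, fun t ht => ht.1.1⟩
  set b := sInf T with hb
  have hbT : b ∈ T := hTc.csInf_mem hTne hTbdd
  have hxb : x < b := by
    rcases lt_or_eq_of_le hbT.1.1 with h | h
    · exact h
    · exfalso; rw [← h] at hbT
      exact absurd hbT.2 (by simp only [mem_preimage, mem_Ici, not_le]; linarith)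
  have hlow : ∀ t ∈ Ico x b, g t < R + δ := by
    intro t ht
    by_contra h
    exact absurd (csInf_le hTbdd ⟨⟨ht.1, le_trans (le_of_lt ht.2) hbT.1.2⟩,
      mem_preimage.2 (mem_Ici.2 (not_lt.1 h))⟩) (not_le.2 ht.2)
  have hgb : g b = R + δ := by
    refine le_antisymm ?_ hbT.2
    by_contra h
    push_neg at h
    have hev : ∀ᶠ t in nhds b, R + δ < g t :=
      (hg.continuousAt (x := b)).eventually_const_lt h
    have hmem : Ioo x b ∈ nhdsWithin b (Iio b) := Ioo_mem_nhdsLT_of_mem ⟨hxb, le_refl b⟩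
    have := ((hev.filter_mono nhdsWithin_le_nhds).and
      (eventually_of_mem hmem (fun t ht => ht))).exists
    obtain ⟨t, ht1, ht2⟩ := this
    exact absurd ht1 (not_lt.2 (le_of_lt (hlow t ⟨le_of_lt ht2.1, ht2.2⟩)))
  set S : Set ℝ := Icc x b ∩ g ⁻¹' Iic R with hS
  have hSc : IsClosed S := isClosed_Icc.inter (isClosed_Iic.preimage hg)
  have hSne : S.Nonempty := ⟨x, ⟨le_refl _, le_of_lt hxb⟩, hgx⟩
  have hSbdd : BddAbove S := ⟨b, fun t ht => ht.1.2⟩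
  set a := sSup S with ha
  have haS : a ∈ S := hSc.csSup_mem hSne hSbdd
  have hab : a < b := by
    rcases lt_or_eq_of_le haS.1.2 with h | h
    · exact h
    · exfalso
      have hle : g b ≤ R := by rw [← h]; exact haS.2
      linarith [hgb, hδ]
  have hhigh : ∀ t ∈ Ioc a b, R < g t := by
    intro t ht
    by_contra h
    exact absurd (le_csSup hSbdd ⟨⟨le_trans haS.1.1 (le_of_lt ht.1), ht.2⟩,
      mem_preimage.2 (mem_Iic.2 (not_lt.1 h))⟩) (not_le.2 ht.1)
  have hga : g a = R := by
    refine le_antisymm haS.2 ?_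
    by_contra h
    push_neg at h
    have hev : ∀ᶠ t in nhds a, g t < R := (hg.continuousAt (x := a)).eventually_lt_const h
    have hmem : Ioo a b ∈ nhdsWithin a (Ioi a) := Ioo_mem_nhdsGT_of_mem ⟨le_refl a, hab⟩
    obtain ⟨t, ht1, ht2⟩ := ((hev.filter_mono nhdsWithin_le_nhds).and
      (eventually_of_mem hmem (fun t ht => ht))).exists
    exact absurd ht1 (not_lt.2 (le_of_lt (hhigh t ⟨ht2.1, le_of_lt ht2.2⟩)))
  refine ⟨a, b, haS.1.1, hab, hbT.1.2, hga, hgb, ?_⟩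
  intro t ht
  rcases eq_or_lt_of_le ht.1 with h | h
  · rw [← h, hga]
  · exact le_of_lt (hhigh t ⟨h, ht.2⟩)

lemma exists_cross {g : ℝ → ℝ} (hg : Continuous g) {x y R δ : ℝ}
    (hx : x ∈ Icc (0:ℝ) 1) (hy : y ∈ Icc (0:ℝ) 1)
    (hgx : g x ≤ R) (hgy : R + δ ≤ g y) (hδ : 0 < δ) :
    ∃ a b, 0 ≤ a ∧ a < b ∧ b ≤ 1 ∧ (∀ t ∈ Icc a b, R ≤ g t) ∧ |g b - g a| = δ := by
  rcases le_total x y with hxy | hyx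
  · obtain ⟨a, b, h1, h2, h3, h4, h5, h6⟩ := exists_cross_aux hg hxy hgx hgy hδ
    exact ⟨a, b, le_trans hx.1 h1, h2, le_trans h3 hy.2, h6,
      by rw [h4, h5]; simp [abs_of_nonneg (le_of_lt hδ)]⟩
  · obtain ⟨a', b', h1, h2, h3, h4, h5, h6⟩ :=
      exists_cross_aux (g := fun t => g (-t)) (hg.comp continuous_neg)
        (x := -x) (y := -y) (by linarith) (by simpa using hgx) (by simpa using hgy) hδ
    refine ⟨-b', -a', by linarith [hy.1], by linarith, by linarith [hx.2], ?_, ?_⟩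
    · intro t ht
      have : -t ∈ Icc a' b' := ⟨by linarith [ht.2], by linarith [ht.1]⟩
      simpa using h6 (-t) this
    · rw [h4, h5]
      rw [abs_of_nonpos (by linarith)]
      ring

lemma sq_intervalIntegral_le {f : ℝ → ℝ} (hf : Continuous f) :
    (∫ t in (0:ℝ)..1, f t)^2 ≤ ∫ t in (0:ℝ)..1, (f t)^2 := by
  rw [intervalIntegral.integral_of_le zero_le_one, intervalIntegral.integral_of_le zero_le_one]
  set μ := volume.restrict (Ioc (0:ℝ) 1) with hμ
  haveI : IsProbabilityMeasure μ := ⟨by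
    rw [hμ, Measure.restrict_apply_univ, Real.volume_Ioc]
    norm_num⟩
  have hint : Integrable f μ := hf.integrableOn_Ioc
  have hint2 : Integrable (fun t => (f t)^2) μ := (hf.pow 2).integrableOn_Ioc
  set c := ∫ t, f t ∂μ with hc
  have h0 : 0 ≤ ∫ t, (f t - c)^2 ∂μ := integral_nonneg (fun t => sq_nonneg _)
  have hexp : ∫ t, (f t - c)^2 ∂μ = (∫ t, (f t)^2 ∂μ) - c^2 := by
    have he : (fun t => (f t - c)^2) = fun t => ((f t)^2 - (2*c) * f t) + c^2 := by
      funext t; ring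
    have hsub : Integrable (fun t => f t ^ 2 - 2 * c * f t) μ := by
      exact hint2.sub (hint.const_mul (2*c))
    rw [he, integral_add hsub (integrable_const _),
      integral_sub hint2 (hint.const_mul (2*c)), MeasureTheory.integral_const_mul, integral_const]
    simp only [probReal_univ, one_smul, ← hc]
    ring
  rw [hexp] at h0
  linarith

lemma key_est {F : Type*} [NormedAddCommGroup F] [InnerProductSpace ℝ F]
    {v : ℝ → F} {φ : ℝ → ℝ} (hv : ContDiff ℝ (⊤ : ℕ∞) v) (hφ : Continuous φ)
    (hφ0 : ∀ t, 0 ≤ φ t)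
    (hbound : ∀ t, |(⟪v t, deriv v t⟫ : ℝ)| ≤ ‖v t‖ * φ t)
    {R δ x y : ℝ} (hR : 0 < R) (hδ : 0 < δ)
    (hx : x ∈ Icc (0:ℝ) 1) (hy : y ∈ Icc (0:ℝ) 1)
    (hvx : ‖v x‖ ≤ R) (hvy : R + δ ≤ ‖v y‖) :
    δ ≤ ∫ t in (0:ℝ)..1, φ t := by
  have hvd : Differentiable ℝ v := hv.differentiable (by simp)
  have hgc : Continuous fun t => ‖v t‖ := hv.continuous.norm
  obtain ⟨a, b, ha0, hab, hb1, hpos, habs⟩ := exists_cross hgc hx hy hvx hvy hδ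
  set p : ℝ → ℝ := fun t => ⟪v t, deriv v t⟫ / ‖v t‖ with hp
  have hne : ∀ t ∈ Icc a b, v t ≠ 0 := by
    intro t ht h
    have := hpos t ht
    rw [h, norm_zero] at this
    linarith
  have hnorm_pos : ∀ t ∈ Icc a b, 0 < ‖v t‖ := fun t ht => lt_of_lt_of_le hR (hpos t ht)
  have hder : ∀ t ∈ uIcc a b, HasDerivAt (fun t => ‖v t‖) (p t) t := by
    intro t ht
    rw [uIcc_of_le hab.le] at ht
    exact norm_hasDerivAt (hvd t).hasDerivAt (hne t ht)
  have hdc : Continuous (deriv v) := hv.continuous_deriv (by simp)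
  have hic : Continuous fun t => (⟪v t, deriv v t⟫ : ℝ) := hv.continuous.inner hdc
  have hpc : ContinuousOn p (uIcc a b) := by
    rw [uIcc_of_le hab.le]
    exact hic.continuousOn.div hgc.continuousOn
      (fun t ht => ne_of_gt (hnorm_pos t ht))
  have hint : IntervalIntegrable p volume a b := hpc.intervalIntegrable
  have hFTC : ∫ t in a..b, p t = ‖v b‖ - ‖v a‖ :=
    intervalIntegral.integral_eq_sub_of_hasDerivAt hder hint
  have hφab : IntervalIntegrable φ volume a b := hφ.intervalIntegrable a b
  have hpt : ∀ t ∈ Icc a b, |p t| ≤ φ t := by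
    intro t ht
    have h1 := hbound t
    have h2 := hnorm_pos t ht
    rw [hp]
    rw [abs_div, abs_of_pos h2, div_le_iff₀ h2]
    calc |(⟪v t, deriv v t⟫ : ℝ)| ≤ ‖v t‖ * φ t := h1
      _ = φ t * ‖v t‖ := by ring
  have hup : ∫ t in a..b, p t ≤ ∫ t in a..b, φ t :=
    intervalIntegral.integral_mono_on hab.le hint hφab
      (fun t ht => le_trans (le_abs_self _) (hpt t ht))
  have hlo : ∫ t in a..b, -φ t ≤ ∫ t in a..b, p t :=
    intervalIntegral.integral_mono_on hab.le hφab.neg hint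
      (fun t ht => neg_le_of_neg_le (by
        have := hpt t ht
        have := neg_abs_le (p t)
        linarith))
  rw [intervalIntegral.integral_neg] at hlo
  have habs2 : |∫ t in a..b, p t| ≤ ∫ t in a..b, φ t := abs_le.2 ⟨by linarith, hup⟩
  rw [hFTC] at habs2
  rw [habs] at habs2
  calc δ ≤ ∫ t in a..b, φ t := habs2
    _ ≤ ∫ t in (0:ℝ)..1, φ t := by
      apply intervalIntegral.integral_mono_interval ha0 hab.le hb1
      · exact Filter.Eventually.of_forall fun t => hφ0 t
      · exact hφ.intervalIntegrable 0 1

/-- finite energy forbids the loops `u(s,·)` from connecting the ball of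
radius `R` to the sphere of radius `R+δ` for `s` in a family of disjoint intervals of
infinite total length: such a configuration yields a contradiction. -/
theorem stmt15 (n k : ℕ) (A : Matrix (Fin n) (Fin k) ℝ)
    (u : ℝ → ℝ → EuclideanSpace ℂ (Fin n)) (η : ℝ → EuclideanSpace ℝ (Fin k))
    (hu : ContDiff ℝ (⊤ : ℕ∞) (fun p : ℝ × ℝ => u p.1 p.2))
    (hper : ∀ s, Function.Periodic (u s) 1)
    (D : ℝ → ℝ → EuclideanSpace ℂ (Fin n))
    (hD : ∀ s t j, D s t j = deriv (fun t' => u s t' j) t +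
      Complex.I * (∑ r, (A j r : ℂ) * (η s r : ℂ)) * u s t j)
    (hE : MeasureTheory.IntegrableOn (fun p : ℝ × ℝ => ‖D p.1 p.2‖^2)
      (Set.univ ×ˢ Set.Icc (0:ℝ) 1))
    (R δ : ℝ) (hR : 0 < R) (hδ : 0 < δ)
    (σ σ' : ℕ → ℝ)
    (hσlt : ∀ i, σ i < σ' i) (hord : ∀ i, σ' i ≤ σ (i+1))
    (hdiv : Tendsto (fun N => ∑ i ∈ Finset.range N, (σ' i - σ i)) atTop atTop)
    (hconn : ∀ i, ∀ s ∈ Set.Icc (σ i) (σ' i),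
      (∃ t' ∈ Set.Icc (0:ℝ) 1, ‖u s t'‖ ≤ R) ∧
      (∃ t ∈ Set.Icc (0:ℝ) 1, R + δ ≤ ‖u s t‖)) :
    False := by
  classical
  letI : InnerProductSpace ℝ (EuclideanSpace ℂ (Fin n)) :=
    InnerProductSpace.rclikeToReal ℂ _
  -- chain of intervals
  have hchain : ∀ i j, i < j → σ' i ≤ σ j := by
    intro i j hij
    induction j with
    | zero => omega
    | succ m ih =>
      rcases Nat.lt_succ_iff_lt_or_eq.1 hij with h | h
      · exact le_trans (ih h) (le_trans (hσlt m).le (hord m))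
      · rw [h]; exact hord m
  -- pointwise lower bound
  have hkey : ∀ i, ∀ s ∈ Set.Icc (σ i) (σ' i),
      δ^2 ≤ ∫ t in Icc (0:ℝ) 1, ‖D s t‖^2 := by
    intro i s hs
    obtain ⟨⟨x, hx, hvx⟩, ⟨y, hy, hvy⟩⟩ := hconn i s hs
    set v : ℝ → EuclideanSpace ℂ (Fin n) := fun t => u s t with hv
    have hvs : ContDiff ℝ (⊤ : ℕ∞) v := hu.comp (contDiff_const.prodMk contDiff_id)
    have hvd : Differentiable ℝ v := hvs.differentiable (by simp)
    set c : Fin n → ℝ := fun j => ∑ r, A j r * η s r with hcdef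
    have hcast : ∀ j, (∑ r, (A j r : ℂ) * (η s r : ℂ)) = ((c j : ℝ) : ℂ) := by
      intro j
      rw [hcdef]
      push_cast
      rfl
    -- component derivative
    have hcomp : ∀ t j, deriv (fun t' => u s t' j) t = deriv v t j := by
      intro t j
      have h1 : HasDerivAt v (deriv v t) t := (hvd t).hasDerivAt
      have h2 := ((EuclideanSpace.proj j).restrictScalars ℝ).hasFDerivAt.comp_hasDerivAt t h1
      exact h2.deriv
    -- rewrite D s in a continuous form
    have hDeq : ∀ t, D s t = deriv v t +
        (WithLp.equiv 2 (Fin n → ℂ)).symm (fun j => Complex.I * ((c j : ℝ) : ℂ) * v t j) := by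
      intro t
      ext j
      have hrhs : (deriv v t +
          (WithLp.equiv 2 (Fin n → ℂ)).symm (fun j => Complex.I * ((c j : ℝ) : ℂ) * v t j)) j
          = deriv v t j + Complex.I * ((c j : ℝ) : ℂ) * v t j := rfl
      rw [hrhs, hD s t j, hcomp t j, hcast j]
    have hDc : Continuous fun t => D s t := by
      have h1 : Continuous (deriv v) := hvs.continuous_deriv (by simp)
      have h2 : Continuous fun t =>
          (WithLp.equiv 2 (Fin n → ℂ)).symm (fun j => Complex.I * ((c j : ℝ) : ℂ) * v t j) :=
        (PiLp.continuous_toLp 2 _).comp (continuous_pi fun j =>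
          continuous_const.mul ((EuclideanSpace.proj j).continuous.comp hvs.continuous))
      have heq : (fun t => D s t) = fun t => deriv v t +
          (WithLp.equiv 2 (Fin n → ℂ)).symm (fun j => Complex.I * ((c j : ℝ) : ℂ) * v t j) :=
        funext hDeq
      rw [heq]
      exact h1.add h2
    set φ : ℝ → ℝ := fun t => ‖D s t‖ with hφ
    have hφc : Continuous φ := hDc.norm
    -- the bound on the radial derivative
    have hbound : ∀ t, |(⟪v t, deriv v t⟫ : ℝ)| ≤ ‖v t‖ * φ t := by
      intro t
      have hre : (⟪v t, deriv v t⟫ : ℝ) = (inner (𝕜 := ℂ) (v t) (deriv v t)).re := rfl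
      have hre2 : (⟪v t, D s t⟫ : ℝ) = (inner (𝕜 := ℂ) (v t) (D s t)).re := rfl
      have heq : (inner (𝕜 := ℂ) (v t) (deriv v t)).re
          = (inner (𝕜 := ℂ) (v t) (D s t)).re := by
        rw [PiLp.inner_apply, PiLp.inner_apply, Complex.re_sum, Complex.re_sum]
        refine Finset.sum_congr rfl ?_
        intro j _
        rw [hD s t j, hcomp t j, hcast j, RCLike.inner_apply, RCLike.inner_apply]
        simp only [Complex.add_re, Complex.mul_re, Complex.mul_im, Complex.I_re, Complex.I_im,
          Complex.ofReal_re, Complex.ofReal_im, Complex.conj_re, Complex.conj_im, Complex.add_im,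
          RCLike.conj_re, RCLike.conj_im, starRingEnd_apply]
        ring_nf
        simp [Complex.conj_re, Complex.conj_im]
        ring
      rw [hre, heq, ← hre2]
      exact abs_real_inner_le_norm _ _
    have hkey1 : δ ≤ ∫ t in (0:ℝ)..1, φ t :=
      key_est hvs hφc (fun t => norm_nonneg _) hbound hR hδ hx hy hvx hvy
    have hsq : δ^2 ≤ ∫ t in (0:ℝ)..1, (φ t)^2 :=
      le_trans (pow_le_pow_left₀ hδ.le hkey1 2) (sq_intervalIntegral_le hφc)
    rw [intervalIntegral.integral_of_le zero_le_one] at hsq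
    rw [MeasureTheory.integral_Icc_eq_integral_Ioc]
    exact hsq
  -- Fubini
  set e : ℝ → ℝ := fun s => ∫ t in Icc (0:ℝ) 1, ‖D s t‖^2 with he
  have hInt : Integrable e volume := by
    have h1 : Integrable (fun p : ℝ × ℝ => ‖D p.1 p.2‖^2)
        ((volume : Measure ℝ).prod (volume.restrict (Icc (0:ℝ) 1))) := by
      have h0 := hE
      rw [IntegrableOn, Measure.volume_eq_prod, ← Measure.prod_restrict,
        Measure.restrict_univ] at h0
      exact h0
    exact h1.integral_prod_left
  have hnn : ∀ s, 0 ≤ e s := fun s => integral_nonneg fun t => sq_nonneg _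
  set C := ∫ s, e s with hC
  have hN : ∀ N, δ^2 * ∑ i ∈ Finset.range N, (σ' i - σ i) ≤ C := by
    intro N
    rw [Finset.mul_sum]
    have step1 : ∀ i, δ^2 * (σ' i - σ i) ≤ ∫ s in Ioc (σ i) (σ' i), e s := by
      intro i
      have h2 := MeasureTheory.setIntegral_ge_of_const_le (μ := volume) (c := δ^2)
        measurableSet_Ioc (by rw [Real.volume_Ioc]; exact ENNReal.ofReal_ne_top)
        (fun s hs => hkey i s (Ioc_subset_Icc_self hs)) hInt.integrableOn
      rw [Real.volume_real_Ioc_of_le (hσlt i).le, smul_eq_mul, mul_comm] at h2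
      exact h2
    have hdisj : Set.Pairwise ↑(Finset.range N)
        (Function.onFun Disjoint fun i => Ioc (σ i) (σ' i)) := by
      intro i _ j _ hij
      rcases lt_or_gt_of_ne hij with h | h
      · exact Set.Ioc_disjoint_Ioc.2 (le_trans (min_le_left _ _)
          (le_trans (hchain i j h) (le_max_right _ _)))
      · exact Set.Ioc_disjoint_Ioc.2 (le_trans (min_le_right _ _)
          (le_trans (hchain j i h) (le_max_left _ _)))
    calc ∑ i ∈ Finset.range N, δ^2 * (σ' i - σ i)
        ≤ ∑ i ∈ Finset.range N, ∫ s in Ioc (σ i) (σ' i), e s :=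
          Finset.sum_le_sum fun i _ => step1 i
      _ = ∫ s in ⋃ i ∈ Finset.range N, Ioc (σ i) (σ' i), e s :=
          (MeasureTheory.integral_biUnion_finset (Finset.range N)
            (fun i _ => measurableSet_Ioc) hdisj
            (fun i _ => hInt.integrableOn)).symm
      _ ≤ C := setIntegral_le_integral hInt (Filter.Eventually.of_forall hnn)
  obtain ⟨N, hNgt⟩ := (hdiv.eventually_gt_atTop (C / δ^2)).exists
  have hδ2 : (0:ℝ) < δ^2 := by positivity
  have h3 : C < (∑ i ∈ Finset.range N, (σ' i - σ i)) * δ^2 := (div_lt_iff₀ hδ2).1 hNgt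
  have h4 := hN N
  nlinarith
end

section
/- There exists a universal constant c > 0 with the following property. Let N ∈ ℕ, let g_± ∈ C^∞(S¹,ℝ) with ∫₀¹g_± dt = 0, and h ∈ C^∞([−N,N]×S¹,ℝ) with ∫₀¹h(s,t)dt = 0 for all s. If f ∈ C^∞([−N,N]×S¹,ℝ) solves the Neumann problem Δf = h on [−N,N]×S¹, ±∂_s f(±N,t) = g_±(t), with ∫₀¹f(s,t)dt = 0 for all s, then ‖f‖_{W^{2,2}([−N,N]×S¹)} ≤ c(‖h‖_{L²([−N,N]×S¹)} + ‖g_+‖_{W^{1,2}(S¹)} + ‖g_−‖_{W^{1,2}(S¹)}). -/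
open MeasureTheory intervalIntegral Real Set Function

noncomputable def pd1 (F : ℝ × ℝ → ℝ) : ℝ × ℝ → ℝ := fun p => fderiv ℝ F p (1, 0)
noncomputable def pd2 (F : ℝ × ℝ → ℝ) : ℝ × ℝ → ℝ := fun p => fderiv ℝ F p (0, 1)

variable {F G : ℝ × ℝ → ℝ}

lemma hasDerivAt_pd1 (hF : ContDiff ℝ (⊤ : ℕ∞) F) (s t : ℝ) :
    HasDerivAt (fun x => F (x, t)) (pd1 F (s, t)) s := by
  have h1 : HasFDerivAt F (fderiv ℝ F (s, t)) (s, t) :=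
    (hF.differentiable (by simp) (s, t)).hasFDerivAt
  have h2 : HasDerivAt (fun x : ℝ => (x, t)) ((1 : ℝ), (0 : ℝ)) s :=
    (hasDerivAt_id s).prodMk (hasDerivAt_const s t)
  exact h1.comp_hasDerivAt s h2

lemma hasDerivAt_pd2 (hF : ContDiff ℝ (⊤ : ℕ∞) F) (s t : ℝ) :
    HasDerivAt (fun y => F (s, y)) (pd2 F (s, t)) t := by
  have h1 : HasFDerivAt F (fderiv ℝ F (s, t)) (s, t) :=
    (hF.differentiable (by simp) (s, t)).hasFDerivAt
  have h2 : HasDerivAt (fun y : ℝ => (s, y)) ((0 : ℝ), (1 : ℝ)) t :=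
    (hasDerivAt_const t s).prodMk (hasDerivAt_id t)
  exact h1.comp_hasDerivAt t h2

lemma contDiff_pd1 (hF : ContDiff ℝ (⊤ : ℕ∞) F) : ContDiff ℝ (⊤ : ℕ∞) (pd1 F) :=
  (hF.fderiv_right (by simp)).clm_apply contDiff_const

lemma contDiff_pd2 (hF : ContDiff ℝ (⊤ : ℕ∞) F) : ContDiff ℝ (⊤ : ℕ∞) (pd2 F) :=
  (hF.fderiv_right (by simp)).clm_apply contDiff_const

lemma pd_comm (hF : ContDiff ℝ (⊤ : ℕ∞) F) : pd1 (pd2 F) = pd2 (pd1 F) := by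
  funext p
  have hd : ∀ y, HasFDerivAt F (fderiv ℝ F y) y := fun y =>
    (hF.differentiable (by simp) y).hasFDerivAt
  have hd2 : HasFDerivAt (fderiv ℝ F) (fderiv ℝ (fderiv ℝ F) p) p :=
    (((hF.fderiv_right (m := 1) (by exact WithTop.coe_le_coe.mpr (le_top : ((1 + 1 : ℕ) : ℕ∞) ≤ ⊤))).differentiable one_ne_zero) p).hasFDerivAt
  have sym := second_derivative_symmetric hd hd2 ((0 : ℝ), (1 : ℝ)) ((1 : ℝ), (0 : ℝ))
  have e2 : HasFDerivAt (pd2 F)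
      ((ContinuousLinearMap.apply ℝ ℝ ((0 : ℝ), (1 : ℝ))).comp (fderiv ℝ (fderiv ℝ F) p)) p :=
    (ContinuousLinearMap.apply ℝ ℝ ((0 : ℝ), (1 : ℝ))).hasFDerivAt.comp p hd2
  have e1 : HasFDerivAt (pd1 F)
      ((ContinuousLinearMap.apply ℝ ℝ ((1 : ℝ), (0 : ℝ))).comp (fderiv ℝ (fderiv ℝ F) p)) p :=
    (ContinuousLinearMap.apply ℝ ℝ ((1 : ℝ), (0 : ℝ))).hasFDerivAt.comp p hd2
  show fderiv ℝ (pd2 F) p (1, 0) = fderiv ℝ (pd1 F) p (0, 1)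
  rw [e2.fderiv, e1.fderiv]
  simpa using sym.symm

lemma sliceT (hG : Continuous G) (s : ℝ) : Continuous fun t => G (s, t) :=
  hG.comp (continuous_const.prodMk continuous_id)

lemma sliceS (hG : Continuous G) (t : ℝ) : Continuous fun s => G (s, t) :=
  hG.comp (continuous_id.prodMk continuous_const)

lemma contParam (hG : Continuous G) (c d : ℝ) :
    Continuous fun s => ∫ t in c..d, G (s, t) :=
  continuous_parametric_intervalIntegral_of_continuous' (μ := MeasureTheory.volume)
    (f := fun s t => G (s, t)) hG c d

lemma contParam' (hG : Continuous G) (a b : ℝ) :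
    Continuous fun t => ∫ s in a..b, G (s, t) :=
  contParam (G := fun p => G (p.2, p.1)) (hG.comp continuous_swap) a b

lemma fub (hG : Continuous G) {a b c d : ℝ} (hab : a ≤ b) (hcd : c ≤ d) :
    (∫ s in a..b, ∫ t in c..d, G (s, t)) = ∫ t in c..d, ∫ s in a..b, G (s, t) := by
  have hint : Integrable (Function.uncurry fun s t => G (s, t))
      ((volume.restrict (Ioc a b)).prod (volume.restrict (Ioc c d))) := by
    rw [Measure.prod_restrict]
    have h1 : IntegrableOn G (Icc a b ×ˢ Icc c d) (volume.prod volume) := by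
      rw [← Measure.volume_eq_prod]
      exact hG.continuousOn.integrableOn_compact (isCompact_Icc.prod isCompact_Icc)
    exact h1.mono_set (Set.prod_mono Set.Ioc_subset_Icc_self Set.Ioc_subset_Icc_self)
  rw [intervalIntegral.integral_of_le hab, intervalIntegral.integral_of_le hcd]
  simp_rw [intervalIntegral.integral_of_le hcd, intervalIntegral.integral_of_le hab]
  exact MeasureTheory.integral_integral_swap hint

lemma cs_sq {a b : ℝ} (hab : a ≤ b) {u v : ℝ → ℝ} (hu : Continuous u) (hv : Continuous v) :
    (∫ x in a..b, u x * v x) ^ 2 ≤ (∫ x in a..b, u x ^ 2) * ∫ x in a..b, v x ^ 2 := by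
  set A := ∫ x in a..b, u x ^ 2 with hA
  set B := ∫ x in a..b, v x ^ 2 with hB
  set C := ∫ x in a..b, u x * v x with hC
  have key : ∀ lam : ℝ, 0 ≤ A * (lam * lam) + (2 * C) * lam + B := by
    intro lam
    have h0 : 0 ≤ ∫ x in a..b, (lam * u x + v x) ^ 2 :=
      intervalIntegral.integral_nonneg hab fun x _ => sq_nonneg _
    have hexp : (∫ x in a..b, (lam * u x + v x) ^ 2)
        = lam ^ 2 * A + 2 * lam * C + B := by
      have : ∀ x : ℝ, (lam * u x + v x) ^ 2
          = lam ^ 2 * u x ^ 2 + 2 * lam * (u x * v x) + v x ^ 2 := fun x => by ring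
      rw [intervalIntegral.integral_congr (g := fun x =>
        lam ^ 2 * u x ^ 2 + 2 * lam * (u x * v x) + v x ^ 2) (fun x _ => this x)]
      rw [intervalIntegral.integral_add (f := fun x => lam ^ 2 * u x ^ 2 + 2 * lam * (u x * v x))
            (g := fun x => v x ^ 2)
            (((continuous_const.mul (hu.pow 2)).add
              (continuous_const.mul (hu.mul hv))).intervalIntegrable a b)
            ((hv.pow 2).intervalIntegrable a b),
          intervalIntegral.integral_add (f := fun x => lam ^ 2 * u x ^ 2)
            (g := fun x => 2 * lam * (u x * v x))
            ((continuous_const.mul (hu.pow 2)).intervalIntegrable a b)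
            ((continuous_const.mul (hu.mul hv)).intervalIntegrable a b),
          intervalIntegral.integral_const_mul, intervalIntegral.integral_const_mul]
    nlinarith [h0, hexp]
  have hd := discrim_le_zero key
  rw [discrim] at hd
  nlinarith [hd]

lemma cs {a b : ℝ} (hab : a ≤ b) {u v : ℝ → ℝ} (hu : Continuous u) (hv : Continuous v) :
    (∫ x in a..b, u x * v x) ≤
      Real.sqrt (∫ x in a..b, u x ^ 2) * Real.sqrt (∫ x in a..b, v x ^ 2) := by
  have h := cs_sq hab hu hv
  have hA : 0 ≤ ∫ x in a..b, u x ^ 2 := intervalIntegral.integral_nonneg hab fun x _ => sq_nonneg _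
  have hB : 0 ≤ ∫ x in a..b, v x ^ 2 := intervalIntegral.integral_nonneg hab fun x _ => sq_nonneg _
  rw [← Real.sqrt_mul hA]
  rcases le_or_gt (∫ x in a..b, u x * v x) 0 with hC | hC
  · exact hC.trans (Real.sqrt_nonneg _)
  · exact (Real.le_sqrt hC.le (mul_nonneg hA hB)).mpr h

lemma sqrt_add_le' {x y : ℝ} (hx : 0 ≤ x) (hy : 0 ≤ y) :
    Real.sqrt (x + y) ≤ Real.sqrt x + Real.sqrt y := by
  have h1 : x + y ≤ (Real.sqrt x + Real.sqrt y) ^ 2 := by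
    have := Real.sq_sqrt hx
    have := Real.sq_sqrt hy
    nlinarith [Real.sqrt_nonneg x, Real.sqrt_nonneg y]
  calc Real.sqrt (x + y) ≤ Real.sqrt ((Real.sqrt x + Real.sqrt y) ^ 2) := Real.sqrt_le_sqrt h1
    _ = Real.sqrt x + Real.sqrt y := Real.sqrt_sq (by positivity)

lemma periodic_deriv' {u : ℝ → ℝ} (hp : Function.Periodic u 1) :
    Function.Periodic (deriv u) 1 := by
  intro t
  have h1 : (fun x => u (x + 1)) = u := funext hp
  have h2 : deriv (fun x => u (x + 1)) t = deriv u (t + 1) := by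
    simpa using deriv_comp_add_const u 1 t
  rw [h1] at h2
  exact h2.symm

lemma poincare {u u' : ℝ → ℝ} (hd : ∀ t, HasDerivAt u (u' t) t) (hc' : Continuous u')
    (hm : (∫ t in (0:ℝ)..1, u t) = 0) :
    (∫ t in (0:ℝ)..1, u t ^ 2) ≤ ∫ t in (0:ℝ)..1, u' t ^ 2 := by
  have hdiff : Differentiable ℝ u := fun t => (hd t).differentiableAt
  have hu : Continuous u := hdiff.continuous
  have hzero : ∃ t₀ ∈ Icc (0:ℝ) 1, u t₀ = 0 := by
    by_contra hno
    push_neg at hno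
    rcases (hno 0 ⟨le_rfl, zero_le_one⟩).lt_or_gt with hneg | hpos
    · have hall : ∀ t ∈ Icc (0:ℝ) 1, u t < 0 := by
        intro t ht
        rcases (hno t ht).lt_or_gt with hlt | h
        · exact hlt
        · exfalso
          obtain ⟨c, hc, hc0⟩ := intermediate_value_Icc ht.1
            (hu.continuousOn) (⟨hneg.le, h.le⟩ : (0:ℝ) ∈ Icc (u 0) (u t))
          exact hno c (Icc_subset_Icc le_rfl ht.2 hc) hc0
      have hpos' : 0 < ∫ t in (0:ℝ)..1, -u t :=
        intervalIntegral.intervalIntegral_pos_of_pos_on ((hu.neg).intervalIntegrable _ _)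
          (fun x hx => neg_pos.mpr (hall x ⟨hx.1.le, hx.2.le⟩)) one_pos
      rw [intervalIntegral.integral_neg, hm] at hpos'
      norm_num at hpos'
    · have hall : ∀ t ∈ Icc (0:ℝ) 1, 0 < u t := by
        intro t ht
        rcases (hno t ht).lt_or_gt with hlt | h
        · exfalso
          obtain ⟨c, hc, hc0⟩ := intermediate_value_Icc' ht.1
            (hu.continuousOn) (⟨hlt.le, hpos.le⟩ : (0:ℝ) ∈ Icc (u t) (u 0))
          exact hno c (Icc_subset_Icc le_rfl ht.2 hc) hc0
        · exact h
      have hpos' : 0 < ∫ t in (0:ℝ)..1, u t :=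
        intervalIntegral.intervalIntegral_pos_of_pos_on (hu.intervalIntegrable _ _)
          (fun x hx => hall x ⟨hx.1.le, hx.2.le⟩) one_pos
      rw [hm] at hpos'
      norm_num at hpos'
  obtain ⟨t₀, ht₀, hu0⟩ := hzero
  have hbound : ∀ a b : ℝ, 0 ≤ a → a ≤ b → b ≤ 1 →
      (∫ x in a..b, u' x) ^ 2 ≤ ∫ x in (0:ℝ)..1, u' x ^ 2 := by
    intro a b ha hab hb1
    have h1 : (∫ x in a..b, u' x * 1) ^ 2
        ≤ (∫ x in a..b, u' x ^ 2) * ∫ x in a..b, (1:ℝ) ^ 2 := cs_sq hab hc' continuous_const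
    simp only [mul_one, one_pow, intervalIntegral.integral_const, smul_eq_mul] at h1
    have h2 : (∫ x in a..b, u' x ^ 2) ≤ ∫ x in (0:ℝ)..1, u' x ^ 2 :=
      intervalIntegral.integral_mono_interval ha hab hb1
        (Filter.Eventually.of_forall fun x => sq_nonneg _)
        ((hc'.pow 2).intervalIntegrable _ _)
    have h3 : 0 ≤ ∫ x in a..b, u' x ^ 2 :=
      intervalIntegral.integral_nonneg hab fun x _ => sq_nonneg _
    nlinarith
  have hpt : ∀ t ∈ Icc (0:ℝ) 1, u t ^ 2 ≤ ∫ x in (0:ℝ)..1, u' x ^ 2 := by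
    intro t ht
    rcases le_total t₀ t with hord | hord
    · have ftc : ∫ x in t₀..t, u' x = u t - u t₀ :=
        intervalIntegral.integral_eq_sub_of_hasDerivAt (fun x _ => hd x)
          (hc'.intervalIntegrable _ _)
      have he : u t = ∫ x in t₀..t, u' x := by rw [ftc, hu0]; ring
      rw [he]
      exact hbound t₀ t ht₀.1 hord ht.2
    · have ftc : ∫ x in t..t₀, u' x = u t₀ - u t :=
        intervalIntegral.integral_eq_sub_of_hasDerivAt (fun x _ => hd x)
          (hc'.intervalIntegrable _ _)
      have he : u t = -∫ x in t..t₀, u' x := by rw [ftc, hu0]; ring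
      rw [he, neg_pow]
      simpa using hbound t t₀ ht.1 hord ht₀.2
  have hfin := intervalIntegral.integral_mono_on (μ := MeasureTheory.volume) zero_le_one
    ((hu.pow 2).intervalIntegrable _ _)
    (_root_.intervalIntegrable_const (c := ∫ x in (0:ℝ)..1, u' x ^ 2)) hpt
  simpa using hfin
set_option maxHeartbeats 1000000 in
/-- Trace estimate at the right endpoint. -/
lemma trace_est {u w : ℝ × ℝ → ℝ} (hu : Continuous u) (hw : Continuous w)
    (hd : ∀ s t, HasDerivAt (fun x => u (x, t)) (w (s, t)) s) {a b : ℝ} (h1 : a ≤ b - 1) :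
    (∫ t in (0:ℝ)..1, u (b, t) ^ 2)
      ≤ 2 * (∫ s in a..b, ∫ t in (0:ℝ)..1, u (s, t) ^ 2)
        + ∫ s in a..b, ∫ t in (0:ℝ)..1, w (s, t) ^ 2 := by
  have hb1b : b - 1 ≤ b := by linarith
  have hab : a ≤ b := by linarith
  set K : ℝ := ∫ t in (0:ℝ)..1, ∫ σ in (b-1)..b, (u (σ, t) ^ 2 + w (σ, t) ^ 2) with hK
  have hcuw : Continuous fun p : ℝ × ℝ => u p ^ 2 + w p ^ 2 := (hu.pow 2).add (hw.pow 2)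
  have hpt : ∀ s ∈ Icc (b-1) b, ∀ t : ℝ,
      u (b, t) ^ 2 ≤ u (s, t) ^ 2 + ∫ σ in (b-1)..b, (u (σ, t) ^ 2 + w (σ, t) ^ 2) := by
    intro s hs t
    have hder : ∀ σ : ℝ, HasDerivAt (fun x => u (x, t) ^ 2) (2 * u (σ, t) * w (σ, t)) σ := by
      intro σ
      have h2 : HasDerivAt (fun x => u (x, t) * u (x, t))
          (w (σ, t) * u (σ, t) + u (σ, t) * w (σ, t)) σ := (hd σ t).mul (hd σ t)
      have h3 : (fun x => u (x, t) * u (x, t)) = fun x => u (x, t) ^ 2 := by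
        funext x; ring
      rw [h3] at h2
      convert h2 using 1; ring
    have ftc : (∫ σ in s..b, 2 * u (σ, t) * w (σ, t)) = u (b, t) ^ 2 - u (s, t) ^ 2 :=
      intervalIntegral.integral_eq_sub_of_hasDerivAt (fun σ _ => hder σ)
        (((continuous_const.mul (sliceS hu t)).mul (sliceS hw t)).intervalIntegrable _ _)
    have hmono1 : (∫ σ in s..b, 2 * u (σ, t) * w (σ, t))
        ≤ ∫ σ in s..b, (u (σ, t) ^ 2 + w (σ, t) ^ 2) :=
      intervalIntegral.integral_mono_on hs.2
        (((continuous_const.mul (sliceS hu t)).mul (sliceS hw t)).intervalIntegrable _ _)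
        ((sliceS hcuw t).intervalIntegrable _ _)
        (fun σ _ => by nlinarith [sq_nonneg (u (σ, t) - w (σ, t))])
    have hmono2 : (∫ σ in s..b, (u (σ, t) ^ 2 + w (σ, t) ^ 2))
        ≤ ∫ σ in (b-1)..b, (u (σ, t) ^ 2 + w (σ, t) ^ 2) :=
      intervalIntegral.integral_mono_interval hs.1 hs.2 le_rfl
        (Filter.Eventually.of_forall fun σ => by positivity)
        ((sliceS hcuw t).intervalIntegrable _ _)
    nlinarith [ftc, hmono1, hmono2]
  have hKc : Continuous fun t : ℝ => ∫ σ in (b-1)..b, (u (σ, t) ^ 2 + w (σ, t) ^ 2) :=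
    contParam (G := fun p : ℝ × ℝ => u (p.2, p.1) ^ 2 + w (p.2, p.1) ^ 2)
      (hcuw.comp continuous_swap) (b-1) b
  have hpt2 : ∀ s ∈ Icc (b-1) b, (∫ t in (0:ℝ)..1, u (b, t) ^ 2)
      ≤ (∫ t in (0:ℝ)..1, u (s, t) ^ 2) + K := by
    intro s hs
    have := intervalIntegral.integral_mono_on (μ := MeasureTheory.volume) zero_le_one
      (((sliceT hu b).pow 2).intervalIntegrable _ _)
      ((((sliceT hu s).pow 2).add hKc).intervalIntegrable _ _)
      (fun t _ => hpt s hs t)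
    simp only [Pi.add_apply, Pi.pow_apply] at this
    rwa [intervalIntegral.integral_add (f := fun t => u (s, t) ^ 2)
      (g := fun t => ∫ σ in (b-1)..b, (u (σ, t) ^ 2 + w (σ, t) ^ 2))
      (((sliceT hu s).pow 2).intervalIntegrable _ _)
      (hKc.intervalIntegrable _ _)] at this
  have hparam : Continuous fun s : ℝ => ∫ t in (0:ℝ)..1, u (s, t) ^ 2 :=
    contParam (G := fun p : ℝ × ℝ => u p ^ 2) (hu.pow 2) 0 1
  have hs1 : (∫ _s in (b-1)..b, (∫ t in (0:ℝ)..1, u (b, t) ^ 2))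
      ≤ ∫ s in (b-1)..b, ((∫ t in (0:ℝ)..1, u (s, t) ^ 2) + K) :=
    intervalIntegral.integral_mono_on hb1b intervalIntegrable_const
      ((hparam.add continuous_const).intervalIntegrable _ _) hpt2
  rw [intervalIntegral.integral_add (hparam.intervalIntegrable _ _)
      intervalIntegrable_const, intervalIntegral.integral_const,
      intervalIntegral.integral_const, show b - (b-1) = 1 by ring, one_smul, smul_eq_mul,
      one_mul] at hs1
  -- compare the strip integral with the full integral
  have hnn : ∀ G' : ℝ × ℝ → ℝ, Continuous G' →
      (∫ s in (b-1)..b, ∫ t in (0:ℝ)..1, G' (s, t) ^ 2)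
        ≤ ∫ s in a..b, ∫ t in (0:ℝ)..1, G' (s, t) ^ 2 := by
    intro G' hG'
    exact intervalIntegral.integral_mono_interval h1 hb1b le_rfl
      (Filter.Eventually.of_forall fun s =>
        intervalIntegral.integral_nonneg zero_le_one fun t _ => sq_nonneg _)
      ((contParam (G := fun p : ℝ × ℝ => G' p ^ 2) (hG'.pow 2) 0 1).intervalIntegrable _ _)
  have hKval : K ≤ (∫ s in a..b, ∫ t in (0:ℝ)..1, u (s, t) ^ 2)
      + ∫ s in a..b, ∫ t in (0:ℝ)..1, w (s, t) ^ 2 := by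
    have hsw : K = ∫ σ in (b-1)..b, ∫ t in (0:ℝ)..1, (u (σ, t) ^ 2 + w (σ, t) ^ 2) :=
      (fub (G := fun p : ℝ × ℝ => u p ^ 2 + w p ^ 2) hcuw hb1b zero_le_one).symm
    have hsplit : ∀ σ : ℝ, (∫ t in (0:ℝ)..1, (u (σ, t) ^ 2 + w (σ, t) ^ 2))
        = (∫ t in (0:ℝ)..1, u (σ, t) ^ 2) + ∫ t in (0:ℝ)..1, w (σ, t) ^ 2 := fun σ =>
      intervalIntegral.integral_add (((sliceT hu σ).pow 2).intervalIntegrable _ _)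
        (((sliceT hw σ).pow 2).intervalIntegrable _ _)
    have hsplit2 : (∫ σ in (b-1)..b, ∫ t in (0:ℝ)..1, (u (σ, t) ^ 2 + w (σ, t) ^ 2))
        = (∫ σ in (b-1)..b, ∫ t in (0:ℝ)..1, u (σ, t) ^ 2)
          + ∫ σ in (b-1)..b, ∫ t in (0:ℝ)..1, w (σ, t) ^ 2 := by
      rw [intervalIntegral.integral_congr (g := fun σ =>
        (∫ t in (0:ℝ)..1, u (σ, t) ^ 2) + ∫ t in (0:ℝ)..1, w (σ, t) ^ 2)
        (fun σ _ => hsplit σ)]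
      exact intervalIntegral.integral_add
        ((contParam (G := fun p : ℝ × ℝ => u p ^ 2) (hu.pow 2) 0 1).intervalIntegrable _ _)
        ((contParam (G := fun p : ℝ × ℝ => w p ^ 2) (hw.pow 2) 0 1).intervalIntegrable _ _)
    rw [hsw, hsplit2]
    have := hnn u hu
    have := hnn w hw
    linarith
  have hTged := hnn u hu
  linarith [hs1, hKval, hTged]

lemma isum6 {a b : ℝ} {p q r u v w : ℝ → ℝ} (hp : Continuous p) (hq : Continuous q)
    (hr : Continuous r) (hu : Continuous u) (hv : Continuous v) (hw : Continuous w) :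
    (∫ x in a..b, (p x + q x + r x + u x + v x + w x))
      = (∫ x in a..b, p x) + (∫ x in a..b, q x) + (∫ x in a..b, r x)
        + (∫ x in a..b, u x) + (∫ x in a..b, v x) + ∫ x in a..b, w x := by
  rw [intervalIntegral.integral_add (f := fun x => p x + q x + r x + u x + v x) (g := w)
        (((((hp.add hq).add hr).add hu).add hv).intervalIntegrable _ _)
        (hw.intervalIntegrable _ _),
      intervalIntegral.integral_add (f := fun x => p x + q x + r x + u x) (g := v)
        ((((hp.add hq).add hr).add hu).intervalIntegrable _ _)
        (hv.intervalIntegrable _ _),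
      intervalIntegral.integral_add (f := fun x => p x + q x + r x) (g := u)
        (((hp.add hq).add hr).intervalIntegrable _ _)
        (hu.intervalIntegrable _ _),
      intervalIntegral.integral_add (f := fun x => p x + q x) (g := r)
        ((hp.add hq).intervalIntegrable _ _)
        (hr.intervalIntegrable _ _),
      intervalIntegral.integral_add (f := p) (g := q)
        (hp.intervalIntegrable _ _) (hq.intervalIntegrable _ _)]

set_option maxHeartbeats 4000000 in
/-- uniform (in `N`) elliptic estimate for the Neumann problem
`Δf = h` on `[−N,N] × S¹` with boundary data `±∂_s f(±N,·) = g_±` and fiberwise mean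
zero: `‖f‖_{W^{2,2}} ≤ c(‖h‖_{L²} + ‖g₊‖_{W^{1,2}} + ‖g₋‖_{W^{1,2}})`. -/
theorem stmt16 : ∃ c : ℝ, 0 < c ∧
    ∀ (N : ℕ), 0 < N → ∀ (gp gm : ℝ → ℝ) (h f : ℝ → ℝ → ℝ),
    ContDiff ℝ (⊤ : ℕ∞) gp → ContDiff ℝ (⊤ : ℕ∞) gm →
    Function.Periodic gp 1 → Function.Periodic gm 1 →
    (∫ t in (0:ℝ)..1, gp t) = 0 → (∫ t in (0:ℝ)..1, gm t) = 0 →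
    ContDiff ℝ (⊤ : ℕ∞) (fun p : ℝ × ℝ => h p.1 p.2) → (∀ s, Function.Periodic (h s) 1) →
    (∀ s, (∫ t in (0:ℝ)..1, h s t) = 0) →
    ContDiff ℝ (⊤ : ℕ∞) (fun p : ℝ × ℝ => f p.1 p.2) → (∀ s, Function.Periodic (f s) 1) →
    (∀ s, (∫ t in (0:ℝ)..1, f s t) = 0) →
    (∀ s t, deriv (fun s' => deriv (fun s'' => f s'' t) s') s +
      deriv (fun t' => deriv (fun t'' => f s t'') t') t = h s t) →
    (∀ t, deriv (fun s => f s t) (N : ℝ) = gp t) →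
    (∀ t, -(deriv (fun s => f s t) (-(N : ℝ))) = gm t) →
    Real.sqrt (∫ s in (-(N : ℝ))..(N : ℝ), ∫ t in (0:ℝ)..1,
        (f s t)^2 + (deriv (fun s' => f s' t) s)^2 + (deriv (fun t' => f s t') t)^2 +
        (deriv (fun s' => deriv (fun s'' => f s'' t) s') s)^2 +
        (deriv (fun t' => deriv (fun s' => f s' t') s) t)^2 +
        (deriv (fun t' => deriv (fun t'' => f s t'') t') t)^2) ≤
      c * (Real.sqrt (∫ s in (-(N : ℝ))..(N : ℝ), ∫ t in (0:ℝ)..1, (h s t)^2) +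
        Real.sqrt (∫ t in (0:ℝ)..1, (gp t)^2 + (deriv gp t)^2) +
        Real.sqrt (∫ t in (0:ℝ)..1, (gm t)^2 + (deriv gm t)^2)) := by
  refine ⟨100, by norm_num, ?_⟩
  intro N hN gp gm h f hgp hgm hgpper hgmper hgpmean hgmmean hh hhper hhmean hfc hfper
    hfmean hlap hbp hbm
  have hF : ContDiff ℝ (⊤ : ℕ∞) (fun p : ℝ × ℝ => f p.1 p.2) := hfc
  set F : ℝ × ℝ → ℝ := fun p : ℝ × ℝ => f p.1 p.2 with hFdef
  set Hf : ℝ × ℝ → ℝ := fun p : ℝ × ℝ => h p.1 p.2 with hHdef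
  set f1 := pd1 F with hf1def
  set f2 := pd2 F with hf2def
  set f11 := pd1 f1 with hf11def
  set f21 := pd2 f1 with hf21def
  set f22 := pd2 f2 with hf22def
  have hF1 : ContDiff ℝ (⊤ : ℕ∞) f1 := contDiff_pd1 hF
  have hF2 : ContDiff ℝ (⊤ : ℕ∞) f2 := contDiff_pd2 hF
  have hF11 : ContDiff ℝ (⊤ : ℕ∞) f11 := contDiff_pd1 hF1
  have hF21 : ContDiff ℝ (⊤ : ℕ∞) f21 := contDiff_pd2 hF1
  have hF22 : ContDiff ℝ (⊤ : ℕ∞) f22 := contDiff_pd2 hF2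
  have hcF : Continuous F := hF.continuous
  have hc1 : Continuous f1 := hF1.continuous
  have hc2 : Continuous f2 := hF2.continuous
  have hc11 : Continuous f11 := hF11.continuous
  have hc21 : Continuous f21 := hF21.continuous
  have hc22 : Continuous f22 := hF22.continuous
  have hc211 : Continuous (pd2 f11) := (contDiff_pd2 hF11).continuous
  have hc121 : Continuous (pd1 f21) := (contDiff_pd1 hF21).continuous
  have hcH : Continuous Hf := hh.continuous
  have hcgp' : Continuous (deriv gp) := hgp.continuous_deriv (by simp)
  have hcgm' : Continuous (deriv gm) := hgm.continuous_deriv (by simp)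
  have hchT : ∀ s : ℝ, Continuous fun t => h s t := fun s => sliceT hcH s
  -- Clairaut
  have hcomm : pd1 f2 = f21 := pd_comm hF
  have hcomm1 : pd2 f11 = pd1 f21 := (pd_comm hF1).symm
  -- derivative facts
  have hds : ∀ s t, HasDerivAt (fun x => f x t) (f1 (s, t)) s := fun s t =>
    hasDerivAt_pd1 hF s t
  have hdt : ∀ s t, HasDerivAt (fun y => f s y) (f2 (s, t)) t := fun s t =>
    hasDerivAt_pd2 hF s t
  have hds1 : ∀ s t, HasDerivAt (fun x => f1 (x, t)) (f11 (s, t)) s := fun s t =>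
    hasDerivAt_pd1 hF1 s t
  have hdt1 : ∀ s t, HasDerivAt (fun y => f1 (s, y)) (f21 (s, t)) t := fun s t =>
    hasDerivAt_pd2 hF1 s t
  have hdt2 : ∀ s t, HasDerivAt (fun y => f2 (s, y)) (f22 (s, t)) t := fun s t =>
    hasDerivAt_pd2 hF2 s t
  have hds2 : ∀ s t, HasDerivAt (fun x => f2 (x, t)) (f21 (s, t)) s := by
    intro s t
    have h0 := hasDerivAt_pd1 hF2 s t
    rwa [hcomm] at h0
  have hds21 : ∀ s t, HasDerivAt (fun x => f21 (x, t)) (pd1 f21 (s, t)) s := fun s t =>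
    hasDerivAt_pd1 hF21 s t
  have hdt11 : ∀ s t, HasDerivAt (fun y => f11 (s, y)) (pd2 f11 (s, t)) t := fun s t =>
    hasDerivAt_pd2 hF11 s t
  have he1 : ∀ s t, deriv (fun s' => f s' t) s = f1 (s, t) := fun s t => (hds s t).deriv
  have he2 : ∀ s t, deriv (fun t' => f s t') t = f2 (s, t) := fun s t => (hdt s t).deriv
  have he11 : ∀ s t, deriv (fun s' => deriv (fun s'' => f s'' t) s') s = f11 (s, t) := by
    intro s t
    have hq : (fun s' => deriv (fun s'' => f s'' t) s') = fun s' => f1 (s', t) :=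
      funext fun x => he1 x t
    rw [hq]
    exact (hds1 s t).deriv
  have he21 : ∀ s t, deriv (fun t' => deriv (fun s' => f s' t') s) t = f21 (s, t) := by
    intro s t
    have hq : (fun t' => deriv (fun s' => f s' t') s) = fun t' => f1 (s, t') :=
      funext fun y => he1 s y
    rw [hq]
    exact (hdt1 s t).deriv
  have he22 : ∀ s t, deriv (fun t' => deriv (fun t'' => f s t'') t') t = f22 (s, t) := by
    intro s t
    have hq : (fun t' => deriv (fun t'' => f s t'') t') = fun t' => f2 (s, t') :=
      funext fun y => he2 s y
    rw [hq]
    exact (hdt2 s t).deriv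
  have hlap' : ∀ s t, f11 (s, t) + f22 (s, t) = h s t := by
    intro s t
    rw [← he11 s t, ← he22 s t]
    exact hlap s t
  -- boundary conditions
  have hbp' : ∀ t, f1 ((N : ℝ), t) = gp t := by
    intro t; rw [← he1]; exact hbp t
  have hbm' : ∀ t, f1 (-(N : ℝ), t) = -gm t := by
    intro t
    have h0 := hbm t
    rw [he1 (-(N : ℝ)) t] at h0
    linarith
  have hb21p : ∀ t, f21 ((N : ℝ), t) = deriv gp t := by
    intro t
    have hq : (fun y => f1 ((N : ℝ), y)) = gp := funext hbp'
    rw [← (hdt1 (N : ℝ) t).deriv, hq]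
  have hb21m : ∀ t, f21 (-(N : ℝ), t) = -deriv gm t := by
    intro t
    have hq : (fun y => f1 (-(N : ℝ), y)) = fun y => -gm y := funext hbm'
    rw [← (hdt1 (-(N : ℝ)) t).deriv, hq, deriv.fun_neg]
  -- periodicity facts
  have hper1 : ∀ s t, f1 (s, t + 1) = f1 (s, t) := by
    intro s t
    have hq : (fun x => f x (t + 1)) = fun x => f x t := funext fun x => hfper x t
    rw [← he1 s (t + 1), hq, he1 s t]
  have hper2 : ∀ s t, f2 (s, t + 1) = f2 (s, t) := by
    intro s t
    have hfun : (fun y => f2 (s, y)) = deriv (f s) := funext fun y => (he2 s y).symm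
    have hA := congrFun hfun (t + 1)
    have hB := congrFun hfun t
    rw [hA, hB]
    exact periodic_deriv' (hfper s) t
  have hper11 : ∀ s t, f11 (s, t + 1) = f11 (s, t) := by
    intro s t
    have hq : (fun x => f1 (x, t + 1)) = fun x => f1 (x, t) := funext fun x => hper1 x t
    rw [← (hds1 s (t + 1)).deriv, hq, (hds1 s t).deriv]
  -- fiberwise mean zero facts
  have hm2 : ∀ s, (∫ t in (0:ℝ)..1, f2 (s, t)) = 0 := by
    intro s
    have hi := intervalIntegral.integral_eq_sub_of_hasDerivAt (a := (0:ℝ)) (b := 1)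
      (fun t _ => hdt s t) ((sliceT hc2 s).intervalIntegrable _ _)
    rw [hi]
    have h0 := hfper s 0
    norm_num at h0
    rw [h0, sub_self]
  have hm22 : ∀ s, (∫ t in (0:ℝ)..1, f22 (s, t)) = 0 := by
    intro s
    have hi := intervalIntegral.integral_eq_sub_of_hasDerivAt (a := (0:ℝ)) (b := 1)
      (fun t _ => hdt2 s t) ((sliceT hc22 s).intervalIntegrable _ _)
    rw [hi]
    have h0 := hper2 s 0
    norm_num at h0
    rw [h0, sub_self]
  have hm1 : ∀ s, (∫ t in (0:ℝ)..1, f1 (s, t)) = 0 := by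
    have hphic : Continuous fun s => ∫ t in (0:ℝ)..1, f1 (s, t) := contParam hc1 0 1
    have hint0 : ∀ a b : ℝ, a ≤ b → (∫ s in a..b, ∫ t in (0:ℝ)..1, f1 (s, t)) = 0 := by
      intro a b hab
      rw [fub hc1 hab zero_le_one]
      have hin : ∀ t : ℝ, (∫ x in a..b, f1 (x, t)) = f b t - f a t := fun t =>
        intervalIntegral.integral_eq_sub_of_hasDerivAt (fun x _ => hds x t)
          ((sliceS hc1 t).intervalIntegrable a b)
      rw [intervalIntegral.integral_congr (g := fun t => f b t - f a t) (fun t _ => hin t)]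
      rw [intervalIntegral.integral_sub ((sliceT hcF b).intervalIntegrable _ _)
        ((sliceT hcF a).intervalIntegrable _ _)]
      rw [hfmean b, hfmean a, sub_self]
    intro s
    have hpsi : (fun b => ∫ x in (s - 1)..b, ∫ t in (0:ℝ)..1, f1 (x, t)) = fun _ => (0:ℝ) := by
      funext b
      rcases le_total (s - 1) b with hl | hl
      · exact hint0 _ _ hl
      · rw [intervalIntegral.integral_symm, hint0 _ _ hl, neg_zero]
    have hder : deriv (fun b => ∫ x in (s - 1)..b, ∫ t in (0:ℝ)..1, f1 (x, t)) s
        = ∫ t in (0:ℝ)..1, f1 (s, t) := Continuous.deriv_integral _ hphic (s - 1) s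
    rw [← hder, hpsi]
    simp
  -- numeric facts
  have hNr : (1:ℝ) ≤ (N:ℝ) := by exact_mod_cast hN
  have hNN : -(N:ℝ) ≤ (N:ℝ) := by linarith
  -- Step 1 : integration by parts in t
  have step1 : ∀ s, (∫ t in (0:ℝ)..1, f11 (s, t) * f22 (s, t))
      = -∫ t in (0:ℝ)..1, pd2 f11 (s, t) * f2 (s, t) := by
    intro s
    have hprod : ∀ t : ℝ, HasDerivAt (fun y => f11 (s, y) * f2 (s, y))
        (pd2 f11 (s, t) * f2 (s, t) + f11 (s, t) * f22 (s, t)) t := fun t =>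
      (hdt11 s t).mul (hdt2 s t)
    have hi := intervalIntegral.integral_eq_sub_of_hasDerivAt (a := (0:ℝ)) (b := 1)
      (fun t _ => hprod t)
      ((((sliceT hc211 s).mul (sliceT hc2 s)).add
        ((sliceT hc11 s).mul (sliceT hc22 s))).intervalIntegrable _ _)
    have hz : f11 (s, 1) * f2 (s, 1) - f11 (s, 0) * f2 (s, 0) = 0 := by
      have h1 := hper11 s 0
      have h2 := hper2 s 0
      norm_num at h1 h2
      rw [h1, h2, sub_self]
    rw [hz] at hi
    rw [intervalIntegral.integral_add (f := fun t => pd2 f11 (s, t) * f2 (s, t))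
      (g := fun t => f11 (s, t) * f22 (s, t))
      (((sliceT hc211 s).mul (sliceT hc2 s)).intervalIntegrable _ _)
      (((sliceT hc11 s).mul (sliceT hc22 s)).intervalIntegrable _ _)] at hi
    linarith
  -- Step 3 : integration by parts in s
  have step3 : ∀ t, (∫ s in (-(N:ℝ))..(N:ℝ), pd1 f21 (s, t) * f2 (s, t))
      = deriv gp t * f2 ((N:ℝ), t) + deriv gm t * f2 (-(N:ℝ), t)
        - ∫ s in (-(N:ℝ))..(N:ℝ), f21 (s, t) ^ 2 := by
    intro t
    have hprod : ∀ s : ℝ, HasDerivAt (fun x => f21 (x, t) * f2 (x, t))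
        (pd1 f21 (s, t) * f2 (s, t) + f21 (s, t) * f21 (s, t)) s := fun s =>
      (hds21 s t).mul (hds2 s t)
    have hi := intervalIntegral.integral_eq_sub_of_hasDerivAt (a := -(N:ℝ)) (b := (N:ℝ))
      (fun s _ => hprod s)
      ((((sliceS hc121 t).mul (sliceS hc2 t)).add
        ((sliceS hc21 t).mul (sliceS hc21 t))).intervalIntegrable _ _)
    rw [intervalIntegral.integral_add (f := fun x => pd1 f21 (x, t) * f2 (x, t))
      (g := fun x => f21 (x, t) * f21 (x, t))
      (((sliceS hc121 t).mul (sliceS hc2 t)).intervalIntegrable _ _)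
      (((sliceS hc21 t).mul (sliceS hc21 t)).intervalIntegrable _ _),
      hb21p t, hb21m t] at hi
    have hsq : (∫ s in (-(N:ℝ))..(N:ℝ), f21 (s, t) * f21 (s, t))
        = ∫ s in (-(N:ℝ))..(N:ℝ), f21 (s, t) ^ 2 :=
      intervalIntegral.integral_congr fun s _ => (pow_two (f21 (s, t))).symm
    rw [hsq] at hi
    linarith
  -- Step A : the double integral of f11 * f22
  have stepA : (∫ s in (-(N:ℝ))..(N:ℝ), ∫ t in (0:ℝ)..1, f11 (s, t) * f22 (s, t))
      = (∫ s in (-(N:ℝ))..(N:ℝ), ∫ t in (0:ℝ)..1, f21 (s, t) ^ 2)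
        - ((∫ t in (0:ℝ)..1, deriv gp t * f2 ((N:ℝ), t))
          + ∫ t in (0:ℝ)..1, deriv gm t * f2 (-(N:ℝ), t)) := by
    have h1 : (∫ s in (-(N:ℝ))..(N:ℝ), ∫ t in (0:ℝ)..1, f11 (s, t) * f22 (s, t))
        = ∫ s in (-(N:ℝ))..(N:ℝ), -(∫ t in (0:ℝ)..1, pd2 f11 (s, t) * f2 (s, t)) :=
      intervalIntegral.integral_congr fun s _ => step1 s
    have h2 : (∫ s in (-(N:ℝ))..(N:ℝ), -(∫ t in (0:ℝ)..1, pd2 f11 (s, t) * f2 (s, t)))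
        = -(∫ s in (-(N:ℝ))..(N:ℝ), ∫ t in (0:ℝ)..1, pd2 f11 (s, t) * f2 (s, t)) :=
      intervalIntegral.integral_neg
    have h3 : (∫ s in (-(N:ℝ))..(N:ℝ), ∫ t in (0:ℝ)..1, pd2 f11 (s, t) * f2 (s, t))
        = ∫ s in (-(N:ℝ))..(N:ℝ), ∫ t in (0:ℝ)..1, pd1 f21 (s, t) * f2 (s, t) := by
      rw [hcomm1]
    have h4 : (∫ s in (-(N:ℝ))..(N:ℝ), ∫ t in (0:ℝ)..1, pd1 f21 (s, t) * f2 (s, t))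
        = ∫ t in (0:ℝ)..1, ∫ s in (-(N:ℝ))..(N:ℝ), pd1 f21 (s, t) * f2 (s, t) :=
      fub (G := fun p => pd1 f21 p * f2 p) (hc121.mul hc2) hNN zero_le_one
    have h5 : (∫ t in (0:ℝ)..1, ∫ s in (-(N:ℝ))..(N:ℝ), pd1 f21 (s, t) * f2 (s, t))
        = ∫ t in (0:ℝ)..1, (deriv gp t * f2 ((N:ℝ), t) + deriv gm t * f2 (-(N:ℝ), t)
            - ∫ s in (-(N:ℝ))..(N:ℝ), f21 (s, t) ^ 2) :=
      intervalIntegral.integral_congr fun t _ => step3 t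
    have hca : Continuous fun t => deriv gp t * f2 ((N:ℝ), t) := hcgp'.mul (sliceT hc2 (N:ℝ))
    have hcb : Continuous fun t => deriv gm t * f2 (-(N:ℝ), t) := hcgm'.mul (sliceT hc2 (-(N:ℝ)))
    have hcc : Continuous fun t => ∫ s in (-(N:ℝ))..(N:ℝ), f21 (s, t) ^ 2 :=
      contParam' (G := fun p => f21 p ^ 2) (hc21.pow 2) _ _
    have h6 : (∫ t in (0:ℝ)..1, (deriv gp t * f2 ((N:ℝ), t) + deriv gm t * f2 (-(N:ℝ), t)
            - ∫ s in (-(N:ℝ))..(N:ℝ), f21 (s, t) ^ 2))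
        = (∫ t in (0:ℝ)..1, deriv gp t * f2 ((N:ℝ), t))
          + (∫ t in (0:ℝ)..1, deriv gm t * f2 (-(N:ℝ), t))
          - ∫ t in (0:ℝ)..1, ∫ s in (-(N:ℝ))..(N:ℝ), f21 (s, t) ^ 2 := by
      rw [intervalIntegral.integral_sub
        (f := fun t => deriv gp t * f2 ((N:ℝ), t) + deriv gm t * f2 (-(N:ℝ), t))
        (g := fun t => ∫ s in (-(N:ℝ))..(N:ℝ), f21 (s, t) ^ 2)
        ((hca.add hcb).intervalIntegrable _ _)
        (hcc.intervalIntegrable _ _), intervalIntegral.integral_add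
        (f := fun t => deriv gp t * f2 ((N:ℝ), t)) (g := fun t => deriv gm t * f2 (-(N:ℝ), t))
        (hca.intervalIntegrable _ _) (hcb.intervalIntegrable _ _)]
    have h7 : (∫ t in (0:ℝ)..1, ∫ s in (-(N:ℝ))..(N:ℝ), f21 (s, t) ^ 2)
        = ∫ s in (-(N:ℝ))..(N:ℝ), ∫ t in (0:ℝ)..1, f21 (s, t) ^ 2 :=
      (fub (G := fun p => f21 p ^ 2) (hc21.pow 2) hNN zero_le_one).symm
    rw [h1, h2, h3, h4, h5, h6, h7]
    ring
  -- Main identity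
  have stepMain : (∫ s in (-(N:ℝ))..(N:ℝ), ∫ t in (0:ℝ)..1, f22 (s, t) ^ 2)
        + (∫ s in (-(N:ℝ))..(N:ℝ), ∫ t in (0:ℝ)..1, f21 (s, t) ^ 2)
      = (∫ s in (-(N:ℝ))..(N:ℝ), ∫ t in (0:ℝ)..1, h s t * f22 (s, t))
        + ((∫ t in (0:ℝ)..1, deriv gp t * f2 ((N:ℝ), t))
          + ∫ t in (0:ℝ)..1, deriv gm t * f2 (-(N:ℝ), t)) := by
    have hsplit : ∀ s, (∫ t in (0:ℝ)..1, h s t * f22 (s, t))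
        = (∫ t in (0:ℝ)..1, f11 (s, t) * f22 (s, t)) + ∫ t in (0:ℝ)..1, f22 (s, t) ^ 2 := by
      intro s
      rw [← intervalIntegral.integral_add (f := fun t => f11 (s, t) * f22 (s, t))
        (g := fun t => f22 (s, t) ^ 2)
        (((sliceT hc11 s).mul (sliceT hc22 s)).intervalIntegrable _ _)
        (((sliceT hc22 s).pow 2).intervalIntegrable _ _)]
      apply intervalIntegral.integral_congr
      intro t _
      show h s t * f22 (s, t) = f11 (s, t) * f22 (s, t) + f22 (s, t) ^ 2
      rw [← hlap' s t]
      ring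
    have hsum : (∫ s in (-(N:ℝ))..(N:ℝ), ∫ t in (0:ℝ)..1, h s t * f22 (s, t))
        = (∫ s in (-(N:ℝ))..(N:ℝ), ∫ t in (0:ℝ)..1, f11 (s, t) * f22 (s, t))
          + ∫ s in (-(N:ℝ))..(N:ℝ), ∫ t in (0:ℝ)..1, f22 (s, t) ^ 2 := by
      rw [intervalIntegral.integral_congr (g := fun s =>
          (∫ t in (0:ℝ)..1, f11 (s, t) * f22 (s, t)) + ∫ t in (0:ℝ)..1, f22 (s, t) ^ 2)
          (fun s _ => hsplit s)]
      exact intervalIntegral.integral_add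
        ((contParam (G := fun p => f11 p * f22 p) (hc11.mul hc22) 0 1).intervalIntegrable _ _)
        ((contParam (G := fun p => f22 p ^ 2) (hc22.pow 2) 0 1).intervalIntegrable _ _)
    rw [hsum, stepA]
    ring
  -- Cauchy-Schwarz for the source term
  have hcp : Continuous fun s => Real.sqrt (∫ t in (0:ℝ)..1, (h s t) ^ 2) :=
    Real.continuous_sqrt.comp (contParam (G := fun p => Hf p ^ 2) (hcH.pow 2) 0 1)
  have hcq : Continuous fun s => Real.sqrt (∫ t in (0:ℝ)..1, f22 (s, t) ^ 2) :=
    Real.continuous_sqrt.comp (contParam (G := fun p => f22 p ^ 2) (hc22.pow 2) 0 1)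
  have bound1 : (∫ s in (-(N:ℝ))..(N:ℝ), ∫ t in (0:ℝ)..1, h s t * f22 (s, t))
      ≤ Real.sqrt (∫ s in (-(N:ℝ))..(N:ℝ), ∫ t in (0:ℝ)..1, (h s t) ^ 2)
        * Real.sqrt (∫ s in (-(N:ℝ))..(N:ℝ), ∫ t in (0:ℝ)..1, f22 (s, t) ^ 2) := by
    have hinner : ∀ s ∈ Icc (-(N:ℝ)) (N:ℝ), (∫ t in (0:ℝ)..1, h s t * f22 (s, t))
        ≤ Real.sqrt (∫ t in (0:ℝ)..1, (h s t) ^ 2)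
          * Real.sqrt (∫ t in (0:ℝ)..1, f22 (s, t) ^ 2) :=
      fun s _ => cs zero_le_one (hchT s) (sliceT hc22 s)
    have houter : (∫ s in (-(N:ℝ))..(N:ℝ), ∫ t in (0:ℝ)..1, h s t * f22 (s, t))
        ≤ ∫ s in (-(N:ℝ))..(N:ℝ), Real.sqrt (∫ t in (0:ℝ)..1, (h s t) ^ 2)
            * Real.sqrt (∫ t in (0:ℝ)..1, f22 (s, t) ^ 2) :=
      intervalIntegral.integral_mono_on hNN
        ((contParam (G := fun p => Hf p * f22 p) (hcH.mul hc22) 0 1).intervalIntegrable _ _)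
        ((hcp.mul hcq).intervalIntegrable _ _) hinner
    have hcs2 : (∫ s in (-(N:ℝ))..(N:ℝ), Real.sqrt (∫ t in (0:ℝ)..1, (h s t) ^ 2)
            * Real.sqrt (∫ t in (0:ℝ)..1, f22 (s, t) ^ 2))
        ≤ Real.sqrt (∫ s in (-(N:ℝ))..(N:ℝ), (Real.sqrt (∫ t in (0:ℝ)..1, (h s t) ^ 2)) ^ 2)
          * Real.sqrt (∫ s in (-(N:ℝ))..(N:ℝ),
              (Real.sqrt (∫ t in (0:ℝ)..1, f22 (s, t) ^ 2)) ^ 2) := cs hNN hcp hcq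
    have hps : (∫ s in (-(N:ℝ))..(N:ℝ), (Real.sqrt (∫ t in (0:ℝ)..1, (h s t) ^ 2)) ^ 2)
        = ∫ s in (-(N:ℝ))..(N:ℝ), ∫ t in (0:ℝ)..1, (h s t) ^ 2 :=
      intervalIntegral.integral_congr fun s _ => Real.sq_sqrt
        (intervalIntegral.integral_nonneg zero_le_one fun t _ => sq_nonneg _)
    have hqs : (∫ s in (-(N:ℝ))..(N:ℝ), (Real.sqrt (∫ t in (0:ℝ)..1, f22 (s, t) ^ 2)) ^ 2)
        = ∫ s in (-(N:ℝ))..(N:ℝ), ∫ t in (0:ℝ)..1, f22 (s, t) ^ 2 :=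
      intervalIntegral.integral_congr fun s _ => Real.sq_sqrt
        (intervalIntegral.integral_nonneg zero_le_one fun t _ => sq_nonneg _)
    rw [hps, hqs] at hcs2
    linarith
  -- Cauchy-Schwarz for the boundary terms
  have bound2p : (∫ t in (0:ℝ)..1, deriv gp t * f2 ((N:ℝ), t))
      ≤ Real.sqrt (∫ t in (0:ℝ)..1, (deriv gp t) ^ 2)
        * Real.sqrt (∫ t in (0:ℝ)..1, f2 ((N:ℝ), t) ^ 2) :=
    cs zero_le_one hcgp' (sliceT hc2 (N:ℝ))
  have bound2m : (∫ t in (0:ℝ)..1, deriv gm t * f2 (-(N:ℝ), t))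
      ≤ Real.sqrt (∫ t in (0:ℝ)..1, (deriv gm t) ^ 2)
        * Real.sqrt (∫ t in (0:ℝ)..1, f2 (-(N:ℝ), t) ^ 2) :=
    cs zero_le_one hcgm' (sliceT hc2 (-(N:ℝ)))
  -- Trace estimates
  have trP : (∫ t in (0:ℝ)..1, f2 ((N:ℝ), t) ^ 2)
      ≤ 2 * (∫ s in (-(N:ℝ))..(N:ℝ), ∫ t in (0:ℝ)..1, f2 (s, t) ^ 2)
        + ∫ s in (-(N:ℝ))..(N:ℝ), ∫ t in (0:ℝ)..1, f21 (s, t) ^ 2 :=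
    trace_est hc2 hc21 hds2 (by linarith : -(N:ℝ) ≤ (N:ℝ) - 1)
  have trM : (∫ t in (0:ℝ)..1, f2 (-(N:ℝ), t) ^ 2)
      ≤ 2 * (∫ s in (-(N:ℝ))..(N:ℝ), ∫ t in (0:ℝ)..1, f2 (s, t) ^ 2)
        + ∫ s in (-(N:ℝ))..(N:ℝ), ∫ t in (0:ℝ)..1, f21 (s, t) ^ 2 := by
    have hdref : ∀ s t : ℝ, HasDerivAt (fun x => f2 (-x, t)) (-f21 (-s, t)) s := by
      intro s t
      have h0 : HasDerivAt (fun x : ℝ => -x) (-1 : ℝ) s := (hasDerivAt_id s).neg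
      have h1 := (hds2 (-s) t).comp s h0
      have h2 : HasDerivAt (fun x => f2 (-x, t)) (f21 (-s, t) * -1) s := h1
      convert h2 using 1
      ring
    have key : (∫ t in (0:ℝ)..1, f2 (-(N:ℝ), t) ^ 2)
        ≤ 2 * (∫ s in (-(N:ℝ))..(N:ℝ), ∫ t in (0:ℝ)..1, f2 (-s, t) ^ 2)
          + ∫ s in (-(N:ℝ))..(N:ℝ), ∫ t in (0:ℝ)..1, (-f21 (-s, t)) ^ 2 :=
      trace_est (u := fun p => f2 (-p.1, p.2)) (w := fun p => -f21 (-p.1, p.2))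
        (hc2.comp ((continuous_fst.neg).prodMk continuous_snd))
        ((hc21.comp ((continuous_fst.neg).prodMk continuous_snd)).neg)
        hdref (by linarith : -(N:ℝ) ≤ (N:ℝ) - 1)
    have e1 : (∫ s in (-(N:ℝ))..(N:ℝ), ∫ t in (0:ℝ)..1, f2 (-s, t) ^ 2)
        = ∫ s in (-(N:ℝ))..(N:ℝ), ∫ t in (0:ℝ)..1, f2 (s, t) ^ 2 := by
      have h3 : (∫ s in (-(N:ℝ))..(N:ℝ),
          (fun x => ∫ t in (0:ℝ)..1, f2 (x, t) ^ 2) (-s))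
          = ∫ s in (-(N:ℝ))..(N:ℝ), ∫ t in (0:ℝ)..1, f2 (s, t) ^ 2 := by
        rw [intervalIntegral.integral_comp_neg
          (f := fun x => ∫ t in (0:ℝ)..1, f2 (x, t) ^ 2)]
        norm_num
      exact h3
    have e2 : (∫ s in (-(N:ℝ))..(N:ℝ), ∫ t in (0:ℝ)..1, (-f21 (-s, t)) ^ 2)
        = ∫ s in (-(N:ℝ))..(N:ℝ), ∫ t in (0:ℝ)..1, f21 (s, t) ^ 2 := by
      have e2a : (∫ s in (-(N:ℝ))..(N:ℝ), ∫ t in (0:ℝ)..1, (-f21 (-s, t)) ^ 2)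
          = ∫ s in (-(N:ℝ))..(N:ℝ), ∫ t in (0:ℝ)..1, f21 (-s, t) ^ 2 :=
        intervalIntegral.integral_congr fun s _ =>
          intervalIntegral.integral_congr fun t _ => neg_sq (f21 (-s, t))
      have e2b : (∫ s in (-(N:ℝ))..(N:ℝ),
          (fun x => ∫ t in (0:ℝ)..1, f21 (x, t) ^ 2) (-s))
          = ∫ s in (-(N:ℝ))..(N:ℝ), ∫ t in (0:ℝ)..1, f21 (s, t) ^ 2 := by
        rw [intervalIntegral.integral_comp_neg
          (f := fun x => ∫ t in (0:ℝ)..1, f21 (x, t) ^ 2)]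
        norm_num
      rw [e2a]
      exact e2b
    rw [e1, e2] at key
    exact key
  -- Poincare inequalities, integrated
  have hP1 : ∀ s : ℝ, (∫ t in (0:ℝ)..1, (f s t) ^ 2) ≤ ∫ t in (0:ℝ)..1, f2 (s, t) ^ 2 :=
    fun s => poincare (hdt s) (sliceT hc2 s) (hfmean s)
  have hP2 : ∀ s : ℝ, (∫ t in (0:ℝ)..1, f2 (s, t) ^ 2) ≤ ∫ t in (0:ℝ)..1, f22 (s, t) ^ 2 :=
    fun s => poincare (hdt2 s) (sliceT hc22 s) (hm2 s)
  have hP0 : ∀ s : ℝ, (∫ t in (0:ℝ)..1, f1 (s, t) ^ 2) ≤ ∫ t in (0:ℝ)..1, f21 (s, t) ^ 2 :=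
    fun s => poincare (hdt1 s) (sliceT hc21 s) (hm1 s)
  have hJ0 : (∫ s in (-(N:ℝ))..(N:ℝ), ∫ t in (0:ℝ)..1, (f s t) ^ 2)
      ≤ ∫ s in (-(N:ℝ))..(N:ℝ), ∫ t in (0:ℝ)..1, f2 (s, t) ^ 2 :=
    intervalIntegral.integral_mono_on hNN
      ((contParam (G := fun p => F p ^ 2) (hcF.pow 2) 0 1).intervalIntegrable _ _)
      ((contParam (G := fun p => f2 p ^ 2) (hc2.pow 2) 0 1).intervalIntegrable _ _)
      fun s _ => hP1 s
  have hDA : (∫ s in (-(N:ℝ))..(N:ℝ), ∫ t in (0:ℝ)..1, f2 (s, t) ^ 2)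
      ≤ ∫ s in (-(N:ℝ))..(N:ℝ), ∫ t in (0:ℝ)..1, f22 (s, t) ^ 2 :=
    intervalIntegral.integral_mono_on hNN
      ((contParam (G := fun p => f2 p ^ 2) (hc2.pow 2) 0 1).intervalIntegrable _ _)
      ((contParam (G := fun p => f22 p ^ 2) (hc22.pow 2) 0 1).intervalIntegrable _ _)
      fun s _ => hP2 s
  have hJ1 : (∫ s in (-(N:ℝ))..(N:ℝ), ∫ t in (0:ℝ)..1, f1 (s, t) ^ 2)
      ≤ ∫ s in (-(N:ℝ))..(N:ℝ), ∫ t in (0:ℝ)..1, f21 (s, t) ^ 2 :=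
    intervalIntegral.integral_mono_on hNN
      ((contParam (G := fun p => f1 p ^ 2) (hc1.pow 2) 0 1).intervalIntegrable _ _)
      ((contParam (G := fun p => f21 p ^ 2) (hc21.pow 2) 0 1).intervalIntegrable _ _)
      fun s _ => hP0 s
  -- Bound on f11 via the equation
  have hJ11 : (∫ s in (-(N:ℝ))..(N:ℝ), ∫ t in (0:ℝ)..1, f11 (s, t) ^ 2)
      ≤ 2 * (∫ s in (-(N:ℝ))..(N:ℝ), ∫ t in (0:ℝ)..1, (h s t) ^ 2)
        + 2 * ∫ s in (-(N:ℝ))..(N:ℝ), ∫ t in (0:ℝ)..1, f22 (s, t) ^ 2 := by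
    have hpt : ∀ s t : ℝ, f11 (s, t) ^ 2 ≤ 2 * (h s t) ^ 2 + 2 * f22 (s, t) ^ 2 := by
      intro s t
      have hq : f11 (s, t) = h s t - f22 (s, t) := by linarith [hlap' s t]
      rw [hq]
      nlinarith [sq_nonneg (h s t + f22 (s, t))]
    have hin : ∀ s : ℝ, (∫ t in (0:ℝ)..1, f11 (s, t) ^ 2)
        ≤ 2 * (∫ t in (0:ℝ)..1, (h s t) ^ 2) + 2 * ∫ t in (0:ℝ)..1, f22 (s, t) ^ 2 := by
      intro s
      have i1 : IntervalIntegrable (fun t => 2 * (h s t) ^ 2) MeasureTheory.volume 0 1 :=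
        (continuous_const.mul ((hchT s).pow 2)).intervalIntegrable _ _
      have i2 : IntervalIntegrable (fun t => 2 * f22 (s, t) ^ 2) MeasureTheory.volume 0 1 :=
        (continuous_const.mul ((sliceT hc22 s).pow 2)).intervalIntegrable _ _
      have h1 : (∫ t in (0:ℝ)..1, f11 (s, t) ^ 2)
          ≤ ∫ t in (0:ℝ)..1, (2 * (h s t) ^ 2 + 2 * f22 (s, t) ^ 2) :=
        intervalIntegral.integral_mono_on zero_le_one
          (((sliceT hc11 s).pow 2).intervalIntegrable _ _) (i1.add i2) (fun t _ => hpt s t)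
      rw [intervalIntegral.integral_add i1 i2, intervalIntegral.integral_const_mul,
        intervalIntegral.integral_const_mul] at h1
      exact h1
    have j1 : IntervalIntegrable (fun s => 2 * ∫ t in (0:ℝ)..1, (h s t) ^ 2)
        MeasureTheory.volume (-(N:ℝ)) (N:ℝ) :=
      (continuous_const.mul (contParam (G := fun p => Hf p ^ 2) (hcH.pow 2) 0 1)).intervalIntegrable _ _
    have j2 : IntervalIntegrable (fun s => 2 * ∫ t in (0:ℝ)..1, f22 (s, t) ^ 2)
        MeasureTheory.volume (-(N:ℝ)) (N:ℝ) :=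
      (continuous_const.mul (contParam (G := fun p => f22 p ^ 2) (hc22.pow 2) 0 1)).intervalIntegrable _ _
    have hout : (∫ s in (-(N:ℝ))..(N:ℝ), ∫ t in (0:ℝ)..1, f11 (s, t) ^ 2)
        ≤ ∫ s in (-(N:ℝ))..(N:ℝ), ((2 * ∫ t in (0:ℝ)..1, (h s t) ^ 2)
            + 2 * ∫ t in (0:ℝ)..1, f22 (s, t) ^ 2) :=
      intervalIntegral.integral_mono_on hNN
        ((contParam (G := fun p => f11 p ^ 2) (hc11.pow 2) 0 1).intervalIntegrable _ _)
        (j1.add j2) (fun s _ => hin s)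
    rw [intervalIntegral.integral_add j1 j2, intervalIntegral.integral_const_mul,
      intervalIntegral.integral_const_mul] at hout
    exact hout
  -- rewrite the goal integrand in terms of the partial derivatives
  have hgoal_eq : (∫ s in (-(N:ℝ))..(N:ℝ), ∫ t in (0:ℝ)..1,
        ((f s t)^2 + (deriv (fun s' => f s' t) s)^2 + (deriv (fun t' => f s t') t)^2 +
        (deriv (fun s' => deriv (fun s'' => f s'' t) s') s)^2 +
        (deriv (fun t' => deriv (fun s' => f s' t') s) t)^2 +
        (deriv (fun t' => deriv (fun t'' => f s t'') t') t)^2))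
      = ∫ s in (-(N:ℝ))..(N:ℝ), ∫ t in (0:ℝ)..1,
        ((f s t)^2 + f1 (s,t)^2 + f2 (s,t)^2 + f11 (s,t)^2 + f21 (s,t)^2 + f22 (s,t)^2) :=
    intervalIntegral.integral_congr fun s _ => intervalIntegral.integral_congr fun t _ => by
      simp only [he1, he2]
      rw [(hds1 s t).deriv, (hdt1 s t).deriv, (hdt2 s t).deriv]
  have hinner6 : ∀ s : ℝ, (∫ t in (0:ℝ)..1,
        ((f s t)^2 + f1 (s,t)^2 + f2 (s,t)^2 + f11 (s,t)^2 + f21 (s,t)^2 + f22 (s,t)^2))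
      = (∫ t in (0:ℝ)..1, (f s t)^2) + (∫ t in (0:ℝ)..1, f1 (s,t)^2)
        + (∫ t in (0:ℝ)..1, f2 (s,t)^2) + (∫ t in (0:ℝ)..1, f11 (s,t)^2)
        + (∫ t in (0:ℝ)..1, f21 (s,t)^2) + ∫ t in (0:ℝ)..1, f22 (s,t)^2 := fun s =>
    isum6 ((sliceT hcF s).pow 2) ((sliceT hc1 s).pow 2) ((sliceT hc2 s).pow 2)
      ((sliceT hc11 s).pow 2) ((sliceT hc21 s).pow 2) ((sliceT hc22 s).pow 2)
  have hsum6 : (∫ s in (-(N:ℝ))..(N:ℝ), ∫ t in (0:ℝ)..1,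
        ((f s t)^2 + f1 (s,t)^2 + f2 (s,t)^2 + f11 (s,t)^2 + f21 (s,t)^2 + f22 (s,t)^2))
      = (∫ s in (-(N:ℝ))..(N:ℝ), ∫ t in (0:ℝ)..1, (f s t)^2)
        + (∫ s in (-(N:ℝ))..(N:ℝ), ∫ t in (0:ℝ)..1, f1 (s,t)^2)
        + (∫ s in (-(N:ℝ))..(N:ℝ), ∫ t in (0:ℝ)..1, f2 (s,t)^2)
        + (∫ s in (-(N:ℝ))..(N:ℝ), ∫ t in (0:ℝ)..1, f11 (s,t)^2)
        + (∫ s in (-(N:ℝ))..(N:ℝ), ∫ t in (0:ℝ)..1, f21 (s,t)^2)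
        + ∫ s in (-(N:ℝ))..(N:ℝ), ∫ t in (0:ℝ)..1, f22 (s,t)^2 := by
    rw [intervalIntegral.integral_congr (g := fun s =>
        (∫ t in (0:ℝ)..1, (f s t)^2) + (∫ t in (0:ℝ)..1, f1 (s,t)^2)
        + (∫ t in (0:ℝ)..1, f2 (s,t)^2) + (∫ t in (0:ℝ)..1, f11 (s,t)^2)
        + (∫ t in (0:ℝ)..1, f21 (s,t)^2) + ∫ t in (0:ℝ)..1, f22 (s,t)^2)
        (fun s _ => hinner6 s)]
    exact isum6 (contParam (G := fun p => F p ^ 2) (hcF.pow 2) 0 1)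
      (contParam (G := fun p => f1 p ^ 2) (hc1.pow 2) 0 1)
      (contParam (G := fun p => f2 p ^ 2) (hc2.pow 2) 0 1)
      (contParam (G := fun p => f11 p ^ 2) (hc11.pow 2) 0 1)
      (contParam (G := fun p => f21 p ^ 2) (hc21.pow 2) 0 1)
      (contParam (G := fun p => f22 p ^ 2) (hc22.pow 2) 0 1)
  -- nonnegativity
  have hA0 : (0:ℝ) ≤ ∫ s in (-(N:ℝ))..(N:ℝ), ∫ t in (0:ℝ)..1, f22 (s, t) ^ 2 :=
    intervalIntegral.integral_nonneg hNN fun s _ =>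
      intervalIntegral.integral_nonneg zero_le_one fun t _ => sq_nonneg _
  have hB0 : (0:ℝ) ≤ ∫ s in (-(N:ℝ))..(N:ℝ), ∫ t in (0:ℝ)..1, f21 (s, t) ^ 2 :=
    intervalIntegral.integral_nonneg hNN fun s _ =>
      intervalIntegral.integral_nonneg zero_le_one fun t _ => sq_nonneg _
  have hH0 : (0:ℝ) ≤ ∫ s in (-(N:ℝ))..(N:ℝ), ∫ t in (0:ℝ)..1, (h s t) ^ 2 :=
    intervalIntegral.integral_nonneg hNN fun s _ =>
      intervalIntegral.integral_nonneg zero_le_one fun t _ => sq_nonneg _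
  have hQle : (∫ t in (0:ℝ)..1, (deriv gp t) ^ 2)
      ≤ ∫ t in (0:ℝ)..1, ((gp t)^2 + (deriv gp t)^2) :=
    intervalIntegral.integral_mono_on zero_le_one ((hcgp'.pow 2).intervalIntegrable _ _)
      (((hgp.continuous.pow 2).add (hcgp'.pow 2)).intervalIntegrable _ _)
      fun t _ => by nlinarith [sq_nonneg (gp t)]
  have hRle : (∫ t in (0:ℝ)..1, (deriv gm t) ^ 2)
      ≤ ∫ t in (0:ℝ)..1, ((gm t)^2 + (deriv gm t)^2) :=
    intervalIntegral.integral_mono_on zero_le_one ((hcgm'.pow 2).intervalIntegrable _ _)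
      (((hgm.continuous.pow 2).add (hcgm'.pow 2)).intervalIntegrable _ _)
      fun t _ => by nlinarith [sq_nonneg (gm t)]
  -- abbreviate
  set JA := ∫ s in (-(N:ℝ))..(N:ℝ), ∫ t in (0:ℝ)..1, f22 (s, t) ^ 2 with hJAdef
  set JB := ∫ s in (-(N:ℝ))..(N:ℝ), ∫ t in (0:ℝ)..1, f21 (s, t) ^ 2 with hJBdef
  set JD := ∫ s in (-(N:ℝ))..(N:ℝ), ∫ t in (0:ℝ)..1, f2 (s, t) ^ 2 with hJDdef
  set JH := ∫ s in (-(N:ℝ))..(N:ℝ), ∫ t in (0:ℝ)..1, (h s t) ^ 2 with hJHdef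
  set Tp := ∫ t in (0:ℝ)..1, f2 ((N:ℝ), t) ^ 2 with hTpdef
  set Tm := ∫ t in (0:ℝ)..1, f2 (-(N:ℝ), t) ^ 2 with hTmdef
  set Q2 := ∫ t in (0:ℝ)..1, (deriv gp t) ^ 2 with hQ2def
  set R2 := ∫ t in (0:ℝ)..1, (deriv gm t) ^ 2 with hR2def
  -- quadratic inequality
  have hX0 : (0:ℝ) ≤ JA + JB := by linarith
  have hsqA : Real.sqrt JA ≤ Real.sqrt (JA + JB) := Real.sqrt_le_sqrt (by linarith)
  have hTp2X : Tp ≤ 2 * (JA + JB) := by linarith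
  have hTm2X : Tm ≤ 2 * (JA + JB) := by linarith
  have hsqTp : Real.sqrt Tp ≤ Real.sqrt 2 * Real.sqrt (JA + JB) := by
    calc Real.sqrt Tp ≤ Real.sqrt (2 * (JA + JB)) := Real.sqrt_le_sqrt hTp2X
      _ = Real.sqrt 2 * Real.sqrt (JA + JB) := Real.sqrt_mul (by norm_num) _
  have hsqTm : Real.sqrt Tm ≤ Real.sqrt 2 * Real.sqrt (JA + JB) := by
    calc Real.sqrt Tm ≤ Real.sqrt (2 * (JA + JB)) := Real.sqrt_le_sqrt hTm2X
      _ = Real.sqrt 2 * Real.sqrt (JA + JB) := Real.sqrt_mul (by norm_num) _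
  have hkey : JA + JB ≤ (Real.sqrt JH + Real.sqrt 2 * Real.sqrt Q2
      + Real.sqrt 2 * Real.sqrt R2) * Real.sqrt (JA + JB) := by
    have k1 : (∫ s in (-(N:ℝ))..(N:ℝ), ∫ t in (0:ℝ)..1, h s t * f22 (s, t))
        ≤ Real.sqrt JH * Real.sqrt (JA + JB) := by
      have := mul_le_mul_of_nonneg_left hsqA (Real.sqrt_nonneg JH)
      linarith [bound1]
    have k2 : (∫ t in (0:ℝ)..1, deriv gp t * f2 ((N:ℝ), t))
        ≤ Real.sqrt Q2 * (Real.sqrt 2 * Real.sqrt (JA + JB)) := by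
      have := mul_le_mul_of_nonneg_left hsqTp (Real.sqrt_nonneg Q2)
      linarith [bound2p]
    have k3 : (∫ t in (0:ℝ)..1, deriv gm t * f2 (-(N:ℝ), t))
        ≤ Real.sqrt R2 * (Real.sqrt 2 * Real.sqrt (JA + JB)) := by
      have := mul_le_mul_of_nonneg_left hsqTm (Real.sqrt_nonneg R2)
      linarith [bound2m]
    have k4 : JA + JB ≤ Real.sqrt JH * Real.sqrt (JA + JB)
        + Real.sqrt Q2 * (Real.sqrt 2 * Real.sqrt (JA + JB))
        + Real.sqrt R2 * (Real.sqrt 2 * Real.sqrt (JA + JB)) := by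
      linarith [stepMain.le, k1, k2, k3]
    calc JA + JB ≤ Real.sqrt JH * Real.sqrt (JA + JB)
        + Real.sqrt Q2 * (Real.sqrt 2 * Real.sqrt (JA + JB))
        + Real.sqrt R2 * (Real.sqrt 2 * Real.sqrt (JA + JB)) := k4
      _ = (Real.sqrt JH + Real.sqrt 2 * Real.sqrt Q2
          + Real.sqrt 2 * Real.sqrt R2) * Real.sqrt (JA + JB) := by ring
  have hMn : (0:ℝ) ≤ Real.sqrt JH + Real.sqrt 2 * Real.sqrt Q2 + Real.sqrt 2 * Real.sqrt R2 := by
    positivity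
  have hsqX : Real.sqrt (JA + JB) ≤ Real.sqrt JH + Real.sqrt 2 * Real.sqrt Q2
      + Real.sqrt 2 * Real.sqrt R2 := by
    rcases le_or_gt (Real.sqrt (JA + JB))
      (Real.sqrt JH + Real.sqrt 2 * Real.sqrt Q2 + Real.sqrt 2 * Real.sqrt R2) with hok | hbad
    · exact hok
    · exfalso
      have hXpos : 0 < Real.sqrt (JA + JB) := lt_of_le_of_lt hMn hbad
      have h4 : (Real.sqrt JH + Real.sqrt 2 * Real.sqrt Q2 + Real.sqrt 2 * Real.sqrt R2)
          * Real.sqrt (JA + JB) < Real.sqrt (JA + JB) * Real.sqrt (JA + JB) :=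
        mul_lt_mul_of_pos_right hbad hXpos
      rw [Real.mul_self_sqrt hX0] at h4
      linarith
  -- final assembly
  rw [hgoal_eq, hsum6]
  have hJtot : ((∫ s in (-(N:ℝ))..(N:ℝ), ∫ t in (0:ℝ)..1, (f s t)^2)
        + (∫ s in (-(N:ℝ))..(N:ℝ), ∫ t in (0:ℝ)..1, f1 (s,t)^2)
        + JD
        + (∫ s in (-(N:ℝ))..(N:ℝ), ∫ t in (0:ℝ)..1, f11 (s,t)^2)
        + JB + JA)
      ≤ 5 * (JA + JB) + 2 * JH := by linarith
  have t1 := Real.sqrt_le_sqrt hJtot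
  have t2 : Real.sqrt (5 * (JA + JB) + 2 * JH)
      ≤ Real.sqrt (5 * (JA + JB)) + Real.sqrt (2 * JH) :=
    sqrt_add_le' (by linarith) (by linarith)
  have t3 : Real.sqrt (5 * (JA + JB)) = Real.sqrt 5 * Real.sqrt (JA + JB) :=
    Real.sqrt_mul (by norm_num) _
  have t4 : Real.sqrt (2 * JH) = Real.sqrt 2 * Real.sqrt JH := Real.sqrt_mul (by norm_num) _
  rw [t3, t4] at t2
  have hs2 : Real.sqrt 2 ≤ 2 := by
    nlinarith [Real.sq_sqrt (show (0:ℝ) ≤ 2 by norm_num), Real.sqrt_nonneg 2]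
  have hs5 : Real.sqrt 5 ≤ 3 := by
    nlinarith [Real.sq_sqrt (show (0:ℝ) ≤ 5 by norm_num), Real.sqrt_nonneg 5]
  have u1 : Real.sqrt 5 * Real.sqrt (JA + JB) ≤ 3 * Real.sqrt (JA + JB) :=
    mul_le_mul_of_nonneg_right hs5 (Real.sqrt_nonneg _)
  have u2 : Real.sqrt 2 * Real.sqrt JH ≤ 2 * Real.sqrt JH :=
    mul_le_mul_of_nonneg_right hs2 (Real.sqrt_nonneg _)
  have u3 : Real.sqrt 2 * Real.sqrt Q2 ≤ 2 * Real.sqrt Q2 :=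
    mul_le_mul_of_nonneg_right hs2 (Real.sqrt_nonneg _)
  have u4 : Real.sqrt 2 * Real.sqrt R2 ≤ 2 * Real.sqrt R2 :=
    mul_le_mul_of_nonneg_right hs2 (Real.sqrt_nonneg _)
  have hQG : Real.sqrt Q2 ≤ Real.sqrt (∫ t in (0:ℝ)..1, ((gp t)^2 + (deriv gp t)^2)) :=
    Real.sqrt_le_sqrt hQle
  have hRG : Real.sqrt R2 ≤ Real.sqrt (∫ t in (0:ℝ)..1, ((gm t)^2 + (deriv gm t)^2)) :=
    Real.sqrt_le_sqrt hRle
  have hnn1 : (0:ℝ) ≤ Real.sqrt JH := Real.sqrt_nonneg _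
  have hnn2 : (0:ℝ) ≤ Real.sqrt (∫ t in (0:ℝ)..1, ((gp t)^2 + (deriv gp t)^2)) :=
    Real.sqrt_nonneg _
  have hnn3 : (0:ℝ) ≤ Real.sqrt (∫ t in (0:ℝ)..1, ((gm t)^2 + (deriv gm t)^2)) :=
    Real.sqrt_nonneg _
  have hnn4 : (0:ℝ) ≤ Real.sqrt (JA + JB) := Real.sqrt_nonneg _
  linarith
end
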